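/- arXiv:1912.01195 — 11 statements merged into one kernel-verified Lean document; each statement's English description precedes it below -/
import Mathlib

section
/- Let F, C be disjoint finite sets with a metric d on F ∪ C, let T > 0, let μ ≥ 1 and γ ∈ (0, 1). Let x : F × C → [0,1] and y : F → [0,1] satisfy: ∑_{i ∈ F} x_{ij} = 1 for every j ∈ C; x_{ij} ≤ y_i for all i, j; x_{ij} = 0 whenever d(i,j) > T; and L(i, x) ≤ μ·T·y_i for every i ∈ F. Then there exists x' : F × C → [0,1] such that: (1) x'_{ij} = 0 whenever x_{ij} = 0; (2) for every (i,j) ∈ F × C, x'_{ij} ≤ y_i, and if x'_{ij} > 0 then x'_{ij} ≥ γ·y_i; (3) for every j ∈ C, 1 − γ ≤ ∑_{i ∈ F} x'_{ij} ≤ 1; and (4) for every i ∈ F, L(i, x') ≤ (μ + 2 − γ)·T·y_i. -/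
open Finset

/-- Trimming: from a collection of small nonnegative values whose total (plus base) is
at least `1-γ`, we can select a subcollection landing in `[1-γ, 1]`. -/
lemma exists_trim {ι : Type*} [DecidableEq ι] (γ : ℝ) (hγ : 0 < γ) :
    ∀ (A : Finset ι) (base : ℝ) (f : ι → ℝ), base ≤ 1 →
    (∀ i ∈ A, 0 ≤ f i ∧ f i ≤ γ) → 1 - γ ≤ base + ∑ i ∈ A, f i →
    ∃ B ⊆ A, 1 - γ ≤ base + ∑ i ∈ B, f i ∧ base + ∑ i ∈ B, f i ≤ 1 := by
  intro A
  induction A using Finset.strongInductionOn with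
  | _ A IH =>
    intro base f hb hf hlow
    by_cases htot : base + ∑ i ∈ A, f i ≤ 1
    · exact ⟨A, Finset.Subset.refl A, hlow, htot⟩
    · push_neg at htot
      have hpos : 0 < ∑ i ∈ A, f i := by linarith
      have hAne : ∃ i ∈ A, 0 < f i := by
        by_contra h
        push_neg at h
        have : ∑ i ∈ A, f i ≤ 0 := Finset.sum_nonpos (by
          intro i hi; exact h i hi)
        linarith
      obtain ⟨i0, hi0, hfi0⟩ := hAne
      have hsub : A.erase i0 ⊂ A := Finset.erase_ssubset hi0
      have hsum : ∑ i ∈ A.erase i0, f i = (∑ i ∈ A, f i) - f i0 := by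
        have := Finset.sum_erase_add A f hi0
        linarith
      have hlow' : 1 - γ ≤ base + ∑ i ∈ A.erase i0, f i := by
        have := (hf i0 hi0).2
        rw [hsum]; linarith
      obtain ⟨B, hBsub, h1, h2⟩ := IH _ hsub base f hb
        (fun i hi => hf i (Finset.mem_of_mem_erase hi)) hlow'
      exact ⟨B, hBsub.trans (Finset.erase_subset _ _), h1, h2⟩


lemma sum_filter_erase_add {ε : Type*} [DecidableEq ε] {s : Finset ε} {e : ε} (he : e ∈ s)
    (P : ε → Prop) [DecidablePred P] (f : ε → ℝ) :
    ∑ x ∈ s.filter P, f x = ∑ x ∈ (s.erase e).filter P, f x + (if P e then f e else 0) := by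
  rw [Finset.filter_erase]
  by_cases hP : P e
  · rw [if_pos hP, Finset.sum_erase_add _ _ (Finset.mem_filter.2 ⟨he, hP⟩)]
  · rw [if_neg hP, Finset.erase_eq_of_notMem (fun hc => hP (Finset.mem_filter.1 hc).2), add_zero]


lemma expand_g {α β : Type*} (E : Finset (α × β)) (w V : α × β → ℝ) (c : ℝ) :
    ∑ e ∈ E, (w e + c * V e) * (1 - (w e + c * V e)) =
      ∑ e ∈ E, w e * (1 - w e) + c * ∑ e ∈ E, V e * (1 - 2 * w e)
        - c ^ 2 * ∑ e ∈ E, V e ^ 2 := by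
  rw [Finset.mul_sum, Finset.mul_sum, ← Finset.sum_add_distrib, ← Finset.sum_sub_distrib]
  exact Finset.sum_congr rfl fun e _ => by ring

lemma sum_mul_linear {ε : Type*} (s : Finset ε) (g u v : ε → ℝ) (c : ℝ) :
    ∑ e ∈ s, g e * (u e + c * v e) = ∑ e ∈ s, g e * u e + c * ∑ e ∈ s, g e * v e := by
  rw [Finset.mul_sum, ← Finset.sum_add_distrib]
  exact Finset.sum_congr rfl fun e _ => by ring

lemma kernel_zero {α β : Type*} [DecidableEq α] [DecidableEq β]
    (T κ : ℝ) (hT : 0 < T) (yw : α → ℝ) (dw : α → β → ℝ)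
    (E : Finset (α × β)) (z : α × β → ℝ)
    (hd : ∀ e ∈ E, dw e.1 e.2 ∈ Set.Icc (0:ℝ) T)
    (w : α × β → ℝ)
    (hwstrict : ∀ e ∈ E, 0 < w e ∧ w e < 1)
    (hwoff : ∀ e, e ∉ E → w e = 0)
    (hwcs : ∀ b, ∑ e ∈ E.filter (fun e => e.2 = b), yw e.1 * w e
              = ∑ e ∈ E.filter (fun e => e.2 = b), yw e.1 * z e)
    (hwfs : ∀ a, ∑ e ∈ E.filter (fun e => e.1 = a), dw e.1 e.2 * w e
              ≤ ∑ e ∈ E.filter (fun e => e.1 = a), dw e.1 e.2 * z e)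
    (hwmin : IsMinOn (fun w => ∑ e ∈ E, w e * (1 - w e))
      {w : (α × β) → ℝ | (∀ e ∈ E, w e ∈ Set.Icc (0:ℝ) 1) ∧ (∀ e, e ∉ E → w e = 0) ∧
        (∀ b, ∑ e ∈ E.filter (fun e => e.2 = b), yw e.1 * w e
              = ∑ e ∈ E.filter (fun e => e.2 = b), yw e.1 * z e) ∧
        (∀ a, ∑ e ∈ E.filter (fun e => e.1 = a), dw e.1 e.2 * w e
              ≤ ∑ e ∈ E.filter (fun e => e.1 = a), dw e.1 e.2 * z e)} w)
    (V : α × β → ℝ) (hVoff : ∀ e, e ∉ E → V e = 0)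
    (hVcs : ∀ b, ∑ e ∈ E.filter (fun e => e.2 = b), yw e.1 * V e = 0)
    (hVfs : ∀ a, (∑ e ∈ E.filter (fun e => e.1 = a), dw e.1 e.2 * w e
              = ∑ e ∈ E.filter (fun e => e.1 = a), dw e.1 e.2 * z e) →
              ∑ e ∈ E.filter (fun e => e.1 = a), dw e.1 e.2 * V e = 0) :
    ∀ e ∈ E, V e = 0 := by
  classical
  intro e₀ he₀
  have hEne : E.Nonempty := ⟨e₀, he₀⟩
  set M : ℝ := ∑ e ∈ E, T * |V e| with hM
  have hM0 : 0 ≤ M := Finset.sum_nonneg fun e _ => by positivity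
  set NT : Finset α := (E.image Prod.fst).filter
    (fun a => ¬ (∑ e ∈ E.filter (fun e => e.1 = a), dw e.1 e.2 * w e
              = ∑ e ∈ E.filter (fun e => e.1 = a), dw e.1 e.2 * z e)) with hNT
  -- slack of nontight facilities is positive
  have hslack : ∀ a ∈ NT, 0 < (∑ e ∈ E.filter (fun e => e.1 = a), dw e.1 e.2 * z e)
      - ∑ e ∈ E.filter (fun e => e.1 = a), dw e.1 e.2 * w e := by
    intro a ha
    have hne := (Finset.mem_filter.1 ha).2
    have hle := hwfs a
    cases lt_or_eq_of_le hle with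
    | inl h => linarith
    | inr h => exact absurd h hne
  set t1 : ℝ := (E.image (fun e => min (w e) (1 - w e) / (|V e| + 1))).min'
    (hEne.image _) with ht1
  set t2 : ℝ := if h : NT.Nonempty then
    (NT.image (fun a => ((∑ e ∈ E.filter (fun e => e.1 = a), dw e.1 e.2 * z e)
      - ∑ e ∈ E.filter (fun e => e.1 = a), dw e.1 e.2 * w e) / (M + 1))).min'
      (h.image _) else 1 with ht2
  set t : ℝ := min t1 t2 with ht
  have ht1pos : 0 < t1 := by
    rw [ht1]
    apply (Finset.lt_min'_iff _ _).2
    intro r hr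
    obtain ⟨e, he, rfl⟩ := Finset.mem_image.1 hr
    have h1 := (hwstrict e he).1
    have h2 := (hwstrict e he).2
    have : (0:ℝ) < |V e| + 1 := by positivity
    apply div_pos _ this
    simp only [lt_min_iff]; constructor <;> linarith
  have ht2pos : 0 < t2 := by
    rw [ht2]
    split_ifs with h
    · apply (Finset.lt_min'_iff _ _).2
      intro r hr
      obtain ⟨a, ha, rfl⟩ := Finset.mem_image.1 hr
      exact div_pos (hslack a ha) (by positivity)
    · norm_num
  have htpos : 0 < t := lt_min ht1pos ht2pos
  -- box control
  have hbox : ∀ e ∈ E, t * |V e| ≤ min (w e) (1 - w e) := by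
    intro e he
    have hle : t ≤ min (w e) (1 - w e) / (|V e| + 1) :=
      le_trans (min_le_left _ _) (Finset.min'_le _ _ (Finset.mem_image_of_mem _ he))
    have hpos : (0:ℝ) < |V e| + 1 := by positivity
    have h2 : t * (|V e| + 1) ≤ min (w e) (1 - w e) := by
      rw [← le_div_iff₀ hpos]; exact hle
    nlinarith [htpos]
  -- slack control
  have hVbnd : ∀ a, |∑ e ∈ E.filter (fun e => e.1 = a), dw e.1 e.2 * V e| ≤ M := by
    intro a
    calc |∑ e ∈ E.filter (fun e => e.1 = a), dw e.1 e.2 * V e|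
        ≤ ∑ e ∈ E.filter (fun e => e.1 = a), |dw e.1 e.2 * V e| :=
          Finset.abs_sum_le_sum_abs _ _
      _ ≤ ∑ e ∈ E.filter (fun e => e.1 = a), T * |V e| := by
          refine Finset.sum_le_sum fun e he => ?_
          have heE := (Finset.mem_filter.1 he).1
          rw [abs_mul]
          have hd1 := (hd e heE).1
          have hd2 := (hd e heE).2
          have : |dw e.1 e.2| ≤ T := by rw [abs_of_nonneg hd1]; exact hd2
          exact mul_le_mul_of_nonneg_right this (abs_nonneg _)
      _ ≤ M := Finset.sum_le_sum_of_subset_of_nonneg (Finset.filter_subset _ _)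
          (fun e _ _ => by positivity)
  have hslackctl : ∀ a ∈ NT, t * M ≤
      (∑ e ∈ E.filter (fun e => e.1 = a), dw e.1 e.2 * z e)
        - ∑ e ∈ E.filter (fun e => e.1 = a), dw e.1 e.2 * w e := by
    intro a ha
    have hNTne : NT.Nonempty := ⟨a, ha⟩
    have hle : t ≤ ((∑ e ∈ E.filter (fun e => e.1 = a), dw e.1 e.2 * z e)
        - ∑ e ∈ E.filter (fun e => e.1 = a), dw e.1 e.2 * w e) / (M + 1) := by
      refine le_trans (min_le_right _ _) ?_
      rw [ht2, dif_pos hNTne]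
      exact Finset.min'_le _ _ (Finset.mem_image_of_mem _ ha)
    have hpos : (0:ℝ) < M + 1 := by positivity
    have h2 : t * (M + 1) ≤ (∑ e ∈ E.filter (fun e => e.1 = a), dw e.1 e.2 * z e)
        - ∑ e ∈ E.filter (fun e => e.1 = a), dw e.1 e.2 * w e := by
      rw [← le_div_iff₀ hpos]; exact hle
    nlinarith [htpos]
  -- membership of perturbed points
  have hmem : ∀ c : ℝ, |c| ≤ t → (fun e => w e + c * V e) ∈
      {w : (α × β) → ℝ | (∀ e ∈ E, w e ∈ Set.Icc (0:ℝ) 1) ∧ (∀ e, e ∉ E → w e = 0) ∧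
        (∀ b, ∑ e ∈ E.filter (fun e => e.2 = b), yw e.1 * w e
              = ∑ e ∈ E.filter (fun e => e.2 = b), yw e.1 * z e) ∧
        (∀ a, ∑ e ∈ E.filter (fun e => e.1 = a), dw e.1 e.2 * w e
              ≤ ∑ e ∈ E.filter (fun e => e.1 = a), dw e.1 e.2 * z e)} := by
    intro c hc
    refine ⟨?_, ?_, ?_, ?_⟩
    · intro e he
      have h1 : |c * V e| ≤ min (w e) (1 - w e) := by
        rw [abs_mul]
        calc |c| * |V e| ≤ t * |V e| :=
              mul_le_mul_of_nonneg_right hc (abs_nonneg _)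
          _ ≤ _ := hbox e he
      have h2 := abs_le.1 h1
      constructor
      · have := min_le_left (w e) (1 - w e); simp only; linarith [h2.1]
      · have := min_le_right (w e) (1 - w e); simp only; linarith [h2.2]
    · intro e he; simp only [hwoff e he, hVoff e he]; ring
    · intro b
      rw [sum_mul_linear, hVcs b, hwcs b]; ring
    · intro a
      rw [sum_mul_linear]
      by_cases htight : ∑ e ∈ E.filter (fun e => e.1 = a), dw e.1 e.2 * w e
          = ∑ e ∈ E.filter (fun e => e.1 = a), dw e.1 e.2 * z e
      · rw [hVfs a htight, htight]; ring_nf; exact le_refl _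
      · by_cases haF : a ∈ E.image Prod.fst
        · have haNT : a ∈ NT := Finset.mem_filter.2 ⟨haF, htight⟩
          have h1 : c * ∑ e ∈ E.filter (fun e => e.1 = a), dw e.1 e.2 * V e ≤ t * M := by
            calc c * ∑ e ∈ E.filter (fun e => e.1 = a), dw e.1 e.2 * V e
                ≤ |c * ∑ e ∈ E.filter (fun e => e.1 = a), dw e.1 e.2 * V e| := le_abs_self _
              _ = |c| * |∑ e ∈ E.filter (fun e => e.1 = a), dw e.1 e.2 * V e| := abs_mul _ _
              _ ≤ t * M := mul_le_mul hc (hVbnd a) (abs_nonneg _) htpos.le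
          have h2 := hslackctl a haNT
          linarith
        · have hempty : E.filter (fun e => e.1 = a) = ∅ := by
            rw [Finset.filter_eq_empty_iff]
            intro e he hfst
            exact haF (Finset.mem_image.2 ⟨e, he, hfst⟩)
          rw [hempty]; simp
  -- minimality at the two perturbed points
  have hmin1 := isMinOn_iff.1 hwmin _ (hmem t (by rw [abs_of_pos htpos]))
  have hmin2 := isMinOn_iff.1 hwmin _ (hmem (-t) (by rw [abs_neg, abs_of_pos htpos]))
  rw [expand_g] at hmin1 hmin2
  have hB : ∑ e ∈ E, V e ^ 2 ≤ 0 := by nlinarith [mul_pos htpos htpos]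
  have hB0 : ∑ e ∈ E, V e ^ 2 = 0 :=
    le_antisymm hB (Finset.sum_nonneg fun e _ => sq_nonneg _)
  have := (Finset.sum_eq_zero_iff_of_nonneg (fun e _ => sq_nonneg (V e))).1 hB0 e₀ he₀
  exact pow_eq_zero_iff (by norm_num) |>.1 this

lemma stuck_false {α β : Type*} [DecidableEq α] [DecidableEq β]
    (T κ : ℝ) (hT : 0 < T) (hκ : T ≤ κ) (yw : α → ℝ) (dw : α → β → ℝ)
    (E : Finset (α × β)) (z : α × β → ℝ)
    (hEne : E.Nonempty)
    (hy : ∀ e ∈ E, yw e.1 ∈ Set.Icc (0:ℝ) 1)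
    (hd : ∀ e ∈ E, dw e.1 e.2 ∈ Set.Icc (0:ℝ) T)
    (w : α × β → ℝ)
    (hwstrict : ∀ e ∈ E, 0 < w e ∧ w e < 1)
    (hwoff : ∀ e, e ∉ E → w e = 0)
    (hwcs : ∀ b, ∑ e ∈ E.filter (fun e => e.2 = b), yw e.1 * w e
              = ∑ e ∈ E.filter (fun e => e.2 = b), yw e.1 * z e)
    (hwfs : ∀ a, ∑ e ∈ E.filter (fun e => e.1 = a), dw e.1 e.2 * w e
              ≤ ∑ e ∈ E.filter (fun e => e.1 = a), dw e.1 e.2 * z e)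
    (hwmin : IsMinOn (fun w => ∑ e ∈ E, w e * (1 - w e))
      {w : (α × β) → ℝ | (∀ e ∈ E, w e ∈ Set.Icc (0:ℝ) 1) ∧ (∀ e, e ∉ E → w e = 0) ∧
        (∀ b, ∑ e ∈ E.filter (fun e => e.2 = b), yw e.1 * w e
              = ∑ e ∈ E.filter (fun e => e.2 = b), yw e.1 * z e) ∧
        (∀ a, ∑ e ∈ E.filter (fun e => e.1 = a), dw e.1 e.2 * w e
              ≤ ∑ e ∈ E.filter (fun e => e.1 = a), dw e.1 e.2 * z e)} w)
    (hC : ∀ b ∈ E.image Prod.snd, 1 < ∑ e ∈ E.filter (fun e => e.2 = b), yw e.1 * w e)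
    (hD : ∀ a ∈ E.image Prod.fst,
        κ < ∑ e ∈ E.filter (fun e => e.1 = a), dw e.1 e.2 * (1 - w e)) :
    False := by
  classical
  set C' : Finset β := E.image Prod.snd with hC'
  set F' : Finset α := E.image Prod.fst with hF'
  set tF : Finset α := F'.filter
    (fun a => ∑ e ∈ E.filter (fun e => e.1 = a), dw e.1 e.2 * w e
            = ∑ e ∈ E.filter (fun e => e.1 = a), dw e.1 e.2 * z e) with htF
  -- the extension operator
  set ext : (↥E → ℝ) → ((α × β) → ℝ) :=
    fun v e => if he : e ∈ E then v ⟨e, he⟩ else 0 with hext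
  have hext_add : ∀ (v v' : ↥E → ℝ) e, ext (v + v') e = ext v e + ext v' e := by
    intro v v' e; by_cases he : e ∈ E <;> simp [hext, he]
  have hext_smul : ∀ (c : ℝ) (v : ↥E → ℝ) e, ext (c • v) e = c * ext v e := by
    intro c v e; by_cases he : e ∈ E <;> simp [hext, he]
  -- the linear map
  set Φ : (↥E → ℝ) →ₗ[ℝ] ((↥C' → ℝ) × (↥tF → ℝ)) :=
    { toFun := fun v =>
        (fun b => ∑ e ∈ E.filter (fun e => e.2 = (b:β)), yw e.1 * ext v e,
         fun a => ∑ e ∈ E.filter (fun e => e.1 = (a:α)), dw e.1 e.2 * ext v e),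
      map_add' := by
        intro v v'
        refine Prod.ext ?_ ?_ <;> · funext q; simp [hext_add, mul_add, Finset.sum_add_distrib]
      map_smul' := by
        intro c v
        refine Prod.ext ?_ ?_ <;>
          · funext q
            simp [hext_smul, Finset.mul_sum, mul_left_comm] } with hΦ
  have hinj : Function.Injective Φ := by
    intro v₁ v₂ heq
    have hv : Φ (v₁ - v₂) = 0 := by rw [map_sub, heq, sub_self]
    set V : (α × β) → ℝ := ext (v₁ - v₂) with hV
    have hVoff : ∀ e, e ∉ E → V e = 0 := by intro e he; simp [hV, hext, he]
    have hVcs : ∀ b, ∑ e ∈ E.filter (fun e => e.2 = b), yw e.1 * V e = 0 := by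
      intro b
      by_cases hb : b ∈ C'
      · exact congrFun (congrArg Prod.fst hv) ⟨b, hb⟩
      · have hempty : E.filter (fun e => e.2 = b) = ∅ := by
          rw [Finset.filter_eq_empty_iff]
          intro e he hsnd
          exact hb (Finset.mem_image.2 ⟨e, he, hsnd⟩)
        rw [hempty]; simp
    have hVfs : ∀ a, (∑ e ∈ E.filter (fun e => e.1 = a), dw e.1 e.2 * w e
              = ∑ e ∈ E.filter (fun e => e.1 = a), dw e.1 e.2 * z e) →
              ∑ e ∈ E.filter (fun e => e.1 = a), dw e.1 e.2 * V e = 0 := by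
      intro a htight
      by_cases ha : a ∈ F'
      · have hatF : a ∈ tF := Finset.mem_filter.2 ⟨ha, htight⟩
        exact congrFun (congrArg Prod.snd hv) ⟨a, hatF⟩
      · have hempty : E.filter (fun e => e.1 = a) = ∅ := by
          rw [Finset.filter_eq_empty_iff]
          intro e he hfst
          exact ha (Finset.mem_image.2 ⟨e, he, hfst⟩)
        rw [hempty]; simp
    have hall := kernel_zero T κ hT yw dw E z hd w hwstrict hwoff hwcs hwfs hwmin
      V hVoff hVcs hVfs
    have : v₁ - v₂ = 0 := by
      funext q
      have := hall q.1 q.2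
      rw [hV, hext] at this
      simpa [dif_pos q.2] using this
    exact sub_eq_zero.1 this
  have hrank := LinearMap.finrank_le_finrank_of_injective hinj
  rw [Module.finrank_pi ℝ] at hrank
  rw [Module.finrank_prod, Module.finrank_pi ℝ, Module.finrank_pi ℝ] at hrank
  rw [Fintype.card_coe, Fintype.card_coe, Fintype.card_coe] at hrank
  -- counting
  have hcount1 : (C'.card : ℝ) < ∑ e ∈ E, w e := by
    have hfib : ∑ b ∈ C', ∑ e ∈ E.filter (fun e => e.2 = b), w e = ∑ e ∈ E, w e :=
      Finset.sum_fiberwise_of_maps_to (fun e he => Finset.mem_image_of_mem _ he) w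
    have hCne : C'.Nonempty := hEne.image _
    have hlt : ∀ b ∈ C', 1 < ∑ e ∈ E.filter (fun e => e.2 = b), w e := by
      intro b hb
      refine lt_of_lt_of_le (hC b hb) (Finset.sum_le_sum fun e he => ?_)
      have heE := (Finset.mem_filter.1 he).1
      have h1 := (hy e heE).1
      have h2 := (hy e heE).2
      have h3 := (hwstrict e heE).1
      nlinarith
    calc (C'.card : ℝ) = ∑ _b ∈ C', (1:ℝ) := by simp
      _ < ∑ b ∈ C', ∑ e ∈ E.filter (fun e => e.2 = b), w e :=
          Finset.sum_lt_sum_of_nonempty hCne hlt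
      _ = ∑ e ∈ E, w e := hfib
  have hcount2 : (F'.card : ℝ) < ∑ e ∈ E, (1 - w e) := by
    have hfib : ∑ a ∈ F', ∑ e ∈ E.filter (fun e => e.1 = a), (1 - w e)
        = ∑ e ∈ E, (1 - w e) :=
      Finset.sum_fiberwise_of_maps_to (fun e he => Finset.mem_image_of_mem _ he) _
    have hFne : F'.Nonempty := hEne.image _
    have hlt : ∀ a ∈ F', 1 < ∑ e ∈ E.filter (fun e => e.1 = a), (1 - w e) := by
      intro a ha
      have h1 : κ < ∑ e ∈ E.filter (fun e => e.1 = a), dw e.1 e.2 * (1 - w e) := hD a ha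
      have h2 : ∑ e ∈ E.filter (fun e => e.1 = a), dw e.1 e.2 * (1 - w e)
          ≤ T * ∑ e ∈ E.filter (fun e => e.1 = a), (1 - w e) := by
        rw [Finset.mul_sum]
        refine Finset.sum_le_sum fun e he => ?_
        have heE := (Finset.mem_filter.1 he).1
        have hd2 := (hd e heE).2
        have h3 := (hwstrict e heE).2
        nlinarith [(hd e heE).1]
      have : T * 1 < T * ∑ e ∈ E.filter (fun e => e.1 = a), (1 - w e) := by
        rw [mul_one]; linarith
      exact (mul_lt_mul_iff_right₀ hT).1 this
    calc (F'.card : ℝ) = ∑ _a ∈ F', (1:ℝ) := by simp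
      _ < _ := Finset.sum_lt_sum_of_nonempty hFne hlt
      _ = ∑ e ∈ E, (1 - w e) := hfib
  have hEcard : (E.card : ℝ) = ∑ e ∈ E, w e + ∑ e ∈ E, (1 - w e) := by
    rw [← Finset.sum_add_distrib]
    simp
  have htFle : tF.card ≤ F'.card := Finset.card_filter_le _ _
  have : (E.card : ℝ) ≤ (C'.card : ℝ) + (tF.card : ℝ) := by exact_mod_cast hrank
  have : (tF.card : ℝ) ≤ (F'.card : ℝ) := by exact_mod_cast htFle
  linarith


lemma exists_min_K {α β : Type*} [DecidableEq α] [DecidableEq β]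
    (yw : α → ℝ) (dw : α → β → ℝ) (E : Finset (α × β)) (z : α × β → ℝ)
    (hz : ∀ e ∈ E, z e ∈ Set.Icc (0:ℝ) 1) :
    ∃ w ∈ {w : (α × β) → ℝ | (∀ e ∈ E, w e ∈ Set.Icc (0:ℝ) 1) ∧ (∀ e, e ∉ E → w e = 0) ∧
        (∀ b, ∑ e ∈ E.filter (fun e => e.2 = b), yw e.1 * w e
              = ∑ e ∈ E.filter (fun e => e.2 = b), yw e.1 * z e) ∧
        (∀ a, ∑ e ∈ E.filter (fun e => e.1 = a), dw e.1 e.2 * w e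
              ≤ ∑ e ∈ E.filter (fun e => e.1 = a), dw e.1 e.2 * z e)},
      IsMinOn (fun w => ∑ e ∈ E, w e * (1 - w e))
        {w : (α × β) → ℝ | (∀ e ∈ E, w e ∈ Set.Icc (0:ℝ) 1) ∧ (∀ e, e ∉ E → w e = 0) ∧
        (∀ b, ∑ e ∈ E.filter (fun e => e.2 = b), yw e.1 * w e
              = ∑ e ∈ E.filter (fun e => e.2 = b), yw e.1 * z e) ∧
        (∀ a, ∑ e ∈ E.filter (fun e => e.1 = a), dw e.1 e.2 * w e
              ≤ ∑ e ∈ E.filter (fun e => e.1 = a), dw e.1 e.2 * z e)} w := by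
  classical
  set K : Set ((α × β) → ℝ) :=
    {w : (α × β) → ℝ | (∀ e ∈ E, w e ∈ Set.Icc (0:ℝ) 1) ∧ (∀ e, e ∉ E → w e = 0) ∧
        (∀ b, ∑ e ∈ E.filter (fun e => e.2 = b), yw e.1 * w e
              = ∑ e ∈ E.filter (fun e => e.2 = b), yw e.1 * z e) ∧
        (∀ a, ∑ e ∈ E.filter (fun e => e.1 = a), dw e.1 e.2 * w e
              ≤ ∑ e ∈ E.filter (fun e => e.1 = a), dw e.1 e.2 * z e)} with hK
  have hzt : (fun e => if e ∈ E then z e else 0) ∈ K := by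
    rw [hK]
    refine ⟨?_, ?_, ?_, ?_⟩
    · intro e he; simpa [he] using hz e he
    · intro e he; simp [he]
    · intro b
      refine Finset.sum_congr rfl fun e he => ?_
      have := (Finset.mem_filter.1 he).1
      simp [this]
    · intro a
      refine le_of_eq (Finset.sum_congr rfl fun e he => ?_)
      have := (Finset.mem_filter.1 he).1
      simp [this]
  have hKne : K.Nonempty := ⟨_, hzt⟩
  have hsub : K ⊆ Set.pi Set.univ (fun e => if e ∈ E then Set.Icc (0:ℝ) 1 else {0}) := by
    intro w hw
    rw [hK] at hw
    intro e _
    by_cases he : e ∈ E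
    · simpa [he] using hw.1 e he
    · simpa [he] using hw.2.1 e he
  have hScompact : IsCompact (Set.pi Set.univ
      (fun e : α × β => if e ∈ E then Set.Icc (0:ℝ) 1 else {0})) := by
    apply isCompact_univ_pi
    intro e
    by_cases he : e ∈ E
    · simp only [he, if_true]; exact isCompact_Icc
    · simp only [he, if_false]; exact isCompact_singleton
  have hKclosed : IsClosed K := by
    rw [hK]
    have h1 : IsClosed {w : (α × β) → ℝ | ∀ e ∈ E, w e ∈ Set.Icc (0:ℝ) 1} := by
      have heq : {w : (α × β) → ℝ | ∀ e ∈ E, w e ∈ Set.Icc (0:ℝ) 1}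
          = ⋂ e ∈ E, {w : (α × β) → ℝ | w e ∈ Set.Icc (0:ℝ) 1} := by
        ext w; simp
      rw [heq]
      exact isClosed_biInter fun e _ => IsClosed.preimage (continuous_apply e) isClosed_Icc
    have h2 : IsClosed {w : (α × β) → ℝ | ∀ e, e ∉ E → w e = 0} := by
      have heq : {w : (α × β) → ℝ | ∀ e, e ∉ E → w e = 0}
          = ⋂ e ∈ {e : α × β | e ∉ E}, {w : (α × β) → ℝ | w e = 0} := by
        ext w; simp
      rw [heq]
      exact isClosed_biInter fun e _ => isClosed_eq (continuous_apply e) continuous_const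
    have h3 : IsClosed {w : (α × β) → ℝ | ∀ b,
        ∑ e ∈ E.filter (fun e => e.2 = b), yw e.1 * w e
          = ∑ e ∈ E.filter (fun e => e.2 = b), yw e.1 * z e} := by
      have heq : {w : (α × β) → ℝ | ∀ b,
          ∑ e ∈ E.filter (fun e => e.2 = b), yw e.1 * w e
            = ∑ e ∈ E.filter (fun e => e.2 = b), yw e.1 * z e}
          = ⋂ b, {w : (α × β) → ℝ | ∑ e ∈ E.filter (fun e => e.2 = b), yw e.1 * w e
            = ∑ e ∈ E.filter (fun e => e.2 = b), yw e.1 * z e} := by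
        ext w; simp
      rw [heq]
      refine isClosed_iInter fun b => isClosed_eq ?_ continuous_const
      exact continuous_finset_sum _ fun e _ => continuous_const.mul (continuous_apply e)
    have h4 : IsClosed {w : (α × β) → ℝ | ∀ a,
        ∑ e ∈ E.filter (fun e => e.1 = a), dw e.1 e.2 * w e
          ≤ ∑ e ∈ E.filter (fun e => e.1 = a), dw e.1 e.2 * z e} := by
      have heq : {w : (α × β) → ℝ | ∀ a,
          ∑ e ∈ E.filter (fun e => e.1 = a), dw e.1 e.2 * w e
            ≤ ∑ e ∈ E.filter (fun e => e.1 = a), dw e.1 e.2 * z e}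
          = ⋂ a, {w : (α × β) → ℝ | ∑ e ∈ E.filter (fun e => e.1 = a), dw e.1 e.2 * w e
            ≤ ∑ e ∈ E.filter (fun e => e.1 = a), dw e.1 e.2 * z e} := by
        ext w; simp
      rw [heq]
      refine isClosed_iInter fun a => isClosed_le ?_ continuous_const
      exact continuous_finset_sum _ fun e _ => continuous_const.mul (continuous_apply e)
    exact h1.inter (h2.inter (h3.inter h4))
  have hKcompact : IsCompact K := hScompact.of_isClosed_subset hKclosed hsub
  have hgcont : ContinuousOn (fun w : (α × β) → ℝ => ∑ e ∈ E, w e * (1 - w e)) K := by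
    apply Continuous.continuousOn
    exact continuous_finset_sum _ fun e _ =>
      (continuous_apply e).mul (continuous_const.sub (continuous_apply e))
  exact hKcompact.exists_isMinOn hKne hgcont

/-- The key global rounding lemma: any fractional `z` on a bipartite support `E`
can be rounded to `{0,1}` values, losing at most weight `1` on each right-node
(`yw`-weighted, with `yw ≤ 1`) and overshooting at most `κ ≥ T` on each
left-node (`dw`-weighted, with `dw ≤ T`). -/
lemma round_lemma {α β : Type*} [DecidableEq α] [DecidableEq β]
    (T κ : ℝ) (hT : 0 < T) (hκ : T ≤ κ) (yw : α → ℝ) (dw : α → β → ℝ) :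
    ∀ (E : Finset (α × β)) (z : α × β → ℝ),
    (∀ e ∈ E, yw e.1 ∈ Set.Icc (0:ℝ) 1) →
    (∀ e ∈ E, dw e.1 e.2 ∈ Set.Icc (0:ℝ) T) →
    (∀ e ∈ E, z e ∈ Set.Icc (0:ℝ) 1) →
    ∃ s : α × β → ℝ, (∀ e, s e = 0 ∨ s e = 1) ∧ (∀ e, e ∉ E → s e = 0) ∧
      (∀ b, ∑ e ∈ E.filter (fun e => e.2 = b), yw e.1 * z e - 1
            ≤ ∑ e ∈ E.filter (fun e => e.2 = b), yw e.1 * s e) ∧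
      (∀ a, ∑ e ∈ E.filter (fun e => e.1 = a), dw e.1 e.2 * s e
            ≤ ∑ e ∈ E.filter (fun e => e.1 = a), dw e.1 e.2 * z e + κ) := by
  intro E
  induction E using Finset.strongInductionOn with
  | _ E IH =>
    intro z hy hd hz
    classical
    by_cases hE : E = ∅
    · subst hE
      refine ⟨fun _ => 0, fun _ => Or.inl rfl, fun _ _ => rfl, ?_, ?_⟩
      · intro b; simp
      · intro a; simp; linarith
    have hEne : E.Nonempty := Finset.nonempty_iff_ne_empty.2 hE
    obtain ⟨w, hwK, hwmin⟩ := exists_min_K yw dw E z hz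
    obtain ⟨hwbox, hwoff, hwcs, hwfs⟩ := hwK
    by_cases hA : ∃ e ∈ E, w e = 0
    · obtain ⟨e0, he0, hw0⟩ := hA
      have hsub : E.erase e0 ⊂ E := Finset.erase_ssubset he0
      obtain ⟨s, hs01, hs0, hsc, hsf⟩ := IH _ hsub w
        (fun e he => hy e (Finset.mem_of_mem_erase he))
        (fun e he => hd e (Finset.mem_of_mem_erase he))
        (fun e he => hwbox e (Finset.mem_of_mem_erase he))
      refine ⟨s, hs01, fun e he => hs0 e (fun hc => he (Finset.mem_of_mem_erase hc)), ?_, ?_⟩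
      · intro b
        have h1 := hsc b
        have hse0 : s e0 = 0 := hs0 e0 (Finset.notMem_erase _ _)
        rw [← hwcs b]
        rw [sum_filter_erase_add he0 (fun e => e.2 = b) (fun e => yw e.1 * s e),
          sum_filter_erase_add he0 (fun e => e.2 = b) (fun e => yw e.1 * w e),
          hse0, hw0]
        simp only [mul_zero, ite_self]
        linarith
      · intro a
        have h1 := hsf a
        have hse0 : s e0 = 0 := hs0 e0 (Finset.notMem_erase _ _)
        have h2 := hwfs a
        rw [sum_filter_erase_add he0 (fun e => e.1 = a) (fun e => dw e.1 e.2 * s e),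
          sum_filter_erase_add he0 (fun e => e.1 = a) (fun e => dw e.1 e.2 * w e)] at *
        rw [hse0, hw0] at *
        simp only [mul_zero, ite_self] at *
        linarith
    by_cases hB : ∃ e ∈ E, w e = 1
    · obtain ⟨e0, he0, hw1⟩ := hB
      have hsub : E.erase e0 ⊂ E := Finset.erase_ssubset he0
      obtain ⟨s', hs01, hs0, hsc, hsf⟩ := IH _ hsub w
        (fun e he => hy e (Finset.mem_of_mem_erase he))
        (fun e he => hd e (Finset.mem_of_mem_erase he))
        (fun e he => hwbox e (Finset.mem_of_mem_erase he))
      set s : α × β → ℝ := fun e => if e = e0 then 1 else s' e with hs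
      have hsagree : ∀ e, e ≠ e0 → s e = s' e := by
        intro e he; simp [hs, he]
      have hse0 : s e0 = 1 := by simp [hs]
      refine ⟨s, ?_, ?_, ?_, ?_⟩
      · intro e
        by_cases he : e = e0
        · right; rw [he]; exact hse0
        · rw [hsagree e he]; exact hs01 e
      · intro e he
        have hne : e ≠ e0 := fun hc => he (hc ▸ he0)
        rw [hsagree e hne]
        exact hs0 e (fun hc => he (Finset.mem_of_mem_erase hc))
      · intro b
        have h1 := hsc b
        rw [← hwcs b]
        rw [sum_filter_erase_add he0 (fun e => e.2 = b) (fun e => yw e.1 * s e),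
          sum_filter_erase_add he0 (fun e => e.2 = b) (fun e => yw e.1 * w e)]
        have hinner : ∑ e ∈ (E.erase e0).filter (fun e => e.2 = b), yw e.1 * s e
            = ∑ e ∈ (E.erase e0).filter (fun e => e.2 = b), yw e.1 * s' e := by
          refine Finset.sum_congr rfl fun e he => ?_
          have := Finset.ne_of_mem_erase (Finset.mem_filter.1 he).1
          rw [hsagree e this]
        rw [hinner, hse0, hw1]
        linarith
      · intro a
        have h1 := hsf a
        have h2 := hwfs a
        have hinner : ∑ e ∈ (E.erase e0).filter (fun e => e.1 = a), dw e.1 e.2 * s e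
            = ∑ e ∈ (E.erase e0).filter (fun e => e.1 = a), dw e.1 e.2 * s' e := by
          refine Finset.sum_congr rfl fun e he => ?_
          have := Finset.ne_of_mem_erase (Finset.mem_filter.1 he).1
          rw [hsagree e this]
        rw [sum_filter_erase_add he0 (fun e => e.1 = a) (fun e => dw e.1 e.2 * s e), hinner,
          hse0]
        rw [sum_filter_erase_add he0 (fun e => e.1 = a) (fun e => dw e.1 e.2 * w e), hw1] at h2
        linarith
    by_cases hC : ∃ b ∈ E.image Prod.snd,
        ∑ e ∈ E.filter (fun e => e.2 = b), yw e.1 * w e ≤ 1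
    · obtain ⟨b0, hb0C, hble⟩ := hC
      obtain ⟨e1, he1, he1b⟩ := Finset.mem_image.1 hb0C
      have hsub : E.filter (fun e => ¬ e.2 = b0) ⊂ E :=
        Finset.filter_ssubset.2 ⟨e1, he1, not_not_intro he1b⟩
      obtain ⟨s, hs01, hs0, hsc, hsf⟩ := IH _ hsub w
        (fun e he => hy e (Finset.mem_of_mem_filter e he))
        (fun e he => hd e (Finset.mem_of_mem_filter e he))
        (fun e he => hwbox e (Finset.mem_of_mem_filter e he))
      have hsE' : ∀ e ∈ E, e.2 = b0 → s e = 0 := by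
        intro e he hb
        exact hs0 e (by simp [Finset.mem_filter, hb])
      refine ⟨s, hs01, fun e he => hs0 e (fun hc => he (Finset.mem_of_mem_filter e hc)), ?_, ?_⟩
      · intro b
        by_cases hbb : b = b0
        · subst hbb
          have hzero : ∑ e ∈ E.filter (fun e => e.2 = b), yw e.1 * s e = 0 := by
            refine Finset.sum_eq_zero fun e he => ?_
            obtain ⟨heE, heb⟩ := Finset.mem_filter.1 he
            rw [hsE' e heE heb, mul_zero]
          rw [hzero, ← hwcs b]
          linarith
        · have hset : (E.filter (fun e => ¬ e.2 = b0)).filter (fun e => e.2 = b)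
              = E.filter (fun e => e.2 = b) := by
            rw [Finset.filter_filter]
            refine Finset.filter_congr fun e _ => ?_
            constructor
            · rintro ⟨_, h⟩; exact h
            · intro h; exact ⟨fun hc => hbb (h ▸ hc ▸ rfl), h⟩
          have h1 := hsc b
          rw [hset] at h1
          rw [← hwcs b]
          linarith
      · intro a
        have hsplit : ∀ f : (α × β) → ℝ,
            ∑ e ∈ E.filter (fun e => e.1 = a), f e
            = ∑ e ∈ (E.filter (fun e => e.1 = a)).filter (fun e => e.2 = b0), f e
              + ∑ e ∈ (E.filter (fun e => e.1 = a)).filter (fun e => ¬ e.2 = b0), f e :=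
          fun f => (Finset.sum_filter_add_sum_filter_not _ _ _).symm
        have hset : (E.filter (fun e => e.1 = a)).filter (fun e => ¬ e.2 = b0)
            = (E.filter (fun e => ¬ e.2 = b0)).filter (fun e => e.1 = a) := by
          rw [Finset.filter_filter, Finset.filter_filter]
          refine Finset.filter_congr fun e _ => ?_
          constructor
          · rintro ⟨h1, h2⟩; exact ⟨h2, h1⟩
          · rintro ⟨h1, h2⟩; exact ⟨h2, h1⟩
        have hzero1 : ∑ e ∈ (E.filter (fun e => e.1 = a)).filter (fun e => e.2 = b0),
            dw e.1 e.2 * s e = 0 := by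
          refine Finset.sum_eq_zero fun e he => ?_
          obtain ⟨he', heb⟩ := Finset.mem_filter.1 he
          rw [hsE' e (Finset.mem_of_mem_filter e he') heb, mul_zero]
        have hnneg1 : 0 ≤ ∑ e ∈ (E.filter (fun e => e.1 = a)).filter (fun e => e.2 = b0),
            dw e.1 e.2 * w e := by
          refine Finset.sum_nonneg fun e he => ?_
          have heE : e ∈ E := Finset.mem_of_mem_filter e (Finset.mem_of_mem_filter e he)
          exact mul_nonneg (hd e heE).1 (hwbox e heE).1
        have h1 := hsf a
        rw [← hset] at h1
        have h2 := hwfs a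
        rw [hsplit (fun e => dw e.1 e.2 * s e), hsplit (fun e => dw e.1 e.2 * w e)] at *
        rw [hzero1]
        linarith
    by_cases hD : ∃ a ∈ E.image Prod.fst,
        ∑ e ∈ E.filter (fun e => e.1 = a), dw e.1 e.2 * (1 - w e) ≤ κ
    · obtain ⟨a0, ha0F, hale⟩ := hD
      obtain ⟨e1, he1, he1a⟩ := Finset.mem_image.1 ha0F
      have hsub : E.filter (fun e => ¬ e.1 = a0) ⊂ E :=
        Finset.filter_ssubset.2 ⟨e1, he1, not_not_intro he1a⟩
      obtain ⟨s', hs01, hs0, hsc, hsf⟩ := IH _ hsub w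
        (fun e he => hy e (Finset.mem_of_mem_filter e he))
        (fun e he => hd e (Finset.mem_of_mem_filter e he))
        (fun e he => hwbox e (Finset.mem_of_mem_filter e he))
      set s : α × β → ℝ := fun e => if e ∈ E ∧ e.1 = a0 then 1 else s' e with hs
      have hs_one : ∀ e ∈ E, e.1 = a0 → s e = 1 := by
        intro e he ha; simp [hs, he, ha]
      have hs_agree : ∀ e, ¬ (e ∈ E ∧ e.1 = a0) → s e = s' e := by
        intro e he; simp only [hs, if_neg he]
      refine ⟨s, ?_, ?_, ?_, ?_⟩
      · intro e
        by_cases he : e ∈ E ∧ e.1 = a0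
        · right; simp [hs, he]
        · rw [hs_agree e he]; exact hs01 e
      · intro e he
        have : ¬ (e ∈ E ∧ e.1 = a0) := fun hc => he hc.1
        rw [hs_agree e this]
        exact hs0 e (fun hc => he (Finset.mem_of_mem_filter e hc))
      · intro b
        have hsplit : ∀ f : (α × β) → ℝ,
            ∑ e ∈ E.filter (fun e => e.2 = b), f e
            = ∑ e ∈ (E.filter (fun e => e.2 = b)).filter (fun e => e.1 = a0), f e
              + ∑ e ∈ (E.filter (fun e => e.2 = b)).filter (fun e => ¬ e.1 = a0), f e :=
          fun f => (Finset.sum_filter_add_sum_filter_not _ _ _).symm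
        have hset : (E.filter (fun e => e.2 = b)).filter (fun e => ¬ e.1 = a0)
            = (E.filter (fun e => ¬ e.1 = a0)).filter (fun e => e.2 = b) := by
          rw [Finset.filter_filter, Finset.filter_filter]
          refine Finset.filter_congr fun e _ => ?_
          constructor
          · rintro ⟨h1, h2⟩; exact ⟨h2, h1⟩
          · rintro ⟨h1, h2⟩; exact ⟨h2, h1⟩
        have hpart1 : ∑ e ∈ (E.filter (fun e => e.2 = b)).filter (fun e => e.1 = a0),
            yw e.1 * w e ≤ ∑ e ∈ (E.filter (fun e => e.2 = b)).filter (fun e => e.1 = a0),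
            yw e.1 * s e := by
          refine Finset.sum_le_sum fun e he => ?_
          obtain ⟨he', hea⟩ := Finset.mem_filter.1 he
          have heE : e ∈ E := Finset.mem_of_mem_filter e he'
          rw [hs_one e heE hea, mul_one]
          have := (hy e heE).2
          have := (hy e heE).1
          have := (hwbox e heE).2
          nlinarith
        have hpart2 : ∑ e ∈ (E.filter (fun e => e.2 = b)).filter (fun e => ¬ e.1 = a0),
            yw e.1 * s e = ∑ e ∈ (E.filter (fun e => ¬ e.1 = a0)).filter (fun e => e.2 = b),
            yw e.1 * s' e := by
          rw [← hset]
          refine Finset.sum_congr rfl fun e he => ?_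
          have hea := (Finset.mem_filter.1 he).2
          rw [hs_agree e (fun hc => hea hc.2)]
        have h1 := hsc b
        rw [← hwcs b]
        rw [hsplit (fun e => yw e.1 * s e), hsplit (fun e => yw e.1 * w e), hpart2]
        rw [hset]
        linarith [hpart1]
      · intro a
        by_cases haa : a = a0
        · subst haa
          have hsone : ∑ e ∈ E.filter (fun e => e.1 = a), dw e.1 e.2 * s e
              = ∑ e ∈ E.filter (fun e => e.1 = a), dw e.1 e.2 := by
            refine Finset.sum_congr rfl fun e he => ?_
            obtain ⟨heE, hea⟩ := Finset.mem_filter.1 he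
            rw [hs_one e heE hea, mul_one]
          have hexp : ∑ e ∈ E.filter (fun e => e.1 = a), dw e.1 e.2 * (1 - w e)
              = ∑ e ∈ E.filter (fun e => e.1 = a), dw e.1 e.2
                - ∑ e ∈ E.filter (fun e => e.1 = a), dw e.1 e.2 * w e := by
            rw [← Finset.sum_sub_distrib]
            exact Finset.sum_congr rfl fun e _ => by ring
          have h2 := hwfs a
          rw [hexp] at hale
          rw [hsone]
          linarith
        · have hset : (E.filter (fun e => ¬ e.1 = a0)).filter (fun e => e.1 = a)
              = E.filter (fun e => e.1 = a) := by
            rw [Finset.filter_filter]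
            refine Finset.filter_congr fun e _ => ?_
            constructor
            · rintro ⟨_, h⟩; exact h
            · intro h; exact ⟨fun hc => haa (h ▸ hc ▸ rfl), h⟩
          have hagree : ∑ e ∈ E.filter (fun e => e.1 = a), dw e.1 e.2 * s e
              = ∑ e ∈ E.filter (fun e => e.1 = a), dw e.1 e.2 * s' e := by
            refine Finset.sum_congr rfl fun e he => ?_
            have hea := (Finset.mem_filter.1 he).2
            rw [hs_agree e (fun hc => haa (hea ▸ hc.2 ▸ rfl))]
          have h1 := hsf a
          rw [hset] at h1
          have h2 := hwfs a
          rw [hagree]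
          linarith
    -- no move available: contradiction
    exfalso
    push_neg at hA hB hC hD
    refine stuck_false T κ hT hκ yw dw E z hEne hy hd w ?_ hwoff hwcs hwfs hwmin ?_ ?_
    · intro e he
      have h1 := (hwbox e he).1
      have h2 := (hwbox e he).2
      exact ⟨lt_of_le_of_ne h1 (Ne.symm (hA e he)), lt_of_le_of_ne h2 (hB e he)⟩
    · exact fun b hb => hC b hb
    · exact fun a ha => hD a ha

/-- Preprocessing theorem (Theorem 6 of the paper): given an assignment `x`
with loads at most `μ·T·y_i` and satisfying the other SC-LP constraints, one can
find `x'` with every nonzero assignment at least `γ·y_i`, losing at most a `γ`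
fraction of every client's demand and increasing loads to `(μ + 2 − γ)·T·y_i`. -/
theorem preprocessing {X : Type*} [MetricSpace X] (F C : Finset X) (hFC : Disjoint F C)
    (T : ℝ) (hT : 0 < T) (μ γ : ℝ) (hμ : 1 ≤ μ) (hγ0 : 0 < γ) (hγ1 : γ < 1)
    (x : X → X → ℝ) (y : X → ℝ)
    (hx01 : ∀ i ∈ F, ∀ j ∈ C, x i j ∈ Set.Icc (0 : ℝ) 1)
    (hy01 : ∀ i ∈ F, y i ∈ Set.Icc (0 : ℝ) 1)
    (hdem : ∀ j ∈ C, ∑ i ∈ F, x i j = 1)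
    (hxy : ∀ i ∈ F, ∀ j ∈ C, x i j ≤ y i)
    (hfar : ∀ i ∈ F, ∀ j ∈ C, T < dist i j → x i j = 0)
    (hload : ∀ i ∈ F, ∑ j ∈ C, dist i j * x i j ≤ μ * T * y i) :
    ∃ x' : X → X → ℝ,
      (∀ i ∈ F, ∀ j ∈ C, x' i j ∈ Set.Icc (0 : ℝ) 1) ∧
      (∀ i ∈ F, ∀ j ∈ C, x i j = 0 → x' i j = 0) ∧
      (∀ i ∈ F, ∀ j ∈ C, x' i j ≤ y i ∧ (0 < x' i j → γ * y i ≤ x' i j)) ∧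
      (∀ j ∈ C, 1 - γ ≤ ∑ i ∈ F, x' i j ∧ ∑ i ∈ F, x' i j ≤ 1) ∧
      (∀ i ∈ F, ∑ j ∈ C, dist i j * x' i j ≤ (μ + 2 - γ) * T * y i) := by
  classical
  set Small : Finset (X × X) :=
    (F ×ˢ C).filter (fun p => 0 < x p.1 p.2 ∧ x p.1 p.2 < γ * y p.1) with hSmall
  have hSmallF : ∀ e ∈ Small, e.1 ∈ F ∧ e.2 ∈ C ∧ 0 < x e.1 e.2 ∧ x e.1 e.2 < γ * y e.1 := by
    intro e he
    obtain ⟨hmem, h1, h2⟩ := Finset.mem_filter.1 he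
    obtain ⟨hF, hC⟩ := Finset.mem_product.1 hmem
    exact ⟨hF, hC, h1, h2⟩
  have hypos : ∀ e ∈ Small, 0 < y e.1 := by
    intro e he
    obtain ⟨_, _, h1, h2⟩ := hSmallF e he
    nlinarith
  set z : X × X → ℝ := fun e => x e.1 e.2 / (γ * y e.1) with hz
  set κ : ℝ := (2 - γ) * T / γ with hκdef
  have hκ : T ≤ κ := by
    rw [hκdef, le_div_iff₀ hγ0]
    nlinarith
  obtain ⟨s, hs01, hsoff, hsc, hsf⟩ := round_lemma T κ hT hκ y (fun i j => dist i j)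
    Small z
    (fun e he => hy01 e.1 (hSmallF e he).1)
    (by
      intro e he
      obtain ⟨hF, hC, h1, _⟩ := hSmallF e he
      refine ⟨dist_nonneg, ?_⟩
      by_contra hcon
      push_neg at hcon
      exact absurd (hfar e.1 hF e.2 hC hcon) (by linarith))
    (by
      intro e he
      obtain ⟨hF, hC, h1, h2⟩ := hSmallF e he
      have hy := hypos e he
      have hpos : 0 < γ * y e.1 := by positivity
      constructor
      · simp only [hz]; positivity
      · simp only [hz]
        rw [div_le_one hpos]
        linarith)
  -- fiberwise rewriting lemmas
  have hfiber_client : ∀ (j : X) (g : X × X → ℝ),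
      ∑ e ∈ Small.filter (fun e => e.2 = j), g e
        = ∑ i ∈ F.filter (fun i => (i, j) ∈ Small), g (i, j) := by
    intro j g
    refine Finset.sum_bij' (fun e _ => e.1) (fun i _ => (i, j)) ?_ ?_ ?_ ?_ ?_
    · intro e he
      obtain ⟨heS, hej⟩ := Finset.mem_filter.1 he
      refine Finset.mem_filter.2 ⟨(hSmallF e heS).1, ?_⟩
      have heq : (e.1, j) = e := Prod.ext rfl hej.symm
      rw [heq]; exact heS
    · intro i hi
      obtain ⟨hiF, hiS⟩ := Finset.mem_filter.1 hi
      exact Finset.mem_filter.2 ⟨hiS, rfl⟩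
    · intro e he
      obtain ⟨heS, hej⟩ := Finset.mem_filter.1 he
      exact Prod.ext rfl hej.symm
    · intro i hi
      rfl
    · intro e he
      obtain ⟨heS, hej⟩ := Finset.mem_filter.1 he
      have heq : (e.1, j) = e := Prod.ext rfl hej.symm
      rw [heq]
  have hfiber_fac : ∀ (i : X) (g : X × X → ℝ),
      ∑ e ∈ Small.filter (fun e => e.1 = i), g e
        = ∑ j ∈ C.filter (fun j => (i, j) ∈ Small), g (i, j) := by
    intro i g
    refine Finset.sum_bij' (fun e _ => e.2) (fun j _ => (i, j)) ?_ ?_ ?_ ?_ ?_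
    · intro e he
      obtain ⟨heS, hei⟩ := Finset.mem_filter.1 he
      refine Finset.mem_filter.2 ⟨(hSmallF e heS).2.1, ?_⟩
      have heq : (i, e.2) = e := Prod.ext hei.symm rfl
      rw [heq]; exact heS
    · intro j hj
      obtain ⟨hjC, hjS⟩ := Finset.mem_filter.1 hj
      exact Finset.mem_filter.2 ⟨hjS, rfl⟩
    · intro e he
      obtain ⟨heS, hei⟩ := Finset.mem_filter.1 he
      exact Prod.ext hei.symm rfl
    · intro j hj
      rfl
    · intro e he
      obtain ⟨heS, hei⟩ := Finset.mem_filter.1 he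
      have heq : (i, e.2) = e := Prod.ext hei.symm rfl
      rw [heq]
  -- trimming per client
  have hBex : ∀ j : X, ∃ B : Finset X, j ∈ C →
      B ⊆ F.filter (fun i => (i, j) ∈ Small) ∧
      (1 - γ ≤ (∑ i ∈ F.filter (fun i => ¬ (i, j) ∈ Small), x i j)
          + ∑ i ∈ B, γ * y i * s (i, j)) ∧
      ((∑ i ∈ F.filter (fun i => ¬ (i, j) ∈ Small), x i j)
          + ∑ i ∈ B, γ * y i * s (i, j) ≤ 1) := by
    intro j
    by_cases hj : j ∈ C
    swap
    · exact ⟨∅, fun hc => absurd hc hj⟩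
    have hxnn : ∀ i ∈ F, 0 ≤ x i j := fun i hi => (hx01 i hi j hj).1
    have hsplitx : (∑ i ∈ F.filter (fun i => (i, j) ∈ Small), x i j)
        + ∑ i ∈ F.filter (fun i => ¬ (i, j) ∈ Small), x i j = 1 := by
      rw [Finset.sum_filter_add_sum_filter_not]
      exact hdem j hj
    have hbase_le : (∑ i ∈ F.filter (fun i => ¬ (i, j) ∈ Small), x i j) ≤ 1 := by
      have : 0 ≤ ∑ i ∈ F.filter (fun i => (i, j) ∈ Small), x i j :=
        Finset.sum_nonneg fun i hi => hxnn i (Finset.mem_of_mem_filter i hi)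
      linarith
    have hf_mem : ∀ i ∈ F.filter (fun i => (i, j) ∈ Small),
        0 ≤ γ * y i * s (i, j) ∧ γ * y i * s (i, j) ≤ γ := by
      intro i hi
      obtain ⟨hiF, hiS⟩ := Finset.mem_filter.1 hi
      have hy1 := (hy01 i hiF).1
      have hy2 := (hy01 i hiF).2
      rcases hs01 (i, j) with h | h <;> rw [h]
      · constructor <;> nlinarith
      · constructor <;> nlinarith
    -- lower bound on the total
    have hlow : 1 - γ ≤ (∑ i ∈ F.filter (fun i => ¬ (i, j) ∈ Small), x i j)
        + ∑ i ∈ F.filter (fun i => (i, j) ∈ Small), γ * y i * s (i, j) := by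
      have hcl := hsc j
      have hze : ∑ e ∈ Small.filter (fun e => e.2 = j), y e.1 * z e
          = (∑ e ∈ Small.filter (fun e => e.2 = j), x e.1 e.2) / γ := by
        rw [Finset.sum_div]
        refine Finset.sum_congr rfl fun e he => ?_
        have heS := (Finset.mem_filter.1 he).1
        have hy := hypos e heS
        simp only [hz]
        field_simp
      have hgs : ∑ e ∈ Small.filter (fun e => e.2 = j), y e.1 * s e
          = (∑ i ∈ F.filter (fun i => (i, j) ∈ Small), γ * y i * s (i, j)) / γ := by
        rw [hfiber_client j (fun e => y e.1 * s e), Finset.sum_div]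
        refine Finset.sum_congr rfl fun i hi => ?_
        field_simp
      have hxs : ∑ e ∈ Small.filter (fun e => e.2 = j), x e.1 e.2
          = ∑ i ∈ F.filter (fun i => (i, j) ∈ Small), x i j :=
        hfiber_client j (fun e => x e.1 e.2)
      rw [hze, hgs, hxs] at hcl
      have hγne : γ ≠ 0 := ne_of_gt hγ0
      have h2 := mul_le_mul_of_nonneg_right hcl hγ0.le
      rw [sub_mul, div_mul_cancel₀ _ hγne, div_mul_cancel₀ _ hγne, one_mul] at h2
      linarith [hsplitx]
    obtain ⟨B, hBsub, h1, h2⟩ := exists_trim γ hγ0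
      (F.filter (fun i => (i, j) ∈ Small))
      (∑ i ∈ F.filter (fun i => ¬ (i, j) ∈ Small), x i j)
      (fun i => γ * y i * s (i, j)) hbase_le hf_mem hlow
    exact ⟨B, fun _ => ⟨hBsub, h1, h2⟩⟩
  choose B hB using hBex
  set x' : X → X → ℝ := fun i j =>
    if (i, j) ∈ Small then (if i ∈ B j then γ * y i * s (i, j) else 0) else x i j with hx'
  refine ⟨x', ?_, ?_, ?_, ?_, ?_⟩
  · -- values in [0,1]
    intro i hi j hj
    have hy1 := (hy01 i hi).1
    have hy2 := (hy01 i hi).2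
    by_cases hij : (i, j) ∈ Small
    · simp only [hx', if_pos hij]
      by_cases hBij : i ∈ B j
      · rw [if_pos hBij]
        rcases hs01 (i, j) with h | h <;> rw [h] <;> constructor <;> nlinarith
      · rw [if_neg hBij]
        exact ⟨le_refl 0, by norm_num⟩
    · simp only [hx', if_neg hij]
      exact hx01 i hi j hj
  · -- zero preserved
    intro i hi j hj hx0
    have hij : (i, j) ∉ Small := by
      intro hc
      have := (hSmallF _ hc).2.2.1
      simp only at this
      linarith [this, le_of_eq hx0]
    simp only [hx', if_neg hij]
    exact hx0
  · -- ≤ y and threshold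
    intro i hi j hj
    have hy1 := (hy01 i hi).1
    constructor
    · by_cases hij : (i, j) ∈ Small
      · simp only [hx', if_pos hij]
        by_cases hBij : i ∈ B j
        · rw [if_pos hBij]
          rcases hs01 (i, j) with h | h <;> rw [h] <;> nlinarith
        · rw [if_neg hBij]; exact hy1
      · simp only [hx', if_neg hij]
        exact hxy i hi j hj
    · intro hpos
      by_cases hij : (i, j) ∈ Small
      · simp only [hx', if_pos hij] at hpos ⊢
        by_cases hBij : i ∈ B j
        · rw [if_pos hBij] at hpos ⊢
          rcases hs01 (i, j) with h | h
          · rw [h] at hpos; simp at hpos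
          · rw [h]; rw [mul_one]
        · rw [if_neg hBij] at hpos; simp at hpos
      · simp only [hx', if_neg hij] at hpos ⊢
        have hmem : (i, j) ∈ F ×ˢ C := Finset.mem_product.2 ⟨hi, hj⟩
        have hno : ¬ (0 < x i j ∧ x i j < γ * y i) := by
          intro hc
          exact hij (by rw [hSmall]; exact Finset.mem_filter.2 ⟨hmem, hc⟩)
        by_contra hlt
        push_neg at hlt
        exact hno ⟨hpos, hlt⟩
  · -- client sums
    intro j hj
    obtain ⟨hBsub, hlo, hhi⟩ := hB j hj
    have h3 : ∑ i ∈ F, x' i j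
        = ∑ i ∈ F.filter (fun i => (i, j) ∈ Small), x' i j
          + ∑ i ∈ F.filter (fun i => ¬ (i, j) ∈ Small), x' i j :=
      (Finset.sum_filter_add_sum_filter_not _ _ _).symm
    have h1 : ∑ i ∈ F.filter (fun i => (i, j) ∈ Small), x' i j
        = ∑ i ∈ B j, γ * y i * s (i, j) := by
      have ha : ∑ i ∈ F.filter (fun i => (i, j) ∈ Small), x' i j
          = ∑ i ∈ F.filter (fun i => (i, j) ∈ Small),
              (if i ∈ B j then γ * y i * s (i, j) else 0) := by
        refine Finset.sum_congr rfl fun i hi => ?_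
        have := (Finset.mem_filter.1 hi).2
        simp only [hx', if_pos this]
      rw [ha, Finset.sum_ite_mem, Finset.inter_eq_right.2 hBsub]
    have h2 : ∑ i ∈ F.filter (fun i => ¬ (i, j) ∈ Small), x' i j
        = ∑ i ∈ F.filter (fun i => ¬ (i, j) ∈ Small), x i j := by
      refine Finset.sum_congr rfl fun i hi => ?_
      have := (Finset.mem_filter.1 hi).2
      simp only [hx', if_neg this]
    rw [h3, h1, h2, add_comm]
    exact ⟨hlo, hhi⟩
  · -- facility loads
    intro i hi
    have hy1 := (hy01 i hi).1
    have hsplitC : ∑ j ∈ C, dist i j * x' i j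
        = ∑ j ∈ C.filter (fun j => (i, j) ∈ Small), dist i j * x' i j
          + ∑ j ∈ C.filter (fun j => ¬ (i, j) ∈ Small), dist i j * x' i j :=
      (Finset.sum_filter_add_sum_filter_not _ _ _).symm
    have hnot : ∑ j ∈ C.filter (fun j => ¬ (i, j) ∈ Small), dist i j * x' i j
        = ∑ j ∈ C.filter (fun j => ¬ (i, j) ∈ Small), dist i j * x i j := by
      refine Finset.sum_congr rfl fun j hjf => ?_
      have := (Finset.mem_filter.1 hjf).2
      simp only [hx', if_neg this]
    have hpartle : ∑ j ∈ C.filter (fun j => (i, j) ∈ Small), dist i j * x' i j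
        ≤ γ * y i * ∑ e ∈ Small.filter (fun e => e.1 = i), dist e.1 e.2 * s e := by
      rw [hfiber_fac i (fun e => dist e.1 e.2 * s e), Finset.mul_sum]
      refine Finset.sum_le_sum fun j hjf => ?_
      have hjS := (Finset.mem_filter.1 hjf).2
      simp only [hx', if_pos hjS]
      have hsnn : 0 ≤ s (i, j) := by rcases hs01 (i, j) with h | h <;> rw [h] <;> norm_num
      by_cases hBij : i ∈ B j
      · rw [if_pos hBij]
        apply le_of_eq
        ring
      · rw [if_neg hBij, mul_zero]
        have := dist_nonneg (x := i) (y := j)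
        positivity
    have hzz : γ * y i * (∑ e ∈ Small.filter (fun e => e.1 = i), dist e.1 e.2 * z e)
        = ∑ e ∈ Small.filter (fun e => e.1 = i), dist e.1 e.2 * x e.1 e.2 := by
      rw [Finset.mul_sum]
      refine Finset.sum_congr rfl fun e he => ?_
      obtain ⟨heS, hei⟩ := Finset.mem_filter.1 he
      have hye := hypos e heS
      have hγne : γ ≠ 0 := ne_of_gt hγ0
      have hyne : y e.1 ≠ 0 := ne_of_gt hye
      rw [← hei]
      simp only [hz]
      field_simp
    have hxx : ∑ e ∈ Small.filter (fun e => e.1 = i), dist e.1 e.2 * x e.1 e.2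
        = ∑ j ∈ C.filter (fun j => (i, j) ∈ Small), dist i j * x i j :=
      hfiber_fac i (fun e => dist e.1 e.2 * x e.1 e.2)
    have hκκ : γ * y i * κ = (2 - γ) * T * y i := by
      rw [hκdef]
      field_simp
    have hmul := mul_le_mul_of_nonneg_left (hsf i) (by positivity : (0:ℝ) ≤ γ * y i)
    rw [mul_add, hzz, hκκ, hxx] at hmul
    have hfull : ∑ j ∈ C.filter (fun j => (i, j) ∈ Small), dist i j * x i j
          + ∑ j ∈ C.filter (fun j => ¬ (i, j) ∈ Small), dist i j * x i j
        = ∑ j ∈ C, dist i j * x i j :=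
      Finset.sum_filter_add_sum_filter_not _ _ _
    have hload_i := hload i hi
    rw [hsplitC, hnot]
    nlinarith [hpartle, hmul]
end

section
/- Let C' be a finite subset of a metric space (X, d), let D : C' → ℝ_{≥0}, and let ρ > 0. Then there exists a subset 𝒞 ⊆ C' such that: (i) for all distinct s, v ∈ 𝒞, d(s, v) > 2ρ·max(D(s), D(v)); and (ii) for every j ∈ C' \ 𝒞 there exists s ∈ 𝒞 with D(s) ≤ D(j) and d(s, j) ≤ 2ρ·D(j). -/
/-- Existence of the set of cluster centers produced by greedily scanning the
clients in ascending order of `D`: centers are pairwise far apart (relative to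
`2ρ·max(D(s), D(v))`), and every non-center `j` has a center `s` with
`D(s) ≤ D(j)` within distance `2ρ·D(j)`. -/
theorem clustering_centers {X : Type*} [MetricSpace X] (C' : Finset X)
    (D : X → ℝ) (hD : ∀ j ∈ C', 0 ≤ D j) (ρ : ℝ) (hρ : 0 < ρ) :
    ∃ 𝒞 ⊆ C',
      (∀ s ∈ 𝒞, ∀ v ∈ 𝒞, s ≠ v → 2 * ρ * max (D s) (D v) < dist s v) ∧
      (∀ j ∈ C', j ∉ 𝒞 → ∃ s ∈ 𝒞, D s ≤ D j ∧ dist s j ≤ 2 * ρ * D j) := by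
  revert hD
  induction C' using Finset.strongInduction with
  | _ C' ih =>
    intro hD
    classical
    rcases C'.eq_empty_or_nonempty with rfl | hne
    · exact ⟨∅, by simp, by simp, by simp⟩
    obtain ⟨m, hm, hmin⟩ := C'.exists_min_image D hne
    set R := (C'.erase m).filter (fun j => 2 * ρ * D j < dist m j) with hRdef
    have hRsub : R ⊂ C' :=
      Finset.ssubset_of_subset_of_ssubset (Finset.filter_subset _ _)
        (Finset.erase_ssubset hm)
    obtain ⟨𝒞', h𝒞'sub, hpair, hcov⟩ := ih R hRsub (fun j hj => hD j (hRsub.subset hj))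
    refine ⟨insert m 𝒞', Finset.insert_subset hm (h𝒞'sub.trans hRsub.subset), ?_, ?_⟩
    · intro s hs v hv hsv
      rcases Finset.mem_insert.mp hs with rfl | hs'
      · rcases Finset.mem_insert.mp hv with rfl | hv'
        · exact absurd rfl hsv
        · have hvR := h𝒞'sub hv'
          have h1 : 2 * ρ * D v < dist s v := (Finset.mem_filter.mp hvR).2
          have h2 : D s ≤ D v := hmin v (Finset.mem_of_mem_erase (Finset.mem_filter.mp hvR).1)
          rwa [max_eq_right h2]
      · rcases Finset.mem_insert.mp hv with rfl | hv'
        · have hsR := h𝒞'sub hs'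
          have h1 : 2 * ρ * D s < dist v s := (Finset.mem_filter.mp hsR).2
          have h2 : D v ≤ D s := hmin s (Finset.mem_of_mem_erase (Finset.mem_filter.mp hsR).1)
          rwa [max_eq_left h2, dist_comm]
        · exact hpair s hs' v hv' hsv
    · intro j hj hj𝒞
      have hjm : j ≠ m := fun h => hj𝒞 (by rw [h]; exact Finset.mem_insert_self m _)
      by_cases hjR : j ∈ R
      · obtain ⟨s, hs, h1, h2⟩ := hcov j hjR (fun h => hj𝒞 (Finset.mem_insert_of_mem h))
        exact ⟨s, Finset.mem_insert_of_mem hs, h1, h2⟩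
      · refine ⟨m, Finset.mem_insert_self _ _, hmin j hj, ?_⟩
        have hnot : ¬ (2 * ρ * D j < dist m j) := fun h =>
          hjR (Finset.mem_filter.mpr ⟨Finset.mem_erase.mpr ⟨hjm, hj⟩, h⟩)
        linarith [not_lt.mp hnot]
end

section
/- Let (X, d) be a metric space, let C' ⊆ X be finite, D : C' → ℝ_{≥0}, and ρ > 0. Let 𝒞 ⊆ C' satisfy: (i) for all distinct s, v ∈ 𝒞, d(s, v) > 2ρ·max(D(s), D(v)); and (ii) for every j ∈ C' \ 𝒞 there exists s' ∈ 𝒞 with D(s') ≤ D(j) and d(s', j) ≤ 2ρ·D(j). Let i ∈ X and let N ⊆ C' be a nonempty finite set such that d(i, r) ≤ ρ·D(r) for every r ∈ N, and let j ∈ N attain the minimum of D over N. Let s ∈ 𝒞 be such that either (A) s ∈ N, or (B) N ∩ 𝒞 = ∅, D(s) ≤ D(j) and d(s, j) ≤ 2ρ·D(j). Then d(i, s) ≤ 3ρ·D(j). -/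
/-- Lemma 2 of the paper: if a facility `i` serves the set `N` of clients within
distance `ρ·D(·)`, `j` minimizes `D` over `N`, and `s` is the cluster center
assigned to `i` by the clustering procedure, then `d(i, s) ≤ 3ρ·D(j)`. -/
theorem cluster_center_distance {X : Type*} [MetricSpace X]
    (C' : Finset X) (D : X → ℝ) (hD : ∀ j ∈ C', 0 ≤ D j) (ρ : ℝ) (hρ : 0 < ρ)
    (𝒞 : Finset X) (h𝒞 : 𝒞 ⊆ C')
    (hsep : ∀ s ∈ 𝒞, ∀ v ∈ 𝒞, s ≠ v → 2 * ρ * max (D s) (D v) < dist s v)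
    (hcov : ∀ j ∈ C', j ∉ 𝒞 → ∃ s' ∈ 𝒞, D s' ≤ D j ∧ dist s' j ≤ 2 * ρ * D j)
    (i : X) (N : Finset X) (hNC' : N ⊆ C') (hNne : N.Nonempty)
    (hserve : ∀ r ∈ N, dist i r ≤ ρ * D r)
    (j : X) (hjN : j ∈ N) (hjmin : ∀ r ∈ N, D j ≤ D r)
    (s : X) (hs : s ∈ 𝒞)
    (hassign : s ∈ N ∨
      ((∀ c ∈ N, c ∉ 𝒞) ∧ D s ≤ D j ∧ dist s j ≤ 2 * ρ * D j)) :
    dist i s ≤ 3 * ρ * D j := by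
  have hij : dist i j ≤ ρ * D j := hserve j hjN
  rcases hassign with hsN | ⟨hNdisj, hDs, hdsj⟩
  · have his : dist i s ≤ ρ * D s := hserve s hsN
    have hDjs : D j ≤ D s := hjmin s hsN
    by_cases hj𝒞 : j ∈ 𝒞
    · rcases eq_or_ne s j with rfl | hne
      · have h0 : 0 ≤ D s := hD s (hNC' hsN)
        nlinarith
      · exfalso
        have h1 := hsep s hs j hj𝒞 hne
        have h2 : dist s j ≤ dist s i + dist i j := dist_triangle s i j
        rw [dist_comm s i] at h2
        have hm1 : D s ≤ max (D s) (D j) := le_max_left _ _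
        have hm2 : D j ≤ max (D s) (D j) := le_max_right _ _
        nlinarith
    · obtain ⟨s', hs'𝒞, hDs', hds'j⟩ := hcov j (hNC' hjN) hj𝒞
      rcases eq_or_ne s s' with rfl | hne
      · calc dist i s ≤ dist i j + dist j s := dist_triangle i j s
          _ ≤ ρ * D j + 2 * ρ * D j := by rw [dist_comm j s]; linarith
          _ = 3 * ρ * D j := by ring
      · have h1 := hsep s hs s' hs'𝒞 hne
        have h2 : dist s s' ≤ dist s i + dist i j + dist j s' :=
          (dist_triangle s i s').trans (by linarith [dist_triangle i j s'])
        rw [dist_comm s i] at h2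
        rw [dist_comm j s'] at h2
        have hm1 : D s ≤ max (D s) (D s') := le_max_left _ _
        have hDss : D s ≤ 3 * D j := by nlinarith
        nlinarith
  · calc dist i s ≤ dist i j + dist j s := dist_triangle i j s
      _ ≤ ρ * D j + 2 * ρ * D j := by rw [dist_comm j s]; linarith
      _ = 3 * ρ * D j := by ring
end

section
/- Let (X, d) be a metric space, let C' ⊆ X be finite, D : C' → ℝ_{≥0}, and ρ > 0. Let 𝒞 ⊆ C' satisfy: (i) for all distinct s, v ∈ 𝒞, d(s, v) > 2ρ·max(D(s), D(v)); and (ii) for every j ∈ C' \ 𝒞 there exists s' ∈ 𝒞 with D(s') ≤ D(j) and d(s', j) ≤ 2ρ·D(j). Let i, h ∈ X, let N_i, N_h ⊆ C' be nonempty finite sets with d(i, r) ≤ ρ·D(r) for every r ∈ N_i and d(h, w) ≤ ρ·D(w) for every w ∈ N_h, let j ∈ N_i attain the minimum of D over N_i and let v ∈ N_h attain the minimum of D over N_h. Suppose i and h are assigned to the same center s ∈ 𝒞, where a point with served set N is assigned to s if either s ∈ N, or N ∩ 𝒞 = ∅ and D(s) is at most the minimum of D over N and d(s, ·) ≤ 2ρ·D(·)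 at that minimizer. Then d(i, h) ≤ 6ρ·max(D(j), D(v)). -/
theorem cluster_facility_key {X : Type*} [MetricSpace X]
    (C' : Finset X) (D : X → ℝ) (hD : ∀ j ∈ C', 0 ≤ D j) (ρ : ℝ) (hρ : 0 < ρ)
    (𝒞 : Finset X)
    (hsep : ∀ s ∈ 𝒞, ∀ v ∈ 𝒞, s ≠ v → 2 * ρ * max (D s) (D v) < dist s v)
    (hcov : ∀ j ∈ C', j ∉ 𝒞 → ∃ s' ∈ 𝒞, D s' ≤ D j ∧ dist s' j ≤ 2 * ρ * D j)
    (i : X) (Ni : Finset X) (hNiC' : Ni ⊆ C')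
    (hservei : ∀ r ∈ Ni, dist i r ≤ ρ * D r)
    (j : X) (hjN : j ∈ Ni) (hjmin : ∀ r ∈ Ni, D j ≤ D r)
    (s : X) (hs : s ∈ 𝒞)
    (hassigni : s ∈ Ni ∨
      ((∀ c ∈ Ni, c ∉ 𝒞) ∧ D s ≤ D j ∧ dist s j ≤ 2 * ρ * D j)) :
    dist i s ≤ 3 * ρ * D j := by
  have hDj : 0 ≤ D j := hD j (hNiC' hjN)
  have hdij : dist i j ≤ ρ * D j := hservei j hjN
  rcases hassigni with hsNi | ⟨_, hDs, hds⟩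
  · have hdis : dist i s ≤ ρ * D s := hservei s hsNi
    have hDjs : D j ≤ D s := hjmin s hsNi
    by_cases hj𝒞 : j ∈ 𝒞
    · by_cases hsj : s = j
      · subst hsj; nlinarith
      · exfalso
        have hsep1 := hsep s hs j hj𝒞 hsj
        have h1 : dist s j ≤ dist s i + dist i j := dist_triangle s i j
        rw [dist_comm s i] at h1
        have hmax : max (D s) (D j) = D s := max_eq_left hDjs
        rw [hmax] at hsep1
        nlinarith
    · obtain ⟨s', hs'𝒞, hDs', hds'⟩ := hcov j (hNiC' hjN) hj𝒞
      by_cases hss' : s = s'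
      · subst hss'; nlinarith
      · have hsep1 := hsep s hs s' hs'𝒞 hss'
        have htri : dist s s' ≤ dist s i + dist i j + dist j s' :=
          dist_triangle4 s i j s'
        rw [dist_comm s i, dist_comm j s'] at htri
        have hmax : D s ≤ max (D s) (D s') := le_max_left _ _
        nlinarith
  · calc dist i s ≤ dist i j + dist j s := dist_triangle _ _ _
      _ ≤ ρ * D j + 2 * ρ * D j := by
          rw [dist_comm j s]; exact add_le_add hdij hds
      _ = 3 * ρ * D j := by ring


/-- Corollary 1 of the paper: if facilities `i` and `h` are assigned to the same
cluster center `s`, then `d(i, h) ≤ 6ρ·max(D(j), D(v))`, where `j` and `v`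
minimize `D` over the served sets `N_i` and `N_h` respectively. -/
theorem cluster_facility_distance {X : Type*} [MetricSpace X]
    (C' : Finset X) (D : X → ℝ) (hD : ∀ j ∈ C', 0 ≤ D j) (ρ : ℝ) (hρ : 0 < ρ)
    (𝒞 : Finset X) (h𝒞 : 𝒞 ⊆ C')
    (hsep : ∀ s ∈ 𝒞, ∀ v ∈ 𝒞, s ≠ v → 2 * ρ * max (D s) (D v) < dist s v)
    (hcov : ∀ j ∈ C', j ∉ 𝒞 → ∃ s' ∈ 𝒞, D s' ≤ D j ∧ dist s' j ≤ 2 * ρ * D j)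
    (i h : X) (Ni Nh : Finset X) (hNiC' : Ni ⊆ C') (hNhC' : Nh ⊆ C')
    (hNine : Ni.Nonempty) (hNhne : Nh.Nonempty)
    (hservei : ∀ r ∈ Ni, dist i r ≤ ρ * D r)
    (hserveh : ∀ w ∈ Nh, dist h w ≤ ρ * D w)
    (j : X) (hjN : j ∈ Ni) (hjmin : ∀ r ∈ Ni, D j ≤ D r)
    (v : X) (hvN : v ∈ Nh) (hvmin : ∀ w ∈ Nh, D v ≤ D w)
    (s : X) (hs : s ∈ 𝒞)
    (hassigni : s ∈ Ni ∨
      ((∀ c ∈ Ni, c ∉ 𝒞) ∧ D s ≤ D j ∧ dist s j ≤ 2 * ρ * D j))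
    (hassignh : s ∈ Nh ∨
      ((∀ c ∈ Nh, c ∉ 𝒞) ∧ D s ≤ D v ∧ dist s v ≤ 2 * ρ * D v)) :
    dist i h ≤ 6 * ρ * max (D j) (D v) := by
  have h1 : dist i s ≤ 3 * ρ * D j :=
    cluster_facility_key C' D hD ρ hρ 𝒞 hsep hcov i Ni hNiC' hservei j hjN hjmin s hs hassigni
  have h2 : dist h s ≤ 3 * ρ * D v :=
    cluster_facility_key C' D hD ρ hρ 𝒞 hsep hcov h Nh hNhC' hserveh v hvN hvmin s hs hassignh
  have htri : dist i h ≤ dist i s + dist h s := by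
    rw [dist_comm h s]; exact dist_triangle i s h
  have hj : D j ≤ max (D j) (D v) := le_max_left _ _
  have hv : D v ≤ max (D j) (D v) := le_max_right _ _
  nlinarith
end

section
/- Let (X, d) be a metric space, let i, h ∈ X, let N be a finite set of points of X, and let T > 0, ν > 0, ρ > 0, λ > 0, y' ≥ 0, m ≥ 0 and an integer K ≥ 1 be given. Let x' : N → ℝ_{≥0} satisfy x'_r ≤ y' for every r ∈ N, ∑_{r ∈ N} d(i, r)·x'_r ≤ ν·T·y', d(h, i) ≤ 6ρ·m, and |N|·m ≤ λ·T. Then (1/K)·∑_{r ∈ N} d(h, r)·x'_r ≤ (y'/K)·(ν + 6ρλ)·T. -/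
/-- Bound on the additional load incurred by facility `h` when the closed
facility `i`, serving clients `N` with fractions `x'` and opening `y'`, is
rerouted to `h` (one of `K` opened facilities in the cluster):
`(1/K)·∑_{r ∈ N} d(h,r)·x'_r ≤ (y'/K)·(ν + 6ρλ)·T`. -/
theorem rerouting_additional_load {X : Type*} [MetricSpace X]
    (i h : X) (N : Finset X) (T ν ρ lam y' m : ℝ) (K : ℕ)
    (hT : 0 < T) (hν : 0 < ν) (hρ : 0 < ρ) (hlam : 0 < lam)
    (hy' : 0 ≤ y') (hm : 0 ≤ m) (hK : 1 ≤ K)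
    (x' : X → ℝ) (hx'0 : ∀ r ∈ N, 0 ≤ x' r) (hx'y : ∀ r ∈ N, x' r ≤ y')
    (hload : ∑ r ∈ N, dist i r * x' r ≤ ν * T * y')
    (hdhi : dist h i ≤ 6 * ρ * m)
    (hNm : (N.card : ℝ) * m ≤ lam * T) :
    (1 / (K : ℝ)) * ∑ r ∈ N, dist h r * x' r ≤ (y' / K) * (ν + 6 * ρ * lam) * T := by
  have hKpos : (0:ℝ) < K := by exact_mod_cast Nat.lt_of_lt_of_le Nat.zero_lt_one hK
  have key : ∑ r ∈ N, dist h r * x' r ≤ y' * (ν + 6 * ρ * lam) * T := by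
    have step1 : ∑ r ∈ N, dist h r * x' r
        ≤ ∑ r ∈ N, (dist h i * x' r + dist i r * x' r) := by
      apply Finset.sum_le_sum
      intro r hr
      have := dist_triangle h i r
      nlinarith [hx'0 r hr]
    have step2 : ∑ r ∈ N, (dist h i * x' r + dist i r * x' r)
        = dist h i * ∑ r ∈ N, x' r + ∑ r ∈ N, dist i r * x' r := by
      rw [Finset.sum_add_distrib, Finset.mul_sum]
    have hsum : ∑ r ∈ N, x' r ≤ (N.card : ℝ) * y' := by
      calc ∑ r ∈ N, x' r ≤ ∑ r ∈ N, y' := Finset.sum_le_sum hx'y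
        _ = (N.card : ℝ) * y' := by rw [Finset.sum_const, nsmul_eq_mul]
    have hsum0 : 0 ≤ ∑ r ∈ N, x' r := Finset.sum_nonneg hx'0
    have h1 : dist h i * ∑ r ∈ N, x' r ≤ 6 * ρ * m * ((N.card : ℝ) * y') := by
      have hd0 : 0 ≤ dist h i := dist_nonneg
      nlinarith
    have h2 : 6 * ρ * m * ((N.card : ℝ) * y') ≤ 6 * ρ * (lam * T) * y' := by
      nlinarith [mul_le_mul_of_nonneg_left hNm (by positivity : (0:ℝ) ≤ 6 * ρ * y')]
    nlinarith [step1, step2]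
  have : (1 / (K : ℝ)) * ∑ r ∈ N, dist h r * x' r
      ≤ (1 / (K : ℝ)) * (y' * (ν + 6 * ρ * lam) * T) := by
    apply mul_le_mul_of_nonneg_left key
    positivity
  calc (1 / (K : ℝ)) * ∑ r ∈ N, dist h r * x' r
      ≤ (1 / (K : ℝ)) * (y' * (ν + 6 * ρ * lam) * T) := this
    _ = (y' / K) * (ν + 6 * ρ * lam) * T := by field_simp
end

section
/- Let F', C' be disjoint finite sets with a metric d on F' ∪ C', let ε ∈ (0, 1), T > 0, ν > 0, ρ > 0, λ > 0 and k ≥ 0. Let x' : F' × C' → ℝ_{≥0} and y' : F' → [0, 1] satisfy x'_{ij} ≤ y'_i for all i, j and ∑_{u ∈ F'} y'_u ≤ (1 + ε)·k. Let D : C' → ℝ_{≥0}, and for i ∈ F' write N'(i) := {j ∈ C' : x'_{ij} > 0} and L(i, x') := ∑_{j ∈ C'} d(i,j)·x'_{ij}. Assume: for every i ∈ F', L(i, x') ≤ ν·T·y'_i and ∑_{j ∈ N'(i)} D(j) ≤ λ·T; F' is partitioned into clusters (F'(s))_{s ∈ 𝒞} with ∑_{u ∈ F'(s)} y'_u ≥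 1/(1 + ε) for every s ∈ 𝒞; and for all i, h in the same cluster with N'(i) and N'(h) nonempty, d(i, h) ≤ 6ρ·max(min_{r ∈ N'(i)} D(r), min_{w ∈ N'(h)} D(w)). Then there exist ẏ : F' → {0, 1} and ẋ : F' × C' → ℝ_{≥0} such that: ∑_{h ∈ F'} ẏ_h ≤ (1 + 3ε)·k; ẋ_{hj} = 0 for every h with ẏ_h = 0 and every j; for every j ∈ C', ∑_{h ∈ F'} ẋ_{hj} = ∑_{i ∈ F'} x'_{ij}; and for every h with ẏ_h = 1, L(h, ẋ) ≤ 3·(ν + 4ρλ)·T. -/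
lemma exists_min_subset_rerouting {α : Type*} [DecidableEq α] (f : α → ℝ) :
    ∀ (m : ℕ) (A : Finset α), m ≤ A.card →
      ∃ O : Finset α, O ⊆ A ∧ O.card = m ∧ ∀ i ∈ O, ∀ h ∈ A \ O, f i ≤ f h := by
  intro m
  induction m with
  | zero =>
    intro A _
    exact ⟨∅, Finset.empty_subset A, Finset.card_empty, by simp⟩
  | succ m ih =>
    intro A hm
    obtain ⟨O, hOA, hcard, hmin⟩ := ih A (le_trans (Nat.le_succ m) hm)
    have hne : (A \ O).Nonempty := by
      rw [← Finset.card_pos, Finset.card_sdiff_of_subset hOA]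
      omega
    obtain ⟨h0, hh0, hmin0⟩ := Finset.exists_min_image (A \ O) f hne
    have hh0A : h0 ∈ A := (Finset.mem_sdiff.mp hh0).1
    have hh0O : h0 ∉ O := (Finset.mem_sdiff.mp hh0).2
    refine ⟨insert h0 O, Finset.insert_subset hh0A hOA, ?_, ?_⟩
    · rw [Finset.card_insert_of_notMem hh0O, hcard]
    · intro i hi h hh
      have hhO : h ∈ A \ O := by
        rw [Finset.mem_sdiff] at hh ⊢
        exact ⟨hh.1, fun hO => hh.2 (Finset.mem_insert_of_mem hO)⟩
      rcases Finset.mem_insert.mp hi with rfl | hiO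
      · exact hmin0 h hhO
      · exact hmin i hiO h hhO

/-- The rerouting step (Lemma 3 of the paper): given the clustered solution, one
can open facilities integrally (at most `(1+3ε)k` in total) and redistribute the
demand of closed facilities so that every client keeps its total assignment and
every opened facility has load at most `3(ν + 4ρλ)T`. -/
theorem rerouting {X : Type*} [MetricSpace X]
    (F' C' : Finset X) (hFC : Disjoint F' C')
    (ε T ν ρ lam k : ℝ) (hε0 : 0 < ε) (hε1 : ε < 1) (hT : 0 < T)
    (hν : 0 < ν) (hρ : 0 < ρ) (hlam : 0 < lam) (hk : 0 ≤ k)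
    (x' : X → X → ℝ) (y' : X → ℝ)
    (hx'0 : ∀ i ∈ F', ∀ j ∈ C', 0 ≤ x' i j)
    (hy'01 : ∀ i ∈ F', y' i ∈ Set.Icc (0 : ℝ) 1)
    (hxy : ∀ i ∈ F', ∀ j ∈ C', x' i j ≤ y' i)
    (hytot : ∑ u ∈ F', y' u ≤ (1 + ε) * k)
    (D : X → ℝ) (hD : ∀ j ∈ C', 0 ≤ D j)
    (hload : ∀ i ∈ F', ∑ j ∈ C', dist i j * x' i j ≤ ν * T * y' i)
    (hlight : ∀ i ∈ F', ∑ j ∈ C'.filter (fun j => 0 < x' i j), D j ≤ lam * T)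
    (𝒞 : Finset X) (Fc : X → Finset X)
    (hFcsub : ∀ s ∈ 𝒞, Fc s ⊆ F')
    (hFcdisj : ∀ s ∈ 𝒞, ∀ v ∈ 𝒞, s ≠ v → Disjoint (Fc s) (Fc v))
    (hFccover : ∀ i ∈ F', ∃ s ∈ 𝒞, i ∈ Fc s)
    (hFcopen : ∀ s ∈ 𝒞, 1 / (1 + ε) ≤ ∑ u ∈ Fc s, y' u)
    (hclose : ∀ s ∈ 𝒞, ∀ i ∈ Fc s, ∀ h ∈ Fc s,
      ∀ (hi : (C'.filter fun j => 0 < x' i j).Nonempty)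
        (hh : (C'.filter fun j => 0 < x' h j).Nonempty),
        dist i h ≤ 6 * ρ *
          max ((C'.filter fun j => 0 < x' i j).inf' hi D)
            ((C'.filter fun j => 0 < x' h j).inf' hh D)) :
    ∃ (ydot : X → ℝ) (xdot : X → X → ℝ),
      (∀ i ∈ F', ydot i = 0 ∨ ydot i = 1) ∧
      (∑ h ∈ F', ydot h ≤ (1 + 3 * ε) * k) ∧
      (∀ h ∈ F', ydot h = 0 → ∀ j ∈ C', xdot h j = 0) ∧
      (∀ i ∈ F', ∀ j ∈ C', 0 ≤ xdot i j) ∧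
      (∀ j ∈ C', ∑ h ∈ F', xdot h j = ∑ i ∈ F', x' i j) ∧
      (∀ h ∈ F', ydot h = 1 →
        ∑ j ∈ C', dist h j * xdot h j ≤ 3 * (ν + 4 * ρ * lam) * T) := by
  classical
  have hε' : (0:ℝ) < 1 + ε := by linarith
  -- cluster map
  have hcov : ∀ i : X, ∃ s : X, i ∈ F' → s ∈ 𝒞 ∧ i ∈ Fc s := by
    intro i
    by_cases h : i ∈ F'
    · obtain ⟨s, hs, his⟩ := hFccover i h
      exact ⟨s, fun _ => ⟨hs, his⟩⟩
    · exact ⟨i, fun h' => absurd h' h⟩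
  choose cl hcl using hcov
  have hclF : ∀ s ∈ 𝒞, ∀ h ∈ Fc s, cl h = s := by
    intro s hs h hh
    have hhF : h ∈ F' := hFcsub s hs hh
    obtain ⟨hcs, hmem⟩ := hcl h hhF
    by_contra hne
    exact (Finset.disjoint_left.mp (hFcdisj _ hcs _ hs hne) hmem) hh
  set md : X → ℝ := fun i =>
    if h : (C'.filter fun j => 0 < x' i j).Nonempty
    then (C'.filter fun j => 0 < x' i j).inf' h D else 0 with hmd
  set A : X → Finset X := fun s =>
    (Fc s).filter fun i => (C'.filter fun j => 0 < x' i j).Nonempty with hA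
  set n : X → ℕ := fun s => ⌊(1 + ε) * ∑ u ∈ Fc s, y' u⌋₊ with hn
  have hOex : ∀ s : X, ∃ O : Finset X, O ⊆ A s ∧ O.card = min (n s) (A s).card ∧
      ∀ i ∈ O, ∀ h ∈ A s \ O, md i ≤ md h :=
    fun s => exists_min_subset_rerouting md _ _ (min_le_right _ _)
  choose O hOsub hOcard hOmin using hOex
  have hOFc : ∀ s : X, O s ⊆ Fc s :=
    fun s => (hOsub s).trans (Finset.filter_subset _ _)
  have hYpos : ∀ s ∈ 𝒞, 0 < ∑ u ∈ Fc s, y' u := by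
    intro s hs
    have := hFcopen s hs
    have h1 : (0:ℝ) < 1 / (1 + ε) := by positivity
    linarith
  have hn1 : ∀ s ∈ 𝒞, 1 ≤ n s := by
    intro s hs
    apply Nat.le_floor
    rw [Nat.cast_one]
    calc (1:ℝ) = (1 + ε) * (1 / (1 + ε)) := by field_simp
    _ ≤ (1 + ε) * ∑ u ∈ Fc s, y' u := by
        apply mul_le_mul_of_nonneg_left (hFcopen s hs) (le_of_lt hε')
  have hFbi : F' = 𝒞.biUnion Fc := by
    apply Finset.Subset.antisymm
    · intro i hi
      obtain ⟨s, hs, his⟩ := hFccover i hi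
      exact Finset.mem_biUnion.mpr ⟨s, hs, his⟩
    · intro i hi
      obtain ⟨s, hs, his⟩ := Finset.mem_biUnion.mp hi
      exact hFcsub s hs his
  have hFsum : ∀ g : X → ℝ, ∑ h ∈ F', g h = ∑ s ∈ 𝒞, ∑ h ∈ Fc s, g h := by
    intro g
    rw [hFbi]
    exact Finset.sum_biUnion fun s hs v hv hsv =>
      hFcdisj s (Finset.mem_coe.mp hs) v (Finset.mem_coe.mp hv) hsv
  refine ⟨fun h => if h ∈ F' ∧ h ∈ O (cl h) then 1 else 0,
    fun h j => if h ∈ F' ∧ h ∈ O (cl h)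
      then x' h j + ((O (cl h)).card : ℝ)⁻¹ * ∑ i ∈ A (cl h) \ O (cl h), x' i j
      else 0, ?_, ?_, ?_, ?_, ?_, ?_⟩
  · intro i _
    by_cases h : i ∈ F' ∧ i ∈ O (cl i) <;> simp [h]
  · -- cardinality bound
    have hsum1 : ∀ s ∈ 𝒞, ∑ h ∈ Fc s,
        (if h ∈ F' ∧ h ∈ O (cl h) then (1:ℝ) else 0) = ((O s).card : ℝ) := by
      intro s hs
      have hcongr : ∀ h ∈ Fc s,
          (if h ∈ F' ∧ h ∈ O (cl h) then (1:ℝ) else 0) = if h ∈ O s then 1 else 0 := by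
        intro h hh
        rw [hclF s hs h hh]
        simp [hFcsub s hs hh]
      rw [Finset.sum_congr rfl hcongr, Finset.sum_ite_mem,
        Finset.inter_eq_right.mpr (hOFc s)]
      simp
    have hkey : ∀ s ∈ 𝒞, ((O s).card : ℝ) ≤ (1 + ε) * ∑ u ∈ Fc s, y' u := by
      intro s hs
      have h1 : ((O s).card : ℝ) ≤ (n s : ℝ) := by
        exact_mod_cast (hOcard s ▸ min_le_left (n s) (A s).card)
      refine h1.trans ?_
      rw [hn]
      exact Nat.floor_le (le_of_lt (mul_pos hε' (hYpos s hs)))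
    rw [hFsum, Finset.sum_congr rfl hsum1]
    calc ∑ s ∈ 𝒞, ((O s).card : ℝ)
        ≤ ∑ s ∈ 𝒞, (1 + ε) * ∑ u ∈ Fc s, y' u := Finset.sum_le_sum hkey
      _ = (1 + ε) * ∑ h ∈ F', y' h := by rw [hFsum y', Finset.mul_sum]
      _ ≤ (1 + ε) * ((1 + ε) * k) :=
          mul_le_mul_of_nonneg_left hytot (le_of_lt hε')
      _ ≤ (1 + 3 * ε) * k := by
          nlinarith [mul_nonneg (mul_nonneg hε0.le (by linarith : (0:ℝ) ≤ 1 - ε)) hk]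
  · -- closed ⇒ no assignment
    intro h _ hy j _
    by_cases hc : h ∈ F' ∧ h ∈ O (cl h)
    · simp [hc] at hy
    · simp [hc]
  · -- nonnegativity
    intro i hi j hj
    by_cases hc : i ∈ F' ∧ i ∈ O (cl i)
    · simp only [hc, if_true]
      have h1 : 0 ≤ x' i j := hx'0 i hi j hj
      have h2 : 0 ≤ ∑ u ∈ A (cl i) \ O (cl i), x' u j := by
        apply Finset.sum_nonneg
        intro u hu
        have huF : u ∈ F' := hFcsub (cl i) (hcl i hi).1
          ((Finset.filter_subset _ _) (Finset.mem_sdiff.mp hu).1)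
        exact hx'0 u huF j hj
      positivity
    · simp [hc]
  · -- conservation
    intro j hj
    rw [hFsum, hFsum (fun i => x' i j)]
    apply Finset.sum_congr rfl
    intro s hs
    have hcongr : ∀ h ∈ Fc s,
        (if h ∈ F' ∧ h ∈ O (cl h)
          then x' h j + ((O (cl h)).card:ℝ)⁻¹ * ∑ i ∈ A (cl h) \ O (cl h), x' i j
          else 0)
        = (if h ∈ O s
            then x' h j + ((O s).card:ℝ)⁻¹ * ∑ i ∈ A s \ O s, x' i j else 0) := by
      intro h hh
      rw [hclF s hs h hh]
      by_cases hO : h ∈ O s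
      · simp [hO, hFcsub s hs hh]
      · simp [hO]
    rw [Finset.sum_congr rfl hcongr, Finset.sum_ite_mem,
      Finset.inter_eq_right.mpr (hOFc s), Finset.sum_add_distrib, Finset.sum_const,
      nsmul_eq_mul]
    have hAsum : ∑ i ∈ A s, x' i j = ∑ i ∈ Fc s, x' i j := by
      apply Finset.sum_filter_of_ne
      intro i hi hne
      have hpos : 0 < x' i j :=
        lt_of_le_of_ne (hx'0 i (hFcsub s hs hi) j hj) (Ne.symm hne)
      exact ⟨j, Finset.mem_filter.mpr ⟨hj, hpos⟩⟩
    rw [← hAsum, ← Finset.sum_sdiff (hOsub s)]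
    rcases Nat.eq_zero_or_pos (O s).card with h0 | hpos
    · have hA0 : (A s).card = 0 := by
        have hm := hOcard s
        have hn1' := hn1 s hs
        omega
      have hAe : A s = ∅ := Finset.card_eq_zero.mp hA0
      simp [hAe, h0]
    · have hcne : ((O s).card : ℝ) ≠ 0 := by
        exact_mod_cast Nat.pos_iff_ne_zero.mp hpos
      rw [← mul_assoc, mul_inv_cancel₀ hcne, one_mul]
      ring
  · -- load bound
    intro h hhF hy1
    have hcond : h ∈ F' ∧ h ∈ O (cl h) := by
      by_contra hc
      simp only [hc, if_false] at hy1
      norm_num at hy1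
    set s := cl h with hs_def
    have hs : s ∈ 𝒞 := (hcl h hhF).1
    have hhO : h ∈ O s := hcond.2
    have hhA : h ∈ A s := hOsub s hhO
    have hhFc : h ∈ Fc s := (Finset.filter_subset _ _) hhA
    have hhNe : (C'.filter fun j => 0 < x' h j).Nonempty := by
      have := Finset.mem_filter.mp hhA
      exact this.2
    have hc0 : (0:ℝ) ≤ (ν + 6 * ρ * lam) * T := by nlinarith [mul_pos hρ hlam]
    -- key per-facility bound for closed facilities
    have hkey : ∀ i ∈ A s \ O s,
        ∑ j ∈ C', dist h j * x' i j ≤ (ν + 6 * ρ * lam) * T * y' i := by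
      intro i hi
      have hiA : i ∈ A s := (Finset.mem_sdiff.mp hi).1
      have hiFc : i ∈ Fc s := (Finset.filter_subset _ _) hiA
      have hiF : i ∈ F' := hFcsub s hs hiFc
      have hiNe : (C'.filter fun j => 0 < x' i j).Nonempty := by
        have := Finset.mem_filter.mp hiA
        exact this.2
      have h2 : md h ≤ md i := hOmin s h hhO i hi
      simp only [hmd] at h2
      rw [dif_pos hhNe, dif_pos hiNe] at h2
      have hdist : dist i h ≤
          6 * ρ * (C'.filter fun j => 0 < x' i j).inf' hiNe D := by
        have h1 := hclose s hs i hiFc h hhFc hiNe hhNe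
        rwa [max_eq_left h2] at h1
      have hptw : ∀ j ∈ C',
          dist h j * x' i j ≤ dist i j * x' i j + 6 * ρ * (D j * x' i j) := by
        intro j hj
        rcases lt_or_eq_of_le (hx'0 i hiF j hj) with hpos | heq
        · have hjmem : j ∈ C'.filter fun j' => 0 < x' i j' :=
            Finset.mem_filter.mpr ⟨hj, hpos⟩
          have hinfle : (C'.filter fun j' => 0 < x' i j').inf' hiNe D ≤ D j :=
            Finset.inf'_le D hjmem
          have htri : dist h j ≤ dist i h + dist i j := by
            rw [dist_comm i h]
            exact dist_triangle h i j
          have hd2 : dist i h ≤ 6 * ρ * D j := by nlinarith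
          calc dist h j * x' i j
              ≤ (dist i h + dist i j) * x' i j :=
                mul_le_mul_of_nonneg_right htri hpos.le
            _ = dist i h * x' i j + dist i j * x' i j := by ring
            _ ≤ 6 * ρ * D j * x' i j + dist i j * x' i j := by
                have := mul_le_mul_of_nonneg_right hd2 hpos.le
                linarith
            _ = dist i j * x' i j + 6 * ρ * (D j * x' i j) := by ring
        · rw [← heq]
          simp
      have hDx : ∑ j ∈ C', D j * x' i j ≤ lam * T * y' i := by
        have hy0 : 0 ≤ y' i := (hy'01 i hiF).1
        have e1 : ∑ j ∈ C'.filter (fun j => 0 < x' i j), D j * x' i j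
            = ∑ j ∈ C', D j * x' i j := by
          apply Finset.sum_filter_of_ne
          intro j hj hne
          rcases lt_or_eq_of_le (hx'0 i hiF j hj) with hpos | heq
          · exact hpos
          · exact absurd (by rw [← heq, mul_zero]) hne
        rw [← e1]
        calc ∑ j ∈ C'.filter (fun j => 0 < x' i j), D j * x' i j
            ≤ ∑ j ∈ C'.filter (fun j => 0 < x' i j), D j * y' i := by
              apply Finset.sum_le_sum
              intro j hj
              exact mul_le_mul_of_nonneg_left
                (hxy i hiF j (Finset.mem_filter.mp hj).1)
                (hD j (Finset.mem_filter.mp hj).1)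
          _ = (∑ j ∈ C'.filter (fun j => 0 < x' i j), D j) * y' i := by
              rw [← Finset.sum_mul]
          _ ≤ lam * T * y' i :=
              mul_le_mul_of_nonneg_right (hlight i hiF) hy0
      calc ∑ j ∈ C', dist h j * x' i j
          ≤ ∑ j ∈ C', (dist i j * x' i j + 6 * ρ * (D j * x' i j)) :=
            Finset.sum_le_sum hptw
        _ = (∑ j ∈ C', dist i j * x' i j) + 6 * ρ * ∑ j ∈ C', D j * x' i j := by
            rw [Finset.sum_add_distrib, Finset.mul_sum]
        _ ≤ ν * T * y' i + 6 * ρ * (lam * T * y' i) := by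
            have h1 := hload i hiF
            have h6 : (0:ℝ) ≤ 6 * ρ := by positivity
            nlinarith [mul_le_mul_of_nonneg_left hDx h6]
        _ = (ν + 6 * ρ * lam) * T * y' i := by ring
    have hsumCls : ∑ i ∈ A s \ O s, ∑ j ∈ C', dist h j * x' i j
        ≤ (ν + 6 * ρ * lam) * T * ∑ u ∈ Fc s, y' u := by
      calc ∑ i ∈ A s \ O s, ∑ j ∈ C', dist h j * x' i j
          ≤ ∑ i ∈ A s \ O s, (ν + 6 * ρ * lam) * T * y' i :=
            Finset.sum_le_sum hkey
        _ = (ν + 6 * ρ * lam) * T * ∑ i ∈ A s \ O s, y' i := by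
            rw [Finset.mul_sum]
        _ ≤ (ν + 6 * ρ * lam) * T * ∑ u ∈ Fc s, y' u := by
            apply mul_le_mul_of_nonneg_left _ hc0
            apply Finset.sum_le_sum_of_subset_of_nonneg
            · exact (Finset.sdiff_subset).trans (Finset.filter_subset _ _)
            · intro u hu _
              exact (hy'01 u (hFcsub s hs hu)).1
    have hcS : ((O s).card:ℝ)⁻¹ * ∑ i ∈ A s \ O s, ∑ j ∈ C', dist h j * x' i j
        ≤ 2 * ((ν + 6 * ρ * lam) * T) := by
      rcases Finset.eq_empty_or_nonempty (A s \ O s) with hemp | hne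
      · rw [hemp]
        simp only [Finset.sum_empty, mul_zero]
        nlinarith
      · have hlt : (O s).card < (A s).card := by
          obtain ⟨i0, hi0⟩ := hne
          apply Finset.card_lt_card
          rw [Finset.ssubset_iff_of_subset (hOsub s)]
          exact ⟨i0, (Finset.mem_sdiff.mp hi0).1, (Finset.mem_sdiff.mp hi0).2⟩
        have hOn : (O s).card = n s := by
          have hm := hOcard s
          omega
        have hY2 : ∑ u ∈ Fc s, y' u ≤ 2 * ((O s).card : ℝ) := by
          have h1 : (1 + ε) * ∑ u ∈ Fc s, y' u < (n s : ℝ) + 1 := by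
            rw [hn]
            exact_mod_cast Nat.lt_floor_add_one ((1 + ε) * ∑ u ∈ Fc s, y' u)
          have h2 : (1:ℝ) ≤ (n s : ℝ) := by exact_mod_cast hn1 s hs
          have hYp := hYpos s hs
          rw [hOn]
          nlinarith [mul_pos hε0 hYp]
        have hcpos : (0:ℝ) < ((O s).card : ℝ) := by
          rw [hOn]
          exact_mod_cast lt_of_lt_of_le Nat.zero_lt_one (hn1 s hs)
        calc ((O s).card:ℝ)⁻¹ * ∑ i ∈ A s \ O s, ∑ j ∈ C', dist h j * x' i j
            ≤ ((O s).card:ℝ)⁻¹ * ((ν + 6 * ρ * lam) * T * ∑ u ∈ Fc s, y' u) :=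
              mul_le_mul_of_nonneg_left hsumCls (inv_nonneg.mpr hcpos.le)
          _ ≤ ((O s).card:ℝ)⁻¹ * ((ν + 6 * ρ * lam) * T * (2 * ((O s).card : ℝ))) := by
              apply mul_le_mul_of_nonneg_left _ (inv_nonneg.mpr hcpos.le)
              exact mul_le_mul_of_nonneg_left hY2 hc0
          _ = 2 * ((ν + 6 * ρ * lam) * T) := by
              field_simp
    have hrw : ∀ j ∈ C',
        dist h j * (if h ∈ F' ∧ h ∈ O (cl h)
          then x' h j + ((O (cl h)).card:ℝ)⁻¹ * ∑ i ∈ A (cl h) \ O (cl h), x' i j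
          else 0)
        = dist h j * x' h j
          + ((O s).card:ℝ)⁻¹ * ∑ i ∈ A s \ O s, dist h j * x' i j := by
      intro j hj
      rw [if_pos hcond, ← Finset.mul_sum]
      ring
    rw [Finset.sum_congr rfl hrw, Finset.sum_add_distrib, ← Finset.mul_sum,
      Finset.sum_comm]
    have hLh : ∑ j ∈ C', dist h j * x' h j ≤ ν * T := by
      have h1 := hload h hhF
      have hy1' := (hy'01 h hhF).2
      have h2 : ν * T * y' h ≤ ν * T * 1 :=
        mul_le_mul_of_nonneg_left hy1' (mul_pos hν hT).le
      linarith
    nlinarith [hLh, hcS]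
end

section
/- Let ε ∈ (0, 1) and set ρ := (1 + ε)²/ε². Let F' be a finite set, let j be a client, let d_i ≥ 0 for i ∈ F' (the distance from facility i to j), and let x'_i ≥ 0 for i ∈ F' with ∑_{i ∈ F'} x'_i ≤ 1 and ∑_{i ∈ F'} x'_i ≥ ε/(1 + ε). Set D := ∑_{i ∈ F'} d_i·x'_i and F'_j := {i ∈ F' : d_i ≤ ρ·D}. Then ∑_{i ∈ F'_j} x'_i ≥ ε/(1 + ε)² = 1/(ρε). -/
/-- Lemma 5 of the paper (filtering for MSSC): if a client retains at least an
`ε/(1+ε)` fraction of its demand, then the facilities within distance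
`ρ·D` of it (where `ρ = (1+ε)²/ε²` and `D` is the average facility distance)
serve at least an `ε/(1+ε)² = 1/(ρε)` fraction of its demand. -/
theorem filtering_demand {ι : Type*} (F' : Finset ι)
    (ε : ℝ) (hε0 : 0 < ε) (hε1 : ε < 1)
    (ρ : ℝ) (hρ : ρ = (1 + ε) ^ 2 / ε ^ 2)
    (d : ι → ℝ) (hd : ∀ i ∈ F', 0 ≤ d i)
    (x' : ι → ℝ) (hx0 : ∀ i ∈ F', 0 ≤ x' i)
    (hx1 : ∑ i ∈ F', x' i ≤ 1)
    (hxlow : ε / (1 + ε) ≤ ∑ i ∈ F', x' i) :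
    ε / (1 + ε) ^ 2 ≤
      ∑ i ∈ F'.filter (fun i => d i ≤ ρ * ∑ u ∈ F', d u * x' u), x' i ∧
    ε / (1 + ε) ^ 2 = 1 / (ρ * ε) := by
  have h1ε : (0:ℝ) < 1 + ε := by linarith
  set D := ∑ u ∈ F', d u * x' u with hD
  have hDnn : 0 ≤ D := Finset.sum_nonneg fun i hi => mul_nonneg (hd i hi) (hx0 i hi)
  have hρpos : 0 < ρ := by rw [hρ]; positivity
  have hfarle : ∑ i ∈ F'.filter (fun i => ¬ d i ≤ ρ * D), x' i ≤ 1 / ρ := by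
    rcases eq_or_lt_of_le hDnn with h0 | hpos
    · have hz : ∑ i ∈ F'.filter (fun i => ¬ d i ≤ ρ * D), x' i = 0 := by
        apply Finset.sum_eq_zero
        intro i hi
        rw [Finset.mem_filter] at hi
        obtain ⟨hiF, hdi⟩ := hi
        push_neg at hdi
        have hdipos : 0 < d i := by nlinarith
        have hle : d i * x' i ≤ D :=
          Finset.single_le_sum (fun k hk => mul_nonneg (hd k hk) (hx0 k hk)) hiF
        nlinarith [hx0 i hiF]
      rw [hz]; positivity
    · have key : ρ * D * ∑ i ∈ F'.filter (fun i => ¬ d i ≤ ρ * D), x' i ≤ D := by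
        calc ρ * D * ∑ i ∈ F'.filter (fun i => ¬ d i ≤ ρ * D), x' i
            = ∑ i ∈ F'.filter (fun i => ¬ d i ≤ ρ * D), ρ * D * x' i := by
              rw [Finset.mul_sum]
          _ ≤ ∑ i ∈ F'.filter (fun i => ¬ d i ≤ ρ * D), d i * x' i := by
              apply Finset.sum_le_sum
              intro i hi
              rw [Finset.mem_filter] at hi
              obtain ⟨hiF, hdi⟩ := hi
              push_neg at hdi
              exact mul_le_mul_of_nonneg_right hdi.le (hx0 i hiF)
          _ ≤ D := by
              apply Finset.sum_le_sum_of_subset_of_nonneg (Finset.filter_subset _ _)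
              intro i hi _
              exact mul_nonneg (hd i hi) (hx0 i hi)
      rw [le_div_iff₀ hρpos]
      nlinarith
    -- end
  have hsplit : ∑ i ∈ F', x' i
      = ∑ i ∈ F'.filter (fun i => d i ≤ ρ * D), x' i
        + ∑ i ∈ F'.filter (fun i => ¬ d i ≤ ρ * D), x' i :=
    (Finset.sum_filter_add_sum_filter_not F' _ _).symm
  have h1ρ : 1 / ρ = ε ^ 2 / (1 + ε) ^ 2 := by
    rw [hρ]; field_simp
  have hkey : ε / (1 + ε) - ε ^ 2 / (1 + ε) ^ 2 = ε / (1 + ε) ^ 2 := by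
    field_simp; ring
  constructor
  · linarith
  · rw [hρ]; field_simp
end

section
/- Let F', C' be disjoint finite sets with a metric d on F' ∪ C', let ε ∈ (0, 1), T > 0 and k ≥ 0, and set ρ := (1 + ε)²/ε² and λ := ε²/15. Let x' : F' × C' → [0, 1] and y' : F' → [0, 1] satisfy: x'_{ij} ≤ y'_i for all i, j; ∑_{i ∈ F'} x'_{ij} ≥ ε/(1 + ε) and ∑_{i ∈ F'} x'_{ij} ≤ 1 for every j ∈ C'; ∑_{i ∈ F'} y'_i ≤ k; and, writing D(j) := ∑_{i ∈ F'} d(i,j)·x'_{ij} and N'(i) := {j ∈ C' : x'_{ij} > 0}, ∑_{j ∈ N'(i)} D(j) ≤ λ·T for every i ∈ F'. Then there exist x̂ : F' × C' → [0, 1] and ŷ : F' → [0, 1] such that: ∑_{i ∈ F'} ŷ_i ≤ ρε·k; x̂_{ij} ≤ ŷ_i for all i, j; if x̂_{ij} > 0 then x'_{ij} > 0 and d(i,j) ≤ ρ·D(j); for every j ∈ C', ∑_{i ∈ F'} x̂_{ij} = 1 and ∑_{i : x̂_{ij} > 0} ŷ_i ≥ 1; and for every i ∈ F', ∑_{j ∈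 C'} d(i,j)·x̂_{ij} ≤ ρλ·T·ŷ_i = ((1 + ε)²/15)·T·ŷ_i. -/
/-- The filtering step of the MSSC algorithm: from `(x', y')` over the non-heavy
facilities one obtains `(x̂, ŷ)` with total opening at most `ρε·k`, full demand
for every client, unit total opening over each client's serving facilities,
assignments only to nearby facilities, and loads at most
`ρλ·T·ŷ_i = ((1+ε)²/15)·T·ŷ_i`. -/
theorem mssc_filtering {X : Type*} [MetricSpace X]
    (F' C' : Finset X) (hFC : Disjoint F' C')
    (ε T k : ℝ) (hε0 : 0 < ε) (hε1 : ε < 1) (hT : 0 < T) (hk : 0 ≤ k)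
    (ρ lam : ℝ) (hρ : ρ = (1 + ε) ^ 2 / ε ^ 2) (hlam : lam = ε ^ 2 / 15)
    (x' : X → X → ℝ) (y' : X → ℝ)
    (hx'01 : ∀ i ∈ F', ∀ j ∈ C', x' i j ∈ Set.Icc (0 : ℝ) 1)
    (hy'01 : ∀ i ∈ F', y' i ∈ Set.Icc (0 : ℝ) 1)
    (hxy : ∀ i ∈ F', ∀ j ∈ C', x' i j ≤ y' i)
    (hdlow : ∀ j ∈ C', ε / (1 + ε) ≤ ∑ i ∈ F', x' i j)
    (hdhigh : ∀ j ∈ C', ∑ i ∈ F', x' i j ≤ 1)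
    (hytot : ∑ i ∈ F', y' i ≤ k)
    (hlight : ∀ i ∈ F',
      ∑ j ∈ C'.filter (fun j => 0 < x' i j), (∑ u ∈ F', dist u j * x' u j) ≤ lam * T) :
    ∃ (xh : X → X → ℝ) (yh : X → ℝ),
      (∀ i ∈ F', ∀ j ∈ C', xh i j ∈ Set.Icc (0 : ℝ) 1) ∧
      (∀ i ∈ F', yh i ∈ Set.Icc (0 : ℝ) 1) ∧
      (∑ i ∈ F', yh i ≤ ρ * ε * k) ∧
      (∀ i ∈ F', ∀ j ∈ C', xh i j ≤ yh i) ∧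
      (∀ i ∈ F', ∀ j ∈ C', 0 < xh i j →
        0 < x' i j ∧ dist i j ≤ ρ * ∑ u ∈ F', dist u j * x' u j) ∧
      (∀ j ∈ C', ∑ i ∈ F', xh i j = 1) ∧
      (∀ j ∈ C', 1 ≤ ∑ i ∈ F'.filter (fun i => 0 < xh i j), yh i) ∧
      (∀ i ∈ F', ∑ j ∈ C', dist i j * xh i j ≤ ρ * lam * T * yh i) ∧
      ρ * lam = (1 + ε) ^ 2 / 15 := by
  classical
  have hε0' : ε ≠ 0 := ne_of_gt hε0
  have h1ε : (0:ℝ) < 1 + ε := by linarith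
  have hρpos : 0 < ρ := by rw [hρ]; positivity
  set D : X → ℝ := fun j => ∑ u ∈ F', dist u j * x' u j with hDdef
  have hx0 : ∀ i ∈ F', ∀ j ∈ C', 0 ≤ x' i j := fun i hi j hj => (hx'01 i hi j hj).1
  have hD0 : ∀ j ∈ C', 0 ≤ D j := by
    intro j hj
    exact Finset.sum_nonneg fun u hu => mul_nonneg dist_nonneg (hx0 u hu j hj)
  have hDpos : ∀ j ∈ C', 0 < D j := by
    intro j hj
    rcases lt_or_eq_of_le (hD0 j hj) with h | h
    · exact h
    have hall : ∀ u ∈ F', x' u j = 0 := by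
      intro u hu
      have := (Finset.sum_eq_zero_iff_of_nonneg
        (fun u hu => mul_nonneg dist_nonneg (hx0 u hu j hj))).mp h.symm u hu
      have hne : u ≠ j := fun huj => (Finset.disjoint_left.mp hFC hu) (huj ▸ hj)
      have hdne : dist u j ≠ 0 := by simpa [dist_eq_zero] using hne
      exact (mul_eq_zero.mp this).resolve_left hdne
    have hz : ∑ i ∈ F', x' i j = 0 := Finset.sum_eq_zero hall
    have hlow := hdlow j hj
    rw [hz] at hlow
    have : (0:ℝ) < ε / (1 + ε) := by positivity
    linarith
  set S : X → ℝ := fun j =>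
    ∑ i ∈ F'.filter (fun i => 0 < x' i j ∧ dist i j ≤ ρ * D j), x' i j with hSdef
  have hSlb : ∀ j ∈ C', ε / (1 + ε) ^ 2 ≤ S j := by
    intro j hj
    have hsplit := Finset.sum_filter_add_sum_filter_not F'
      (fun i => 0 < x' i j ∧ dist i j ≤ ρ * D j) (fun i => x' i j)
    have hDj := hDpos j hj
    have hρD : 0 < ρ * D j := mul_pos hρpos hDj
    have hrest : ∑ i ∈ F'.filter (fun i => ¬(0 < x' i j ∧ dist i j ≤ ρ * D j)), x' i j
        ≤ 1 / ρ := by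
      have h1 : ∑ i ∈ F'.filter (fun i => ¬(0 < x' i j ∧ dist i j ≤ ρ * D j)), x' i j
          ≤ ∑ i ∈ F'.filter (fun i => ¬(0 < x' i j ∧ dist i j ≤ ρ * D j)),
              dist i j * x' i j / (ρ * D j) := by
        apply Finset.sum_le_sum
        intro i hi
        rw [Finset.mem_filter] at hi
        obtain ⟨hiF, hcond⟩ := hi
        by_cases hx : 0 < x' i j
        · have hd : ρ * D j < dist i j := by
            by_contra hd
            exact hcond ⟨hx, le_of_not_gt hd⟩
          rw [le_div_iff₀ hρD]
          nlinarith
        · have hxz : x' i j = 0 := le_antisymm (le_of_not_gt hx) (hx0 i hiF j hj)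
          rw [hxz]; simp
      have hsub : ∑ i ∈ F'.filter (fun i => ¬(0 < x' i j ∧ dist i j ≤ ρ * D j)),
          dist i j * x' i j ≤ D j := by
        apply Finset.sum_le_sum_of_subset_of_nonneg (Finset.filter_subset _ _)
        intro i hi _
        exact mul_nonneg dist_nonneg (hx0 i hi j hj)
      have h2 : ∑ i ∈ F'.filter (fun i => ¬(0 < x' i j ∧ dist i j ≤ ρ * D j)),
          dist i j * x' i j / (ρ * D j) ≤ D j / (ρ * D j) := by
        rw [← Finset.sum_div]
        exact div_le_div_of_nonneg_right hsub hρD.le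
      have h3 : D j / (ρ * D j) = 1 / ρ := by
        field_simp
      linarith
    have h1ρ : 1 / ρ = ε ^ 2 / (1 + ε) ^ 2 := by rw [hρ, one_div_div]
    have heq : ε / (1 + ε) - ε ^ 2 / (1 + ε) ^ 2 = ε / (1 + ε) ^ 2 := by
      field_simp
      ring
    have hlow := hdlow j hj
    have : S j = ∑ i ∈ F', x' i j
        - ∑ i ∈ F'.filter (fun i => ¬(0 < x' i j ∧ dist i j ≤ ρ * D j)), x' i j := by
      rw [hSdef]; linarith [hsplit]
    rw [this]
    rw [h1ρ] at hrest
    linarith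
  have hSpos : ∀ j ∈ C', 0 < S j := by
    intro j hj
    have : (0:ℝ) < ε / (1 + ε) ^ 2 := by positivity
    linarith [hSlb j hj]
  have hSinv : ∀ j ∈ C', 1 / S j ≤ (1 + ε) ^ 2 / ε := by
    intro j hj
    rw [div_le_div_iff₀ (hSpos j hj) hε0]
    have := hSlb j hj
    rw [div_le_iff₀ (by positivity : (0:ℝ) < (1+ε)^2)] at this
    linarith
  -- the constructed solution
  set xh : X → X → ℝ := fun i j =>
    if i ∈ F' ∧ j ∈ C' ∧ 0 < x' i j ∧ dist i j ≤ ρ * D j then x' i j / S j else 0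
    with hxhdef
  set yh : X → ℝ := fun i => min 1 ((1 + ε) ^ 2 / ε * y' i) with hyhdef
  -- basic facts
  have hxh0 : ∀ i j, 0 ≤ xh i j := by
    intro i j
    rw [hxhdef]
    dsimp only
    split
    · rename_i h
      exact div_nonneg (le_of_lt h.2.2.1) (le_of_lt (hSpos j h.2.1))
    · exact le_rfl
  have hxh1 : ∀ i j, xh i j ≤ 1 := by
    intro i j
    rw [hxhdef]
    dsimp only
    split
    · rename_i h
      obtain ⟨hiF, hjC, hx, hd⟩ := h
      rw [div_le_one (hSpos j hjC)]
      rw [hSdef]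
      exact Finset.single_le_sum (f := fun i => x' i j)
        (fun u hu => hx0 u (Finset.mem_filter.mp hu).1 j hjC)
        (Finset.mem_filter.mpr ⟨hiF, hx, hd⟩)
    · exact zero_le_one
  have hyh0 : ∀ i ∈ F', 0 ≤ yh i := by
    intro i hi
    rw [hyhdef]
    exact le_min zero_le_one (mul_nonneg (by positivity) (hy'01 i hi).1)
  have hxhyh : ∀ i ∈ F', ∀ j ∈ C', xh i j ≤ yh i := by
    intro i hi j hj
    rw [hxhdef, hyhdef]
    dsimp only
    split
    · rename_i h
      obtain ⟨hiF, hjC, hx, hd⟩ := h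
      refine le_min ?_ ?_
      · have := hxh1 i j
        rw [hxhdef] at this
        dsimp only at this
        rw [if_pos ⟨hiF, hjC, hx, hd⟩] at this
        exact this
      · rw [div_eq_mul_one_div]
        calc x' i j * (1 / S j) ≤ y' i * ((1 + ε) ^ 2 / ε) := by
              apply mul_le_mul (hxy i hi j hj) (hSinv j hj)
                (le_of_lt (one_div_pos.mpr (hSpos j hj))) ((hy'01 i hi).1)
          _ = (1 + ε) ^ 2 / ε * y' i := by ring
    · exact le_min zero_le_one (mul_nonneg (by positivity) (hy'01 i hi).1)
  -- sum over F' of xh equals 1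
  have hsum1 : ∀ j ∈ C', ∑ i ∈ F', xh i j = 1 := by
    intro j hj
    have : ∑ i ∈ F', xh i j
        = ∑ i ∈ F'.filter (fun i => 0 < x' i j ∧ dist i j ≤ ρ * D j), x' i j / S j := by
      rw [Finset.sum_filter]
      apply Finset.sum_congr rfl
      intro i hi
      rw [hxhdef]
      dsimp only
      by_cases h : 0 < x' i j ∧ dist i j ≤ ρ * D j
      · rw [if_pos ⟨hi, hj, h⟩, if_pos h]
      · rw [if_neg (fun hc => h hc.2.2), if_neg h]
    rw [this, ← Finset.sum_div]
    show S j / S j = 1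
    exact div_self (ne_of_gt (hSpos j hj))
  refine ⟨xh, yh, ?_, ?_, ?_, ?_, ?_, ?_, ?_, ?_, ?_⟩
  · intro i hi j hj
    exact ⟨hxh0 i j, hxh1 i j⟩
  · intro i hi
    exact ⟨hyh0 i hi, min_le_left _ _⟩
  · calc ∑ i ∈ F', yh i ≤ ∑ i ∈ F', (1 + ε) ^ 2 / ε * y' i :=
          Finset.sum_le_sum fun i _ => min_le_right _ _
      _ = (1 + ε) ^ 2 / ε * ∑ i ∈ F', y' i := by rw [Finset.mul_sum]
      _ ≤ (1 + ε) ^ 2 / ε * k := by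
          apply mul_le_mul_of_nonneg_left hytot (by positivity)
      _ = ρ * ε * k := by rw [hρ]; field_simp
  · exact hxhyh
  · intro i hi j hj hpos
    rw [hxhdef] at hpos
    dsimp only at hpos
    by_cases h : i ∈ F' ∧ j ∈ C' ∧ 0 < x' i j ∧ dist i j ≤ ρ * D j
    · exact ⟨h.2.2.1, h.2.2.2⟩
    · rw [if_neg h] at hpos; exact absurd hpos (lt_irrefl 0)
  · exact hsum1
  · intro j hj
    have h1 : ∑ i ∈ F'.filter (fun i => 0 < xh i j), xh i j = ∑ i ∈ F', xh i j := by
      apply Finset.sum_filter_of_ne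
      intro i hi hne
      rcases lt_or_eq_of_le (hxh0 i j) with h | h
      · exact h
      · exact absurd h.symm hne
    calc (1:ℝ) = ∑ i ∈ F', xh i j := (hsum1 j hj).symm
      _ = ∑ i ∈ F'.filter (fun i => 0 < xh i j), xh i j := h1.symm
      _ ≤ ∑ i ∈ F'.filter (fun i => 0 < xh i j), yh i := by
          apply Finset.sum_le_sum
          intro i hi
          rw [Finset.mem_filter] at hi
          exact hxhyh i hi.1 j hj
  · intro i hi
    have hyhi := hyh0 i hi
    have hterm : ∀ j ∈ C', dist i j * xh i j
        ≤ ρ * yh i * (if 0 < x' i j then D j else 0) := by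
      intro j hj
      rw [hxhdef]
      dsimp only
      by_cases h : i ∈ F' ∧ j ∈ C' ∧ 0 < x' i j ∧ dist i j ≤ ρ * D j
      · obtain ⟨hiF, hjC, hx, hd⟩ := h
        rw [if_pos ⟨hiF, hjC, hx, hd⟩, if_pos hx]
        have hxhle : x' i j / S j ≤ yh i := by
          have := hxhyh i hi j hj
          rw [hxhdef] at this
          dsimp only at this
          rw [if_pos ⟨hiF, hjC, hx, hd⟩] at this
          exact this
        have hxhnn : 0 ≤ x' i j / S j :=
          div_nonneg (le_of_lt hx) (le_of_lt (hSpos j hjC))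
        calc dist i j * (x' i j / S j) ≤ (ρ * D j) * (x' i j / S j) :=
              mul_le_mul_of_nonneg_right hd hxhnn
          _ ≤ (ρ * D j) * yh i := by
              apply mul_le_mul_of_nonneg_left hxhle
              exact mul_nonneg (le_of_lt hρpos) (le_of_lt (hDpos j hjC))
          _ = ρ * yh i * D j := by ring
      · rw [if_neg h, mul_zero]
        split
        · exact mul_nonneg (mul_nonneg (le_of_lt hρpos) hyhi) (hD0 j hj)
        · simp
    calc ∑ j ∈ C', dist i j * xh i j
        ≤ ∑ j ∈ C', ρ * yh i * (if 0 < x' i j then D j else 0) :=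
          Finset.sum_le_sum hterm
      _ = ρ * yh i * ∑ j ∈ C'.filter (fun j => 0 < x' i j), D j := by
          rw [Finset.mul_sum, Finset.sum_filter]
          apply Finset.sum_congr rfl
          intro j hj
          split <;> simp
      _ ≤ ρ * yh i * (lam * T) := by
          apply mul_le_mul_of_nonneg_left (hlight i hi)
          exact mul_nonneg (le_of_lt hρpos) hyhi
      _ = ρ * lam * T * yh i := by ring
  · rw [hρ, hlam]
    field_simp
end

section
/- Let F, C be disjoint finite sets with a metric d on F ∪ C, let T > 0 and k ∈ ℕ, let (x, y) be a feasible solution to SC-LP(T, k), and let ε ∈ (0, 1). Then there exist ẏ : F → {0, 1} and ẋ : F × C → [0, 1] such that: (1) ∑_{i ∈ F} ẏ_i ≤ (1 + 4ε)·k; (2) ẋ_{ij} ≤ ẏ_i for all i, j, and for every j ∈ C, 1/(1 + ε) ≤ ∑_{i ∈ F} ẋ_{ij} ≤ 1; and (3) for every i ∈ F, L(i, ẋ) ≤ 12·(1 + (1 + ε)/ε²)·T·ẏ_i. -/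
/-
Let `D j = ∑ i, d(i,j) x i j` be the fractional connection cost of client `j` and
`r j = (1 + ε) / ε * D j`. By Markov's inequality, at least `1 / (1 + ε)` of the mass of `j`
lies on facilities within `r j` of `j`. Scanning the clients by increasing `r j`, a client that
has less than `η = ε / ((1 + ε)(1 + 2ε))` of that mass on earlier clusters becomes a center and
claims the unclaimed facilities of its ball, which carry mass `θ = 1 / (1 + 2ε)` of it; since
`x ≤ y`, there are at most `(1 + 2ε) k` centers. Every client now has mass `≥ η` on clusters
whose centers have radius at most its own, so rescaling that mass to `1 / (1 + ε)` inflates `x`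
by at most `(1 + 2ε) / ε`, and every facility of such a cluster is within `3 r j` of `j`.
Finally each cluster opens about `1 + W / a` of its facilities, `W` being its `3r`-weighted
demand (or all of them), and spreads the assignment of its closed facilities evenly over the
open ones. The total weighted demand is at most `3 T k / ε`, so `a = 3T / (2ε²)` costs `2εk`
extra openings and adds at most `a` to the load of each open facility.
-/

/-- Feasibility for the LP relaxation `SC-LP(T, k)` of the star cover problem. -/
def SCLPFeasible {X : Type*} [MetricSpace X] (F C : Finset X) (T : ℝ) (k : ℕ)
    (x : X → X → ℝ) (y : X → ℝ) : Prop :=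
  (∀ i ∈ F, ∀ j ∈ C, x i j ∈ Set.Icc (0 : ℝ) 1) ∧
  (∀ i ∈ F, y i ∈ Set.Icc (0 : ℝ) 1) ∧
  (∀ i ∈ F, ∑ j ∈ C, dist i j * x i j ≤ T * y i) ∧
  (∑ i ∈ F, y i ≤ (k : ℝ)) ∧
  (∀ j ∈ C, ∑ i ∈ F, x i j = 1) ∧
  (∀ i ∈ F, ∀ j ∈ C, x i j ≤ y i) ∧
  (∀ i ∈ F, ∀ j ∈ C, T < dist i j → x i j = 0)

open Finset

theorem Finset.one_div_one_add_le_sum_filter_le {ι : Type*} {s : Finset ι} {w f : ι → ℝ}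
    (hw : ∀ i ∈ s, 0 ≤ w i) (hf : ∀ i ∈ s, 0 ≤ f i) (hs : ∑ i ∈ s, w i = 1) {ε : ℝ}
    (hε : 0 < ε) :
    1 / (1 + ε) ≤ ∑ i ∈ s with f i ≤ (1 + ε) / ε * ∑ i ∈ s, f i * w i, w i := by
  set M := ∑ i ∈ s, f i * w i
  set r := (1 + ε) / ε * M
  have hsplit := sum_filter_add_sum_filter_not s (fun i => f i ≤ r) w
  suffices htail : ∑ i ∈ s with ¬f i ≤ r, w i ≤ ε / (1 + ε) by
    have : 1 / (1 + ε) = 1 - ε / (1 + ε) := by field_simp; ring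
    linarith
  have hfw : ∀ i ∈ s, 0 ≤ f i * w i := fun i hi => mul_nonneg (hf i hi) (hw i hi)
  set tail := ∑ i ∈ s with ¬f i ≤ r, w i
  rcases (sum_nonneg hfw).eq_or_lt with hM | hM
  · have hr : r = 0 := by simp only [r, M, ← hM, mul_zero]
    have hzero : ∀ i ∈ s.filter (fun i => ¬f i ≤ r), w i = 0 := by
      intro i hi
      obtain ⟨hi, hfi⟩ := mem_filter.1 hi
      rw [hr, not_le] at hfi
      exact (mul_eq_zero.1 ((sum_eq_zero_iff_of_nonneg hfw).1 hM.symm i hi)).resolve_left hfi.ne'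
    exact (sum_eq_zero hzero).trans_le (by positivity)
  · have markov : r * tail ≤ M := by
      rw [mul_sum]
      calc ∑ i ∈ s with ¬f i ≤ r, r * w i ≤ ∑ i ∈ s with ¬f i ≤ r, f i * w i :=
            sum_le_sum fun i hi => by
              obtain ⟨hi, hfi⟩ := mem_filter.1 hi
              exact mul_le_mul_of_nonneg_right (not_le.1 hfi).le (hw i hi)
        _ ≤ M := sum_le_sum_of_subset_of_nonneg (filter_subset _ _) fun i hi _ => hfw i hi
    have key : (1 + ε) / ε * tail ≤ 1 :=
      le_of_mul_le_mul_right (by linarith [markov] : (1 + ε) / ε * tail * M ≤ 1 * M) hM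
    rw [div_mul_eq_mul_div, div_le_one hε] at key
    rw [le_div_iff₀ (by positivity)]
    linarith

theorem card_mul_le_sum_of_pairwiseDisjoint {ι γ : Type*} [DecidableEq ι] {F : Finset ι}
    {Z : Finset γ} {G : γ → Finset ι} (hdisj : (Z : Set γ).PairwiseDisjoint G)
    (hGF : ∀ c ∈ Z, G c ⊆ F) {y : ι → ℝ} (hy : ∀ i ∈ F, 0 ≤ y i) {θ : ℝ}
    (hθ : ∀ c ∈ Z, θ ≤ ∑ i ∈ G c, y i) : #Z * θ ≤ ∑ i ∈ F, y i :=
  calc #Z * θ = ∑ c ∈ Z, θ := by rw [sum_const, nsmul_eq_mul]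
    _ ≤ ∑ c ∈ Z, ∑ i ∈ G c, y i := sum_le_sum hθ
    _ = ∑ i ∈ Z.biUnion G, y i := (sum_biUnion hdisj).symm
    _ ≤ ∑ i ∈ F, y i := sum_le_sum_of_subset_of_nonneg (biUnion_subset.2 hGF) fun i hi _ => hy i hi

theorem sum_ite_mem_div_mul_sum {ι : Type*} [DecidableEq ι] {s u : Finset ι} (hsu : s ⊆ u)
    {w : ι → ℝ} (hw : ∑ i ∈ s, w i ≠ 0) (c : ℝ) :
    ∑ i ∈ u, (if i ∈ s then w i / (c * ∑ i ∈ s, w i) else 0) = 1 / c := by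
  rw [sum_ite_mem, inter_eq_right.2 hsu, ← sum_div, div_mul_cancel_right₀ hw, one_div]

theorem ite_mem_div_mul_sum_le {ι : Type*} [DecidableEq ι] {s : Finset ι} {w : ι → ℝ} {i : ι}
    (hwi : 0 ≤ w i) {c η : ℝ} (hc : 0 < c) (hη : 0 < η) (hs : η ≤ ∑ i ∈ s, w i) :
    (if i ∈ s then w i / (c * ∑ i ∈ s, w i) else 0) ≤ w i / (c * η) := by
  split_ifs
  · gcongr
  · positivity

theorem Finset.exists_subset_card_le_one_add {α : Type*} {s : Finset α} (hs : s.Nonempty)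
    {b : ℝ} (hb : 0 ≤ b) : ∃ t ⊆ s, t.Nonempty ∧ (#t : ℝ) ≤ 1 + b ∧ (t = s ∨ b ≤ #t) := by
  obtain ⟨t, hts, ht⟩ := exists_subset_card_eq (min_le_left #s (max 1 ⌈b⌉₊))
  refine ⟨t, hts, card_pos.1 (ht ▸ lt_min (card_pos.2 hs) (lt_max_of_lt_left one_pos)), ?_, ?_⟩
  · have hceil : (⌈b⌉₊ : ℝ) < b + 1 := Nat.ceil_lt_add_one hb
    have : (#t : ℝ) ≤ max 1 (⌈b⌉₊ : ℝ) := by exact_mod_cast ht ▸ min_le_right _ _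
    rcases le_max_iff.1 this with h | h <;> linarith
  · rcases min_cases #s (max 1 ⌈b⌉₊) with ⟨h, -⟩ | ⟨h, -⟩
    · exact Or.inl (eq_of_subset_of_card_le hts (by omega))
    · refine Or.inr ((Nat.le_ceil b).trans ?_)
      exact_mod_cast ht ▸ h ▸ le_max_right 1 ⌈b⌉₊

-- The invariant of scanning `C` by increasing `r`; `Z` holds the clients that opened a cluster.
structure IsGreedyClustering {ι κ β : Type*} [DecidableEq ι] [LinearOrder β] (C : Finset κ)
    (K : κ → Finset ι) (r : κ → β) (w : ι → κ → ℝ) (θ η : ℝ) (Z : Finset κ)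
    (G : κ → Finset ι) : Prop where
  subset : Z ⊆ C
  pairwiseDisjoint : (Z : Set κ).PairwiseDisjoint G
  cluster_subset : ∀ c ∈ Z, G c ⊆ K c
  le_sum_cluster : ∀ c ∈ Z, θ ≤ ∑ i ∈ G c, w i c
  le_sum_covered : ∀ j ∈ C, η ≤ ∑ i ∈ K j ∩ {c ∈ Z | r c ≤ r j}.biUnion G, w i j

namespace IsGreedyClustering

variable {ι κ β : Type*} [DecidableEq ι] [DecidableEq κ] [LinearOrder β] {s : Finset κ}
  {K : κ → Finset ι} {r : κ → β} {w : ι → κ → ℝ} {θ η : ℝ} {Z : Finset κ} {G : κ → Finset ι} {a : κ}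

theorem insert_of_le_sum (h : IsGreedyClustering s K r w θ η Z G) (hmax : ∀ j ∈ s, r j ≤ r a)
    (hcov : η ≤ ∑ i ∈ K a ∩ Z.biUnion G, w i a) :
    IsGreedyClustering (insert a s) K r w θ η Z G where
  subset := h.subset.trans (subset_insert a s)
  pairwiseDisjoint := h.pairwiseDisjoint
  cluster_subset := h.cluster_subset
  le_sum_cluster := h.le_sum_cluster
  le_sum_covered j hj := by
    rcases mem_insert.1 hj with rfl | hj
    · rwa [filter_true_of_mem fun c hc => hmax c (h.subset hc)]
    · exact h.le_sum_covered j hj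

theorem insert_center (h : IsGreedyClustering s K r w θ η Z G) (ha : a ∉ s)
    (hmax : ∀ j ∈ s, r j ≤ r a) (hw : ∀ j ∈ s, ∀ i ∈ K j, 0 ≤ w i j) (hθ : 0 ≤ θ)
    (hK : θ + η ≤ ∑ i ∈ K a, w i a) (hcov : ∑ i ∈ K a ∩ Z.biUnion G, w i a < η) :
    IsGreedyClustering (insert a s) K r w θ η (insert a Z)
      (Function.update G a (K a \ Z.biUnion G)) := by
  have haZ : a ∉ Z := fun h' => ha (h.subset h')
  have hG : ∀ c ∈ Z, Function.update G a (K a \ Z.biUnion G) c = G c :=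
    fun c hc => Function.update_of_ne (ne_of_mem_of_not_mem hc haZ) _ _
  have hcovered : ∀ j,
      {c ∈ insert a Z | r c ≤ r j}.biUnion (Function.update G a (K a \ Z.biUnion G)) =
        (if r a ≤ r j then K a \ Z.biUnion G else ∅) ∪ {c ∈ Z | r c ≤ r j}.biUnion G := by
    intro j
    have hZ : {c ∈ Z | r c ≤ r j}.biUnion (Function.update G a (K a \ Z.biUnion G)) =
        {c ∈ Z | r c ≤ r j}.biUnion G := biUnion_congr rfl fun c hc => hG c (mem_filter.1 hc).1
    rw [filter_insert]
    split_ifs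
    · rw [biUnion_insert, Function.update_self, hZ]
    · rw [empty_union, hZ]
  refine ⟨insert_subset_insert a h.subset, ?_, fun c hc => ?_, fun c hc => ?_, fun j hj => ?_⟩
  · rw [coe_insert]
    refine (h.pairwiseDisjoint.mono_on fun c hc => (hG c hc).le).insert_of_notMem haZ
      fun c hc => ?_
    rw [Function.update_self, hG c hc]
    exact disjoint_sdiff_self_left.mono_right (subset_biUnion_of_mem G hc)
  · rcases mem_insert.1 hc with rfl | hc
    · rw [Function.update_self]; exact sdiff_subset
    · rw [hG c hc]; exact h.cluster_subset c hc
  · rcases mem_insert.1 hc with rfl | hc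
    · rw [Function.update_self]
      linarith [sum_inter_add_sum_sdiff (K c) (Z.biUnion G) (fun i => w i c)]
    · rw [hG c hc]; exact h.le_sum_cluster c hc
  · rw [hcovered]
    rcases mem_insert.1 hj with rfl | hj
    · rw [if_pos le_rfl, filter_true_of_mem fun c hc => hmax c (h.subset hc),
        sdiff_union_self_eq_union, inter_eq_left.2 subset_union_left]
      linarith
    · refine (h.le_sum_covered j hj).trans (sum_le_sum_of_subset_of_nonneg
        (inter_subset_inter_left subset_union_right) fun i hi _ => hw j hj i (mem_inter.1 hi).1)

end IsGreedyClustering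

theorem exists_isGreedyClustering {ι κ β : Type*} [DecidableEq ι] [DecidableEq κ] [LinearOrder β]
    (C : Finset κ) (K : κ → Finset ι) (r : κ → β) (w : ι → κ → ℝ) {θ η : ℝ} (hθ : 0 ≤ θ)
    (hw : ∀ j ∈ C, ∀ i ∈ K j, 0 ≤ w i j) (hK : ∀ j ∈ C, θ + η ≤ ∑ i ∈ K j, w i j) :
    ∃ (Z : Finset κ) (G : κ → Finset ι), IsGreedyClustering C K r w θ η Z G := by
  induction C using Finset.induction_on_max_value r with
  | empty => exact ⟨∅, fun _ => ∅, ⟨subset_rfl, by simp, by simp, by simp, by simp⟩⟩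
  | insert a s ha hmax ih =>
    obtain ⟨Z, G, h⟩ :=
      ih (fun j hj => hw j (mem_insert_of_mem hj)) (fun j hj => hK j (mem_insert_of_mem hj))
    by_cases hcov : η ≤ ∑ i ∈ K a ∩ Z.biUnion G, w i a
    · exact ⟨Z, G, h.insert_of_le_sum hmax hcov⟩
    · exact ⟨_, _, h.insert_center ha hmax (fun j hj => hw j (mem_insert_of_mem hj)) hθ
        (hK a (mem_insert_self a s)) (not_le.1 hcov)⟩

section Consolidation

variable {ι κ : Type*} [DecidableEq ι]

noncomputable def consolidate (t s : Finset ι) (z : ι → κ → ℝ) (i : ι) (j : κ) : ℝ :=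
  if i ∈ t then z i j + (∑ i' ∈ s \ t, z i' j) / #t else 0

theorem sum_consolidate {t s u : Finset ι} (hts : t ⊆ s) (htu : t ⊆ u) (ht : t.Nonempty)
    (z : ι → κ → ℝ) (j : κ) : ∑ i ∈ u, consolidate t s z i j = ∑ i ∈ s, z i j := by
  unfold consolidate
  rw [sum_ite_mem, inter_eq_right.2 htu, sum_add_distrib, sum_const, nsmul_eq_mul,
    mul_div_cancel₀ _ (by exact_mod_cast ht.card_pos.ne'), add_comm, sum_sdiff hts]

theorem consolidate_nonneg {t s : Finset ι} {z : ι → κ → ℝ} {j : κ} (hz : ∀ i ∈ s, 0 ≤ z i j)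
    (hts : t ⊆ s) (i : ι) : 0 ≤ consolidate t s z i j := by
  unfold consolidate
  split_ifs with hi
  · exact add_nonneg (hz i (hts hi))
      (div_nonneg (sum_nonneg fun i' hi' => hz i' (sdiff_subset hi')) (Nat.cast_nonneg _))
  · exact le_rfl

theorem consolidate_le_sum {t s : Finset ι} {z : ι → κ → ℝ} {j : κ} (hz : ∀ i ∈ s, 0 ≤ z i j)
    (hts : t ⊆ s) (i : ι) : consolidate t s z i j ≤ ∑ i ∈ s, z i j := by
  unfold consolidate
  split_ifs with hi
  · have hR : 0 ≤ ∑ i' ∈ s \ t, z i' j := sum_nonneg fun i' hi' => hz i' (sdiff_subset hi')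
    calc z i j + (∑ i' ∈ s \ t, z i' j) / #t ≤ z i j + ∑ i' ∈ s \ t, z i' j := by
          gcongr
          exact div_le_self hR (by exact_mod_cast card_pos.2 ⟨i, hi⟩)
      _ ≤ ∑ i ∈ s, z i j := by
          rw [← sum_sdiff hts, add_comm]
          gcongr
          exact single_le_sum (fun i hi => hz i (hts hi)) hi
  · exact sum_nonneg hz

theorem sum_mul_consolidate_le {t s : Finset ι} {C : Finset κ} {z d : ι → κ → ℝ} {ρ : κ → ℝ}
    {i : ι} (hi : i ∈ t) (hd : ∀ i' ∈ s \ t, ∀ j ∈ C, d i j * z i' j ≤ ρ j * z i' j) :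
    ∑ j ∈ C, d i j * consolidate t s z i j ≤
      ∑ j ∈ C, d i j * z i j + (∑ j ∈ C, ρ j * ∑ i' ∈ s \ t, z i' j) / #t := by
  simp only [consolidate, if_pos hi, mul_add, sum_add_distrib, mul_div_assoc', ← sum_div, mul_sum]
  exact add_le_add le_rfl (div_le_div_of_nonneg_right
    (sum_le_sum fun j hj => sum_le_sum fun i' hi' => hd i' hi' j hj) (Nat.cast_nonneg _))

end Consolidation

structure IsClusteredAssignment {ι κ γ : Type*} (F : Finset ι) (C : Finset κ) (d : ι → κ → ℝ)
    (Z : Finset γ) (G : γ → Finset ι) (z : ι → κ → ℝ) (ρ : κ → ℝ) : Prop where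
  subset : ∀ c ∈ Z, G c ⊆ F
  nonempty : ∀ c ∈ Z, (G c).Nonempty
  pairwiseDisjoint : (Z : Set γ).PairwiseDisjoint G
  nonneg : ∀ i ∈ F, ∀ j ∈ C, 0 ≤ z i j
  exists_mem_of_ne_zero : ∀ i ∈ F, ∀ j ∈ C, z i j ≠ 0 → ∃ c ∈ Z, i ∈ G c
  cost_le_radius : ∀ c ∈ Z, ∀ i ∈ G c, ∀ i' ∈ G c, ∀ j ∈ C, z i' j ≠ 0 → d i j ≤ ρ j
  radius_nonneg : ∀ j ∈ C, 0 ≤ ρ j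

namespace IsClusteredAssignment

variable {ι κ γ : Type*} {F : Finset ι} {C : Finset κ} {d : ι → κ → ℝ} {Z : Finset γ}
  {G : γ → Finset ι} {z : ι → κ → ℝ} {ρ : κ → ℝ}

theorem sum_sum_eq [DecidableEq ι] (h : IsClusteredAssignment F C d Z G z ρ) {j : κ}
    (hj : j ∈ C) :
    ∑ c ∈ Z, ∑ i ∈ G c, z i j = ∑ i ∈ F, z i j := by
  rw [← sum_biUnion h.pairwiseDisjoint]
  refine sum_subset (biUnion_subset.2 h.subset) fun i hi hiG => ?_
  by_contra hz
  obtain ⟨c, hc, hic⟩ := h.exists_mem_of_ne_zero i hi j hj hz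
  exact hiG (mem_biUnion.2 ⟨c, hc, hic⟩)

theorem sum_sum_mul_sum_eq [DecidableEq ι] (h : IsClusteredAssignment F C d Z G z ρ) :
    ∑ c ∈ Z, ∑ j ∈ C, ρ j * ∑ i ∈ G c, z i j = ∑ j ∈ C, ρ j * ∑ i ∈ F, z i j := by
  rw [sum_comm]
  exact sum_congr rfl fun j hj => by rw [← mul_sum, h.sum_sum_eq hj]

theorem sum_mul_sum_nonneg (h : IsClusteredAssignment F C d Z G z ρ) {c : γ} (hc : c ∈ Z) :
    0 ≤ ∑ j ∈ C, ρ j * ∑ i ∈ G c, z i j :=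
  sum_nonneg fun j hj => mul_nonneg (h.radius_nonneg j hj)
    (sum_nonneg fun i hi => h.nonneg i (h.subset c hc hi) j hj)

theorem mul_le_radius_mul (h : IsClusteredAssignment F C d Z G z ρ) {c : γ} (hc : c ∈ Z)
    {i i' : ι} (hi : i ∈ G c) (hi' : i' ∈ G c) {j : κ} (hj : j ∈ C) :
    d i j * z i' j ≤ ρ j * z i' j := by
  by_cases hz : z i' j = 0
  · simp [hz]
  · exact mul_le_mul_of_nonneg_right (h.cost_le_radius c hc i hi i' hi' j hj hz)
      (h.nonneg i' (h.subset c hc hi') j hj)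

theorem sum_mul_consolidate_le_add [DecidableEq ι] (h : IsClusteredAssignment F C d Z G z ρ)
    {c : γ} (hc : c ∈ Z) {t : Finset ι} (ht : t ⊆ G c) {a : ℝ} (ha : 0 < a)
    (hta : t = G c ∨ (∑ j ∈ C, ρ j * ∑ i ∈ G c, z i j) / a ≤ #t) {i : ι} (hi : i ∈ t) :
    ∑ j ∈ C, d i j * consolidate t (G c) z i j ≤ ∑ j ∈ C, d i j * z i j + a := by
  refine (sum_mul_consolidate_le hi fun i' hi' j hj =>
    h.mul_le_radius_mul hc (ht hi) (sdiff_subset hi') hj).trans (add_le_add le_rfl ?_)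
  rcases hta with rfl | hta
  · simp [ha.le]
  have ht0 : (0 : ℝ) < #t := by exact_mod_cast card_pos.2 ⟨i, hi⟩
  rw [div_le_iff₀ ht0]
  calc ∑ j ∈ C, ρ j * ∑ i ∈ G c \ t, z i j ≤ ∑ j ∈ C, ρ j * ∑ i ∈ G c, z i j := by
        refine sum_le_sum fun j hj => mul_le_mul_of_nonneg_left ?_ (h.radius_nonneg j hj)
        exact sum_le_sum_of_subset_of_nonneg sdiff_subset fun i hi _ =>
          h.nonneg i (h.subset c hc hi) j hj
    _ ≤ a * #t := by rwa [div_le_iff₀' ha] at hta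

theorem exists_rounding [DecidableEq ι] (h : IsClusteredAssignment F C d Z G z ρ) {a : ℝ}
    (ha : 0 < a) :
    ∃ (O : Finset ι) (xdot : ι → κ → ℝ), O ⊆ F ∧
      (#O : ℝ) ≤ #Z + (∑ j ∈ C, ρ j * ∑ i ∈ F, z i j) / a ∧
      (∀ i ∈ F, ∀ j ∈ C, 0 ≤ xdot i j) ∧
      (∀ i ∉ O, ∀ j, xdot i j = 0) ∧
      (∀ i ∈ O, ∀ j ∈ C, xdot i j ≤ ∑ i ∈ F, z i j) ∧
      (∀ j ∈ C, ∑ i ∈ F, xdot i j = ∑ i ∈ F, z i j) ∧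
      ∀ i ∈ O, ∑ j ∈ C, d i j * xdot i j ≤ ∑ j ∈ C, d i j * z i j + a := by
  set W : γ → ℝ := fun c => ∑ j ∈ C, ρ j * ∑ i ∈ G c, z i j
  choose! St hStG hSt using fun c hc => exists_subset_card_le_one_add (h.nonempty c hc)
    (div_nonneg (h.sum_mul_sum_nonneg hc) ha.le)
  have hStF : ∀ c ∈ Z, St c ⊆ F := fun c hc => (hStG c hc).trans (h.subset c hc)
  have hdisj : (Z : Set γ).PairwiseDisjoint St := h.pairwiseDisjoint.mono_on hStG
  set xdot : ι → κ → ℝ := fun i j => ∑ c ∈ Z, consolidate (St c) (G c) z i j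
  have hxdot : ∀ c ∈ Z, ∀ i ∈ St c, ∀ j, xdot i j = consolidate (St c) (G c) z i j :=
    fun c hc i hi j => sum_eq_single_of_mem c hc fun c' hc' hne =>
      if_neg fun hi' => disjoint_left.1 (hdisj hc' hc hne) hi' hi
  refine ⟨Z.biUnion St, xdot, biUnion_subset.2 hStF, ?_, ?_, ?_, ?_, ?_, ?_⟩
  · calc (#(Z.biUnion St) : ℝ) = ∑ c ∈ Z, (#(St c) : ℝ) := by
          rw [card_biUnion hdisj, Nat.cast_sum]
      _ ≤ ∑ c ∈ Z, (1 + W c / a) := sum_le_sum fun c hc => (hSt c hc).2.1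
      _ = #Z + (∑ j ∈ C, ρ j * ∑ i ∈ F, z i j) / a := by
        rw [sum_add_distrib, ← sum_div, h.sum_sum_mul_sum_eq, sum_const, nsmul_one]
  · exact fun i _ j hj => sum_nonneg fun c hc => consolidate_nonneg
      (fun i hi => h.nonneg i (h.subset c hc hi) j hj) (hStG c hc) i
  · exact fun i hi j => sum_eq_zero fun c hc => if_neg fun hi' => hi (mem_biUnion.2 ⟨c, hc, hi'⟩)
  · intro i hi j hj
    obtain ⟨c, hc, hic⟩ := mem_biUnion.1 hi
    rw [hxdot c hc i hic]
    exact (consolidate_le_sum (fun i hi => h.nonneg i (h.subset c hc hi) j hj) (hStG c hc) i).trans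
      (sum_le_sum_of_subset_of_nonneg (h.subset c hc) fun i hi _ => h.nonneg i hi j hj)
  · intro j hj
    rw [sum_comm, ← h.sum_sum_eq hj]
    exact sum_congr rfl fun c hc => sum_consolidate (hStG c hc) (hStF c hc) (hSt c hc).1 z j
  · intro i hi
    obtain ⟨c, hc, hic⟩ := mem_biUnion.1 hi
    rw [sum_congr rfl fun j _ => by rw [hxdot c hc i hic j]]
    exact h.sum_mul_consolidate_le_add hc (hStG c hc) ha (hSt c hc).2.2 hic

end IsClusteredAssignment

theorem IsGreedyClustering.isClusteredAssignment {X : Type*} [MetricSpace X] [DecidableEq X]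
    {F C Z : Finset X} {G : X → Finset X} {r : X → ℝ} {w z : X → X → ℝ} {θ η : ℝ}
    (hg : IsGreedyClustering C (fun j => {i ∈ F | dist i j ≤ r j}) r w θ η Z G) (hθ : 0 < θ)
    (hr : ∀ j ∈ C, 0 ≤ r j) (hz0 : ∀ i ∈ F, ∀ j ∈ C, 0 ≤ z i j)
    (hz : ∀ i ∈ F, ∀ j ∈ C, z i j ≠ 0 →
      i ∈ {i ∈ F | dist i j ≤ r j} ∩ {c ∈ Z | r c ≤ r j}.biUnion G) :
    IsClusteredAssignment F C dist Z G z fun j => 3 * r j where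
  subset c hc := (hg.cluster_subset c hc).trans (filter_subset _ _)
  nonempty c hc := nonempty_of_sum_ne_zero (hθ.trans_le (hg.le_sum_cluster c hc)).ne'
  pairwiseDisjoint := hg.pairwiseDisjoint
  nonneg := hz0
  exists_mem_of_ne_zero i hi j hj hzij := by
    obtain ⟨c, hc, hic⟩ := mem_biUnion.1 (mem_inter.1 (hz i hi j hj hzij)).2
    exact ⟨c, (mem_filter.1 hc).1, hic⟩
  cost_le_radius c hc i hi i' hi' j hj hzij := by
    have hi'F := (mem_filter.1 (hg.cluster_subset c hc hi')).1
    obtain ⟨hi'j, hi'G⟩ := mem_inter.1 (hz i' hi'F j hj hzij)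
    obtain ⟨c', hc', hi'c'⟩ := mem_biUnion.1 hi'G
    -- `G c` is the only cluster containing `i'`, so `r c ≤ r j`; now go from `i` via `c` and `i'`
    obtain rfl := hg.pairwiseDisjoint.elim_finset (mem_filter.1 hc').1 hc i' hi'c' hi'
    linarith [dist_triangle4 i c' i' j, dist_comm c' i', (mem_filter.1 hc').2,
      (mem_filter.1 hi'j).2, (mem_filter.1 (hg.cluster_subset c' hc hi)).2,
      (mem_filter.1 (hg.cluster_subset c' hc hi')).2]
  radius_nonneg j hj := mul_nonneg zero_le_three (hr j hj)

namespace SCLPFeasible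

variable {X : Type*} [MetricSpace X] {F C : Finset X} {T : ℝ} {k : ℕ} {x : X → X → ℝ}
  {y : X → ℝ}

theorem sum_sum_dist_mul_le (h : SCLPFeasible F C T k x y) (hT : 0 ≤ T) :
    ∑ j ∈ C, ∑ i ∈ F, dist i j * x i j ≤ T * k := by
  obtain ⟨-, -, hload, hk, -⟩ := h
  calc ∑ j ∈ C, ∑ i ∈ F, dist i j * x i j = ∑ i ∈ F, ∑ j ∈ C, dist i j * x i j := sum_comm
    _ ≤ ∑ i ∈ F, T * y i := sum_le_sum hload
    _ ≤ T * k := by rw [← mul_sum]; exact mul_le_mul_of_nonneg_left hk hT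

theorem sum_dist_mul_le (h : SCLPFeasible F C T k x y) (hT : 0 ≤ T) {i : X} (hi : i ∈ F)
    {z : X → X → ℝ} {B : ℝ} (hB : 0 ≤ B) (hz : ∀ j ∈ C, z i j ≤ B * x i j) :
    ∑ j ∈ C, dist i j * z i j ≤ B * T :=
  calc ∑ j ∈ C, dist i j * z i j ≤ ∑ j ∈ C, dist i j * (B * x i j) :=
        sum_le_sum fun j hj => mul_le_mul_of_nonneg_left (hz j hj) dist_nonneg
    _ = B * ∑ j ∈ C, dist i j * x i j := by
        rw [mul_sum]; exact sum_congr rfl fun j _ => by ring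
    _ ≤ B * (T * y i) := by gcongr; exact h.2.2.1 i hi
    _ ≤ B * T := by gcongr; exact mul_le_of_le_one_right hT (h.2.1 i hi).2

theorem one_div_one_add_le_sum_filter (h : SCLPFeasible F C T k x y) {ε : ℝ} (hε : 0 < ε)
    {j : X} (hj : j ∈ C) :
    1 / (1 + ε) ≤ ∑ i ∈ F with dist i j ≤ (1 + ε) / ε * ∑ i ∈ F, dist i j * x i j, x i j :=
  Finset.one_div_one_add_le_sum_filter_le (fun i hi => (h.1 i hi j hj).1)
    (fun _ _ => dist_nonneg) (h.2.2.2.2.1 j hj) hε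

theorem card_mul_le [DecidableEq X] (h : SCLPFeasible F C T k x y) {Z : Finset X}
    {G : X → Finset X} (hZC : Z ⊆ C) (hdisj : (Z : Set X).PairwiseDisjoint G)
    (hGF : ∀ c ∈ Z, G c ⊆ F) {θ : ℝ} (hθ : ∀ c ∈ Z, θ ≤ ∑ i ∈ G c, x i c) : #Z * θ ≤ k :=
  (card_mul_le_sum_of_pairwiseDisjoint hdisj hGF (fun i hi => (h.2.1 i hi).1) fun c hc =>
    (hθ c hc).trans (sum_le_sum fun i hi => h.2.2.2.2.2.1 i (hGF c hc hi) c (hZC hc))).trans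
      h.2.2.2.1

theorem exists_isClusteredAssignment [DecidableEq X] (h : SCLPFeasible F C T k x y)
    (hT : 0 ≤ T) {ε : ℝ} (hε : 0 < ε) :
    ∃ (Z : Finset X) (G : X → Finset X) (z : X → X → ℝ) (ρ : X → ℝ),
      IsClusteredAssignment F C dist Z G z ρ ∧
      (#Z : ℝ) ≤ (1 + 2 * ε) * k ∧
      (∀ j ∈ C, ∑ i ∈ F, z i j = 1 / (1 + ε)) ∧
      ∑ j ∈ C, ρ j * ∑ i ∈ F, z i j ≤ 3 / ε * (T * k) ∧
      ∀ i ∈ F, ∑ j ∈ C, dist i j * z i j ≤ (1 + 2 * ε) / ε * T := by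
  set D : X → ℝ := fun j => ∑ i ∈ F, dist i j * x i j
  set r : X → ℝ := fun j => (1 + ε) / ε * D j
  set θ := 1 / (1 + 2 * ε)
  set η := ε / ((1 + ε) * (1 + 2 * ε))
  have hθη : θ + η = 1 / (1 + ε) := by simp only [θ, η]; field_simp; ring
  obtain ⟨Z, G, hg⟩ := exists_isGreedyClustering C (fun j => {i ∈ F | dist i j ≤ r j}) r x
    (by positivity) (fun j hj i hi => (h.1 i (mem_filter.1 hi).1 j hj).1)
    (fun j hj => hθη ▸ h.one_div_one_add_le_sum_filter hε hj)
  set S : X → Finset X := fun j => {i ∈ F | dist i j ≤ r j} ∩ {c ∈ Z | r c ≤ r j}.biUnion G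
  set z : X → X → ℝ := fun i j => if i ∈ S j then x i j / ((1 + ε) * ∑ i ∈ S j, x i j) else 0
  have hA : ∀ j ∈ C, 0 < ∑ i ∈ S j, x i j := fun j hj =>
    (by positivity : 0 < η).trans_le (hg.le_sum_covered j hj)
  have hD : ∀ j ∈ C, 0 ≤ D j := fun j hj =>
    sum_nonneg fun i hi => mul_nonneg dist_nonneg (h.1 i hi j hj).1
  have hzsum : ∀ j ∈ C, ∑ i ∈ F, z i j = 1 / (1 + ε) := fun j hj =>
    sum_ite_mem_div_mul_sum (inter_subset_left.trans (filter_subset _ _)) (hA j hj).ne' _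
  refine ⟨Z, G, z, fun j => 3 * r j, hg.isClusteredAssignment (by positivity)
    (fun j hj => mul_nonneg (by positivity) (hD j hj))
    (fun i hi j hj => ite_nonneg (div_nonneg (h.1 i hi j hj).1
      (mul_pos (by positivity) (hA j hj)).le) le_rfl)
    (fun i _ j _ hz => of_not_not fun hi => hz (if_neg hi)), ?_, hzsum, ?_, fun i hi => ?_⟩
  · have := h.card_mul_le hg.subset hg.pairwiseDisjoint
      (fun c hc => (hg.cluster_subset c hc).trans (filter_subset _ _)) hg.le_sum_cluster
    rwa [mul_one_div, div_le_iff₀ (by positivity), mul_comm] at this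
  · calc ∑ j ∈ C, 3 * r j * ∑ i ∈ F, z i j = 3 / ε * ∑ j ∈ C, D j := by
          rw [mul_sum]
          refine sum_congr rfl fun j hj => ?_
          rw [hzsum j hj]
          simp only [r]
          field_simp
      _ ≤ 3 / ε * (T * k) := by gcongr; exact h.sum_sum_dist_mul_le hT
  · refine h.sum_dist_mul_le hT hi (by positivity) fun j hj => ?_
    have : (1 + 2 * ε) / ε = 1 / ((1 + ε) * η) := by simp only [η]; field_simp
    rw [this, one_div_mul_eq_div]
    exact ite_mem_div_mul_sum_le (w := fun i => x i j) (h.1 i hi j hj).1 (by positivity)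
      (by positivity) (hg.le_sum_covered j hj)

end SCLPFeasible

theorem mlksc_rounding_fractional_general {X : Type*} [MetricSpace X]
    (F C : Finset X) (T : ℝ) (hT : 0 < T) (k : ℕ)
    (x : X → X → ℝ) (y : X → ℝ) (hfeas : SCLPFeasible F C T k x y)
    (ε : ℝ) (hε0 : 0 < ε) :
    ∃ (ydot : X → ℝ) (xdot : X → X → ℝ),
      (∀ i ∈ F, ydot i = 0 ∨ ydot i = 1) ∧
      (∑ i ∈ F, ydot i ≤ (1 + 4 * ε) * k) ∧
      (∀ i ∈ F, ∀ j ∈ C, xdot i j ∈ Set.Icc (0 : ℝ) 1) ∧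
      (∀ i ∈ F, ∀ j ∈ C, xdot i j ≤ ydot i) ∧
      (∀ j ∈ C, 1 / (1 + ε) ≤ ∑ i ∈ F, xdot i j ∧ ∑ i ∈ F, xdot i j ≤ 1) ∧
      (∀ i ∈ F, ∑ j ∈ C, dist i j * xdot i j ≤
        12 * (1 + (1 + ε) / ε ^ 2) * T * ydot i) := by
  classical
  obtain ⟨Z, G, z, ρ, hclust, hZ, hz, hρ, hload⟩ := hfeas.exists_isClusteredAssignment hT.le hε0
  -- this extra load per open facility turns the `3 T k / ε` weighted demand into `2 ε k` openings
  set a := 3 / (2 * ε ^ 2) * T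
  obtain ⟨O, xdot, hOF, hO, hx0, hxO, hx1, hxsum, hxload⟩ := hclust.exists_rounding (a := a)
    (by positivity)
  have hle1 : 1 / (1 + ε) ≤ 1 := by rw [div_le_one (by positivity)]; linarith
  have hx1' : ∀ i ∈ O, ∀ j ∈ C, xdot i j ≤ 1 := fun i hi j hj =>
    (hx1 i hi j hj).trans (hz j hj ▸ hle1)
  refine ⟨fun i => if i ∈ O then 1 else 0, xdot, fun i _ => (ite_eq_or_eq _ _ _).symm, ?_,
    fun i hiF j hj => ?_, fun i _ j hj => ?_, fun j hj => ?_, fun i hiF => ?_⟩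
  · rw [sum_boole, filter_mem_eq_inter, inter_eq_right.2 hOF]
    have : 3 / ε * (T * k) / a = 2 * ε * k := by simp only [a]; field_simp
    linarith [div_le_div_of_nonneg_right hρ (by positivity : 0 ≤ a)]
  · by_cases hi : i ∈ O
    · exact ⟨hx0 i hiF j hj, hx1' i hi j hj⟩
    · simp [hxO i hi j]
  · by_cases hi : i ∈ O
    · simpa [hi] using hx1' i hi j hj
    · simp [hi, hxO i hi j]
  · rw [hxsum j hj, hz j hj]
    exact ⟨le_rfl, hle1⟩
  · by_cases hi : i ∈ O
    · have hconst : (1 + 2 * ε) / ε + 3 / (2 * ε ^ 2) ≤ 12 * (1 + (1 + ε) / ε ^ 2) := by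
        rw [div_add_div _ _ hε0.ne' (by positivity), div_le_iff₀ (by positivity)]
        field_simp
        nlinarith
      calc ∑ j ∈ C, dist i j * xdot i j ≤ (1 + 2 * ε) / ε * T + a :=
            (hxload i hi).trans (add_le_add_left (hload i hiF) a)
        _ ≤ 12 * (1 + (1 + ε) / ε ^ 2) * T * (if i ∈ O then 1 else 0) := by
            rw [if_pos hi, mul_one, ← add_mul]
            exact mul_le_mul_of_nonneg_right hconst hT.le
    · simp [hi, hxO i hi]

/-- The fractional-opening rounding for MLkSC (claim in the proof of Theorem 3):
from a feasible solution of SC-LP(T, k) one obtains an integral opening `ẏ` with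
total at most `(1+4ε)k` and a fractional assignment `ẋ` serving at least a
`1/(1+ε)` fraction of each client, with loads at most `12(1 + (1+ε)/ε²)·T·ẏ_i`. -/
theorem mlksc_rounding_fractional {X : Type*} [MetricSpace X]
    (F C : Finset X) (hFC : Disjoint F C) (T : ℝ) (hT : 0 < T) (k : ℕ)
    (x : X → X → ℝ) (y : X → ℝ) (hfeas : SCLPFeasible F C T k x y)
    (ε : ℝ) (hε0 : 0 < ε) (hε1 : ε < 1) :
    ∃ (ydot : X → ℝ) (xdot : X → X → ℝ),
      (∀ i ∈ F, ydot i = 0 ∨ ydot i = 1) ∧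
      (∑ i ∈ F, ydot i ≤ (1 + 4 * ε) * k) ∧
      (∀ i ∈ F, ∀ j ∈ C, xdot i j ∈ Set.Icc (0 : ℝ) 1) ∧
      (∀ i ∈ F, ∀ j ∈ C, xdot i j ≤ ydot i) ∧
      (∀ j ∈ C, 1 / (1 + ε) ≤ ∑ i ∈ F, xdot i j ∧ ∑ i ∈ F, xdot i j ≤ 1) ∧
      (∀ i ∈ F, ∑ j ∈ C, dist i j * xdot i j ≤
        12 * (1 + (1 + ε) / ε ^ 2) * T * ydot i) :=
  mlksc_rounding_fractional_general F C T hT k x y hfeas ε hε0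
end

section
/- Let F, C be disjoint finite sets with a metric d on F ∪ C, let T > 0 and k ∈ ℕ, let (x, y) be a feasible solution to SC-LP(T, k), let ε ∈ (0, 1), and set ρ := (1 + ε)/ε and D(j) := ∑_{i ∈ F} d(i,j)·x_{ij}. Then there exist x̂ : F × C → [0, 1] and ŷ : F → [0, 1] such that: ∑_{i ∈ F} ŷ_i ≤ (1 + ε)·k; x̂_{ij} ≤ ŷ_i for all i, j; ∑_{i ∈ F} x̂_{ij} = 1 for every j ∈ C; if x̂_{ij} > 0 then x_{ij} > 0 and d(i, j) ≤ ρ·D(j); and L(i, x̂) ≤ (1 + ε)·T·ŷ_i for every i ∈ F. -/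
open Finset

section Filtering

variable {ι : Type*} {s : Finset ι} {w d : ι → ℝ}

/-- Markov's inequality, in a form that also covers a vanishing mean `∑ d w`. -/
theorem mul_sum_filter_lt_le_one {ρ : ℝ} (hw : ∀ i ∈ s, 0 ≤ w i)
    (hd : ∀ i ∈ s, 0 ≤ d i) :
    ρ * ∑ i ∈ s with ρ * ∑ u ∈ s, d u * w u < d i, w i ≤ 1 := by
  have hterm : ∀ i ∈ s, 0 ≤ d i * w i := fun i hi => mul_nonneg (hd i hi) (hw i hi)
  generalize hDdef : ∑ u ∈ s, d u * w u = D
  rcases (hDdef ▸ sum_nonneg hterm : 0 ≤ D).eq_or_lt with hD | hD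
  · have hzero := (sum_eq_zero_iff_of_nonneg hterm).1 (hDdef.trans hD.symm)
    have hfar : ∑ i ∈ s with ρ * D < d i, w i = 0 := by
      refine sum_eq_zero fun i hi => ?_
      obtain ⟨his, hdi⟩ := mem_filter.1 hi
      rw [← hD, mul_zero] at hdi
      exact (mul_eq_zero.1 (hzero i his)).resolve_left hdi.ne'
    simp [hfar]
  · have hmarkov : ρ * D * ∑ i ∈ s with ρ * D < d i, w i ≤ D :=
      calc ρ * D * ∑ i ∈ s with ρ * D < d i, w i
          = ∑ i ∈ s with ρ * D < d i, ρ * D * w i := mul_sum _ _ _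
        _ ≤ ∑ i ∈ s with ρ * D < d i, d i * w i := sum_le_sum fun i hi =>
            mul_le_mul_of_nonneg_right (mem_filter.1 hi).2.le (hw i (mem_filter.1 hi).1)
        _ ≤ D := hDdef ▸
            sum_le_sum_of_subset_of_nonneg (filter_subset _ _) fun i hi _ => hterm i hi
    rw [mul_right_comm] at hmarkov
    exact le_of_mul_le_mul_right (by linarith) hD

variable (s w d) in
noncomputable def nearMass (θ : ℝ) : ℝ :=
  ∑ i ∈ s with d i ≤ θ, w i

variable (s w d) in
noncomputable def filterWeights (θ : ℝ) (i : ι) : ℝ :=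
  if d i ≤ θ then w i / nearMass s w d θ else 0

theorem inv_one_add_le_nearMass {ε : ℝ} (hε : 0 < ε) (hw : ∀ i ∈ s, 0 ≤ w i)
    (hd : ∀ i ∈ s, 0 ≤ d i) (hsum : ∑ i ∈ s, w i = 1) :
    (1 + ε)⁻¹ ≤ nearMass s w d ((1 + ε) / ε * ∑ u ∈ s, d u * w u) := by
  have hmarkov := mul_sum_filter_lt_le_one (ρ := (1 + ε) / ε) hw hd
  have hsplit := sum_filter_add_sum_filter_not s
    (fun i => d i ≤ (1 + ε) / ε * ∑ u ∈ s, d u * w u) w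
  simp only [not_le, hsum] at hsplit
  rw [nearMass, inv_le_iff_one_le_mul₀ (by positivity)]
  rw [div_mul_eq_mul_div, div_le_one hε] at hmarkov
  nlinarith

theorem sum_filterWeights {θ : ℝ} (hM : nearMass s w d θ ≠ 0) :
    ∑ i ∈ s, filterWeights s w d θ i = 1 := by
  simp only [filterWeights]
  rw [← sum_filter, ← sum_div, ← nearMass, div_self hM]

theorem filterWeights_nonneg {θ : ℝ} {i : ι} (hM : 0 ≤ nearMass s w d θ) (hwi : 0 ≤ w i) :
    0 ≤ filterWeights s w d θ i := by
  unfold filterWeights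
  split_ifs
  exacts [div_nonneg hwi hM, le_rfl]

theorem filterWeights_le_mul {θ K : ℝ} {i : ι} (hM : 0 < nearMass s w d θ)
    (hK : (nearMass s w d θ)⁻¹ ≤ K) (hwi : 0 ≤ w i) :
    filterWeights s w d θ i ≤ K * w i := by
  unfold filterWeights
  split_ifs
  · rw [div_eq_inv_mul]
    exact mul_le_mul_of_nonneg_right hK hwi
  · exact mul_nonneg ((inv_pos.2 hM).le.trans hK) hwi

theorem pos_and_le_of_filterWeights_pos {θ : ℝ} {i : ι} (hM : 0 < nearMass s w d θ)
    (h : 0 < filterWeights s w d θ i) : 0 < w i ∧ d i ≤ θ := by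
  unfold filterWeights at h
  split_ifs at h with hdi
  · exact ⟨(div_pos_iff_of_pos_right hM).1 h, hdi⟩
  · exact absurd h (lt_irrefl 0)

end Filtering

theorem lin_vitter_filtering_general {X : Type*} [MetricSpace X]
    (F C : Finset X) (T : ℝ) (hT : 0 < T) (k : ℕ)
    (x : X → X → ℝ) (y : X → ℝ) (hfeas : SCLPFeasible F C T k x y)
    (ε : ℝ) (hε0 : 0 < ε)
    (ρ : ℝ) (hρ : ρ = (1 + ε) / ε) :
    ∃ (xh : X → X → ℝ) (yh : X → ℝ),
      (∀ i ∈ F, ∀ j ∈ C, xh i j ∈ Set.Icc (0 : ℝ) 1) ∧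
      (∀ i ∈ F, yh i ∈ Set.Icc (0 : ℝ) 1) ∧
      (∑ i ∈ F, yh i ≤ (1 + ε) * k) ∧
      (∀ i ∈ F, ∀ j ∈ C, xh i j ≤ yh i) ∧
      (∀ j ∈ C, ∑ i ∈ F, xh i j = 1) ∧
      (∀ i ∈ F, ∀ j ∈ C, 0 < xh i j →
        0 < x i j ∧ dist i j ≤ ρ * ∑ u ∈ F, dist u j * x u j) ∧
      (∀ i ∈ F, ∑ j ∈ C, dist i j * xh i j ≤ (1 + ε) * T * yh i) := by
  obtain ⟨hx01, hy01, hload, hk, hdem, hxy, -⟩ := hfeas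
  subst hρ
  set θ : X → ℝ := fun j => (1 + ε) / ε * ∑ u ∈ F, dist u j * x u j
  set M : X → ℝ := fun j => nearMass F (fun u => x u j) (fun u => dist u j) (θ j)
  set xh : X → X → ℝ := fun i j =>
    filterWeights F (fun u => x u j) (fun u => dist u j) (θ j) i
  have hM : ∀ j ∈ C, (1 + ε)⁻¹ ≤ M j := fun j hj =>
    inv_one_add_le_nearMass hε0 (fun u hu => (hx01 u hu j hj).1) (fun u _ => dist_nonneg)
      (hdem j hj)
  have hMpos : ∀ j ∈ C, 0 < M j := fun j hj =>
    (by positivity : (0 : ℝ) < (1 + ε)⁻¹).trans_le (hM j hj)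
  have hsum : ∀ j ∈ C, ∑ i ∈ F, xh i j = 1 := fun j hj => sum_filterWeights (hMpos j hj).ne'
  have hnn : ∀ i ∈ F, ∀ j ∈ C, 0 ≤ xh i j := fun i hi j hj =>
    filterWeights_nonneg (hMpos j hj).le (hx01 i hi j hj).1
  have hle_one : ∀ i ∈ F, ∀ j ∈ C, xh i j ≤ 1 := fun i hi j hj =>
    hsum j hj ▸ single_le_sum (fun u hu => hnn u hu j hj) hi
  have hle : ∀ i ∈ F, ∀ j ∈ C, xh i j ≤ (1 + ε) * x i j := fun i hi j hj =>
    filterWeights_le_mul (hMpos j hj) (inv_le_of_inv_le₀ (by positivity) (hM j hj))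
      (hx01 i hi j hj).1
  have hy_le : ∀ i ∈ F, y i ≤ min 1 ((1 + ε) * y i) := fun i hi =>
    le_min (hy01 i hi).2 (le_mul_of_one_le_left (hy01 i hi).1 (by linarith))
  refine ⟨xh, fun i => min 1 ((1 + ε) * y i),
    fun i hi j hj => ⟨hnn i hi j hj, hle_one i hi j hj⟩,
    fun i hi => ⟨(hy01 i hi).1.trans (hy_le i hi), min_le_left _ _⟩, ?_,
    fun i hi j hj => le_min (hle_one i hi j hj) ?_, hsum,
    fun i _ j hj h => pos_and_le_of_filterWeights_pos (w := fun u => x u j)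
      (d := fun u => dist u j) (hMpos j hj) h, fun i hi => ?_⟩
  · calc ∑ i ∈ F, min 1 ((1 + ε) * y i) ≤ ∑ i ∈ F, (1 + ε) * y i :=
          sum_le_sum fun i _ => min_le_right _ _
      _ = (1 + ε) * ∑ i ∈ F, y i := (mul_sum _ _ _).symm
      _ ≤ (1 + ε) * k := by gcongr
  · exact (hle i hi j hj).trans (by gcongr; exact hxy i hi j hj)
  · calc ∑ j ∈ C, dist i j * xh i j ≤ ∑ j ∈ C, (1 + ε) * (dist i j * x i j) :=
          sum_le_sum fun j hj => by
            rw [mul_left_comm]; exact mul_le_mul_of_nonneg_left (hle i hi j hj) dist_nonneg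
      _ = (1 + ε) * ∑ j ∈ C, dist i j * x i j := (mul_sum _ _ _).symm
      _ ≤ (1 + ε) * T * min 1 ((1 + ε) * y i) := by
          rw [mul_assoc]; gcongr; exact (hload i hi).trans (by gcongr; exact hy_le i hi)

/-- The Lin–Vitter filtering step: from a feasible solution of SC-LP(T, k) one
obtains `(x̂, ŷ)` with total opening at most `(1+ε)k`, full demands, loads at
most `(1+ε)·T·ŷ_i`, and every nonzero assignment within distance `ρ·D(j)` of
its client, where `ρ = (1+ε)/ε` and `D(j) = ∑_{i ∈ F} d(i,j)·x_{ij}`. -/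
theorem lin_vitter_filtering {X : Type*} [MetricSpace X]
    (F C : Finset X) (hFC : Disjoint F C) (T : ℝ) (hT : 0 < T) (k : ℕ)
    (x : X → X → ℝ) (y : X → ℝ) (hfeas : SCLPFeasible F C T k x y)
    (ε : ℝ) (hε0 : 0 < ε) (hε1 : ε < 1)
    (ρ : ℝ) (hρ : ρ = (1 + ε) / ε) :
    ∃ (xh : X → X → ℝ) (yh : X → ℝ),
      (∀ i ∈ F, ∀ j ∈ C, xh i j ∈ Set.Icc (0 : ℝ) 1) ∧
      (∀ i ∈ F, yh i ∈ Set.Icc (0 : ℝ) 1) ∧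
      (∑ i ∈ F, yh i ≤ (1 + ε) * k) ∧
      (∀ i ∈ F, ∀ j ∈ C, xh i j ≤ yh i) ∧
      (∀ j ∈ C, ∑ i ∈ F, xh i j = 1) ∧
      (∀ i ∈ F, ∀ j ∈ C, 0 < xh i j →
        0 < x i j ∧ dist i j ≤ ρ * ∑ u ∈ F, dist u j * x u j) ∧
      (∀ i ∈ F, ∑ j ∈ C, dist i j * xh i j ≤ (1 + ε) * T * yh i) :=
  lin_vitter_filtering_general F C T hT k x y hfeas ε hε0 ρ hρ
end

section
/- For all integers R ≥ 2 and M ≥ R there exist disjoint finite sets F and C with |F| = 2R and |C| = (M + R)·R, and a metric d on F ∪ C, such that: (a) SC-LP(1, 2R − 1) has a feasible fractional solution; and (b) every star cover of (F, C) of size at most 2R − 1 has load at least R. Consequently, for ε = 1/(2R), every star cover of size at most (1 + ε)·(2R − 1) has load at least R ≥ (1/(2ε)) times the optimal fractional load. -/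
open scoped NNReal

/-- A star cover of `(F, C)`: a finite collection of pairwise disjoint stars
`(f, C_f)` with `f ∈ F`, `C_f ⊆ C`, whose client sets have union `C`. -/
structure StarCover {X : Type*} [MetricSpace X] (F C : Finset X) where
  stars : Finset (X × Finset X)
  fac_mem : ∀ p ∈ stars, p.1 ∈ F
  cli_sub : ∀ p ∈ stars, p.2 ⊆ C
  fac_inj : ∀ p ∈ stars, ∀ q ∈ stars, p ≠ q → p.1 ≠ q.1
  cli_disj : ∀ p ∈ stars, ∀ q ∈ stars, p ≠ q → Disjoint p.2 q.2
  covers : ∀ c ∈ C, ∃ p ∈ stars, c ∈ p.2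

/-- The size of a star cover is its number of stars. -/
def StarCover.size {X : Type*} [MetricSpace X] {F C : Finset X}
    (S : StarCover F C) : ℕ :=
  S.stars.card

/-- The load of a star cover: the maximum over its stars `(f, C_f)` of
`∑_{c ∈ C_f} d(f, c)`. -/
noncomputable def StarCover.load {X : Type*} [MetricSpace X] {F C : Finset X}
    (S : StarCover F C) : ℝ :=
  ((S.stars.sup fun p => ∑ c ∈ p.2, nndist p.1 c : ℝ≥0) : ℝ)

open Finset

/-!
The instance consists of `R` far-apart gadgets, each made of two partner facilities with
their own clients, the partners at distance `R / n` when each has about `n` clients.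
Fractionally, every facility opens to the extent `1 - ε`, `ε = 1/(2R)`, serves its own
clients to that extent and its partner's clients to the extent `ε`, which costs about
`n · (R / n) · ε = 1/2 ≤ 1 - ε`; the `2R` facilities open `2R - 1` in total. A cover by
fewer than `2R` stars leaves some facility idle, and then its clients are served either
from another gadget, at distance more than `R`, or all together by its partner, at total
distance about `n · (R / n) = R`.
-/

namespace StarCover

variable {X : Type*} [MetricSpace X] {F C : Finset X} (S : StarCover F C)

lemma sum_dist_le_load {p : X × Finset X} (hp : p ∈ S.stars) :
    ∑ c ∈ p.2, dist p.1 c ≤ S.load := by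
  have h := NNReal.coe_le_coe.mpr
    (le_sup (f := fun p : X × Finset X => ∑ c ∈ p.2, nndist p.1 c) hp)
  simpa only [StarCover.load, NNReal.coe_sum, coe_nndist] using h

lemma eq_of_fst_eq {p q : X × Finset X} (hp : p ∈ S.stars) (hq : q ∈ S.stars)
    (h : p.1 = q.1) : p = q :=
  by_contra fun hne => S.fac_inj p hp q hq hne h

lemma exists_mem_forall_fst_ne (h : S.size < F.card) :
    ∃ f ∈ F, ∀ p ∈ S.stars, p.1 ≠ f := by
  classical
  obtain ⟨f, hfF, hf⟩ := exists_mem_notMem_of_card_lt_card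
    (s := S.stars.image Prod.fst) (card_image_le.trans_lt h)
  exact ⟨f, hfF, fun p hp hpf => hf (mem_image.mpr ⟨p, hp, hpf⟩)⟩

/-- Stars have distinct centres, so the clients of `C'` that are not served from distance
at least `t` all lie in the one star centred at `g`. -/
lemma le_load_of_forall_fst_ne {C' : Finset X} (hC' : C' ⊆ C) {f g : X}
    (hf : ∀ p ∈ S.stars, p.1 ≠ f) {t : ℝ}
    (hfar : ∀ h ∈ F, h ≠ f → h ≠ g → ∀ c ∈ C', t ≤ dist h c)
    (hnear : t ≤ ∑ c ∈ C', dist g c) : t ≤ S.load := by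
  by_cases hout : ∃ p ∈ S.stars, ∃ c ∈ p.2, c ∈ C' ∧ p.1 ≠ g
  · obtain ⟨p, hp, c, hcp, hcC', hpg⟩ := hout
    calc t ≤ dist p.1 c := hfar p.1 (S.fac_mem p hp) (hf p hp) hpg c hcC'
      _ ≤ ∑ c ∈ p.2, dist p.1 c :=
        single_le_sum (f := fun c => dist p.1 c) (fun _ _ => dist_nonneg) hcp
      _ ≤ S.load := S.sum_dist_le_load hp
  push Not at hout
  rcases C'.eq_empty_or_nonempty with rfl | ⟨c₀, hc₀⟩
  · exact (by simpa using hnear : t ≤ 0).trans (NNReal.coe_nonneg _)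
  obtain ⟨p, hp, hc₀p⟩ := S.covers c₀ (hC' hc₀)
  have hpg : p.1 = g := hout p hp c₀ hc₀p hc₀
  have hsub : C' ⊆ p.2 := fun c hc => by
    obtain ⟨q, hq, hcq⟩ := S.covers c (hC' hc)
    rwa [S.eq_of_fst_eq hp hq (hpg.trans (hout q hq c hcq hc).symm)]
  calc t ≤ ∑ c ∈ C', dist g c := hnear
    _ ≤ ∑ c ∈ p.2, dist p.1 c :=
      hpg ▸ sum_le_sum_of_subset_of_nonneg hsub fun _ _ _ => dist_nonneg
    _ ≤ S.load := S.sum_dist_le_load hp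

end StarCover

namespace SCLPFeasible

variable {X : Type*} [MetricSpace X] {F C : Finset X} {T : ℝ} {k : ℕ} {x : X → X → ℝ}
  {y : X → ℝ}

lemma nonneg (h : SCLPFeasible F C T k x y) (hC : C.Nonempty) : 0 ≤ T := by
  obtain ⟨j, hj⟩ := hC
  obtain ⟨i, hi, hx⟩ : ∃ i ∈ F, x i j ≠ 0 :=
    exists_ne_zero_of_sum_ne_zero (by rw [h.2.2.2.2.1 j hj]; exact one_ne_zero)
  exact dist_nonneg.trans (not_lt.mp fun hT => hx (h.2.2.2.2.2.2 i hi j hj hT))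

lemma sInf_le (h : SCLPFeasible F C T k x y) (hC : C.Nonempty) :
    sInf {T | ∃ (x : X → X → ℝ) (y : X → ℝ), SCLPFeasible F C T k x y} ≤ T :=
  csInf_le ⟨0, fun _ ⟨_, _, h'⟩ => h'.nonneg hC⟩ ⟨x, y, h⟩

end SCLPFeasible

namespace GapInstance

variable (R M : ℕ)

/-- Gadget `ℓ` has two sides `s`, one per facility. Every side has `R` clients, except in
gadget `0`, which splits `R * (M - R + 2)` clients as evenly as possible; for `R ≤ M` the
total is `(M + R) * R`. -/
def sideSize (ℓ : ℕ) (s : Bool) : ℕ :=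
  if ℓ = 0 then if s then R * (M - R + 2) / 2 else (R * (M - R + 2) + 1) / 2 else R

noncomputable def width (ℓ : ℕ) : ℝ := R / sideSize R M ℓ true

noncomputable def height (ℓ j : ℕ) : ℝ := width R M ℓ / (4 * R) * (1 / 2) ^ j

noncomputable def column (ℓ : ℕ) (s : Bool) : ℝ := (R + 2) * ℓ + if s then width R M ℓ else 0

/- `ℝ × ℝ` carries the sup metric. A client stands at a small `height` straight above its
own facility, so it is at distance exactly `width` from the partner facility. -/

noncomputable def facility (ℓ : ℕ) (s : Bool) : ℝ × ℝ := (column R M ℓ s, 0)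

noncomputable def client (ℓ : ℕ) (s : Bool) (j : ℕ) : ℝ × ℝ := (column R M ℓ s, height R M ℓ j)

noncomputable def facilities : Finset (ℝ × ℝ) :=
  (range R ×ˢ univ).image fun i => facility R M i.1 i.2

noncomputable def sideClients (ℓ : ℕ) (s : Bool) : Finset (ℝ × ℝ) :=
  (range (sideSize R M ℓ s)).image (client R M ℓ s)

noncomputable def clients : Finset (ℝ × ℝ) :=
  (range R ×ˢ univ).biUnion fun i => sideClients R M i.1 i.2

noncomputable def eps : ℝ := 1 / (2 * R)

noncomputable def lpX (i c : ℝ × ℝ) : ℝ :=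
  if dist i c ≤ 1 then if i.1 = c.1 then 1 - eps R else eps R else 0

variable {R M}

lemma le_sideSize (ℓ : ℕ) (s : Bool) : R ≤ sideSize R M ℓ s := by
  have : R * 2 ≤ R * (M - R + 2) := Nat.mul_le_mul_left R (by omega)
  unfold sideSize
  split_ifs <;> omega

lemma sideSize_true_le (ℓ : ℕ) (s : Bool) : sideSize R M ℓ true ≤ sideSize R M ℓ s := by
  unfold sideSize
  cases s <;> simp only [Bool.false_eq_true, if_true, if_false] <;> split_ifs <;> omega

/-- An odd `R * (M - R + 2)` forces `R` odd, so the sides of gadget `0` differ only if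
`R ≥ 3`. -/
lemma sideSize_eq_or (hR : 2 ≤ R) (ℓ : ℕ) (s : Bool) :
    sideSize R M ℓ s = sideSize R M ℓ true ∨
      (sideSize R M ℓ s = sideSize R M ℓ true + 1 ∧ 3 ≤ R) := by
  unfold sideSize
  cases s <;> split_ifs <;> simp_all
  rcases Nat.even_or_odd R with ⟨r, rfl⟩ | ⟨r, rfl⟩
  · left
    rw [show (r + r) * (M - (r + r) + 2) = 2 * (r * (M - (r + r) + 2)) by ring]
    omega
  · omega

lemma sideSize_mul_le (hR : 2 ≤ R) (ℓ : ℕ) (s : Bool) :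
    sideSize R M ℓ s * R ≤ 2 * sideSize R M ℓ true * (R - 1) := by
  have hb := le_sideSize (R := R) (M := M) ℓ true
  obtain ⟨r, rfl⟩ : ∃ r, R = r + 2 := ⟨R - 2, by omega⟩
  rw [show r + 2 - 1 = r + 1 by omega]
  rcases sideSize_eq_or hR ℓ s with h | ⟨h, h3⟩ <;> rw [h] <;> nlinarith

lemma sum_sideSize (hM : R ≤ M) :
    ∑ ℓ ∈ range R, ∑ s, sideSize R M ℓ s = (M + R) * R := by
  have h0 : ∑ s, sideSize R M 0 s = R * (M - R + 2) := by
    simp [sideSize]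
    omega
  have hsucc (ℓ : ℕ) : ∑ s, sideSize R M (ℓ + 1) s = 2 * R := by
    simp [sideSize, two_mul]
  obtain ⟨t, rfl⟩ := Nat.exists_eq_add_of_le hM
  cases R with
  | zero => simp
  | succ r =>
    rw [sum_range_succ', h0]
    simp only [hsucc, sum_const, card_range, smul_eq_mul, Nat.add_sub_cancel_left]
    ring

lemma width_nonneg (ℓ : ℕ) : 0 ≤ width R M ℓ := by
  unfold width
  positivity

lemma width_pos (hR : 0 < R) (ℓ : ℕ) : 0 < width R M ℓ :=
  div_pos (by exact_mod_cast hR) (by exact_mod_cast hR.trans_le (le_sideSize ℓ true))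

lemma width_le_one (ℓ : ℕ) : width R M ℓ ≤ 1 :=
  div_le_one_of_le₀ (by exact_mod_cast le_sideSize ℓ true) (Nat.cast_nonneg _)

lemma le_sideSize_mul_width (hR : 0 < R) (ℓ : ℕ) (s : Bool) :
    (R : ℝ) ≤ sideSize R M ℓ s * width R M ℓ := by
  have hb : (0 : ℝ) < sideSize R M ℓ true := by
    exact_mod_cast hR.trans_le (le_sideSize ℓ true)
  calc (R : ℝ) = sideSize R M ℓ true * width R M ℓ := by
        unfold width
        field_simp
    _ ≤ sideSize R M ℓ s * width R M ℓ :=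
        mul_le_mul_of_nonneg_right (by exact_mod_cast sideSize_true_le ℓ s) (width_nonneg ℓ)

lemma sideSize_mul_width_mul_eps_le (hR : 2 ≤ R) (ℓ : ℕ) (s : Bool) :
    sideSize R M ℓ s * width R M ℓ * eps R ≤ 1 - 2 * eps R := by
  have hb : (0 : ℝ) < sideSize R M ℓ true := by
    exact_mod_cast (by omega : 0 < R).trans_le (le_sideSize ℓ true)
  have key : (sideSize R M ℓ s : ℝ) * R ≤ 2 * sideSize R M ℓ true * (R - 1) := by
    have h := sideSize_mul_le (M := M) hR ℓ s
    rw [← Nat.cast_le (α := ℝ)] at h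
    push_cast [Nat.cast_sub (by omega : 1 ≤ R)] at h
    exact h
  unfold width eps
  field_simp
  linarith

lemma eps_nonneg : 0 ≤ eps R := by
  unfold eps
  positivity

lemma eps_le (hR : 0 < R) : eps R ≤ 1 - eps R := by
  have hR' : (1 : ℝ) ≤ R := by exact_mod_cast hR
  have h : 1 / (2 * (R : ℝ)) ≤ 1 / 2 := one_div_le_one_div_of_le (by norm_num) (by linarith)
  unfold eps
  linarith

lemma height_nonneg (ℓ j : ℕ) : 0 ≤ height R M ℓ j := by
  unfold height width
  positivity

lemma height_pos (hR : 0 < R) (ℓ j : ℕ) : 0 < height R M ℓ j := by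
  have hR' : (0 : ℝ) < R := by exact_mod_cast hR
  have := width_pos (M := M) hR ℓ
  unfold height
  positivity

lemma height_le_width (hR : 0 < R) (ℓ j : ℕ) : height R M ℓ j ≤ width R M ℓ := by
  have hR' : (1 : ℝ) ≤ R := by exact_mod_cast hR
  have hw := width_nonneg (R := R) (M := M) ℓ
  calc height R M ℓ j ≤ width R M ℓ / (4 * R) * 1 := by
        unfold height
        gcongr
        exact pow_le_one₀ (by norm_num) (by norm_num)
    _ ≤ width R M ℓ := by
        rw [mul_one]
        exact div_le_self hw (by linarith)

lemma sum_height_le (hR : 0 < R) (ℓ n : ℕ) : ∑ j ∈ range n, height R M ℓ j ≤ eps R := by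
  have hR' : (0 : ℝ) < R := by exact_mod_cast hR
  have hw := width_le_one (R := R) (M := M) ℓ
  calc ∑ j ∈ range n, height R M ℓ j
      = width R M ℓ / (4 * R) * ∑ j ∈ range n, (1 / 2 : ℝ) ^ j := by
        simp only [height, mul_sum]
    _ ≤ 1 / (4 * R) * 2 := by
        gcongr
        exact sum_geometric_two_le n
    _ = eps R := by
        unfold eps
        field_simp
        norm_num

lemma height_injective (hR : 0 < R) (ℓ : ℕ) : Function.Injective (height R M ℓ) := by
  have hR' : (0 : ℝ) < R := by exact_mod_cast hR
  have hw := width_pos (M := M) hR ℓ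
  intro j j' h
  refine pow_right_injective₀ (a := (1 / 2 : ℝ)) (by norm_num) (by norm_num) ?_
  exact mul_left_cancel₀ (by positivity) h

lemma column_mem_Icc (ℓ : ℕ) (s : Bool) :
    column R M ℓ s ∈ Set.Icc ((R + 2) * ℓ : ℝ) ((R + 2) * ℓ + 1) := by
  have := width_nonneg (R := R) (M := M) ℓ
  have := width_le_one (R := R) (M := M) ℓ
  unfold column
  constructor <;> split_ifs <;> linarith

lemma le_abs_column_sub_column {ℓ ℓ' : ℕ} (hℓ : ℓ ≠ ℓ') (s s' : Bool) :
    (R : ℝ) + 1 ≤ |column R M ℓ s - column R M ℓ' s'| := by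
  obtain ⟨h1, h2⟩ := column_mem_Icc (R := R) (M := M) ℓ s
  obtain ⟨h1', h2'⟩ := column_mem_Icc (R := R) (M := M) ℓ' s'
  have hR : (0 : ℝ) ≤ R := Nat.cast_nonneg R
  rcases Nat.lt_or_gt_of_ne hℓ with h | h
  · have h' : (ℓ : ℝ) + 1 ≤ ℓ' := by exact_mod_cast h
    rw [abs_sub_comm, le_abs]
    left
    nlinarith
  · have h' : (ℓ' : ℝ) + 1 ≤ ℓ := by exact_mod_cast h
    rw [le_abs]
    left
    nlinarith

lemma abs_column_sub_column_of_ne {s s' : Bool} (hs : s ≠ s') (ℓ : ℕ) :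
    |column R M ℓ s - column R M ℓ s'| = width R M ℓ := by
  have := width_nonneg (R := R) (M := M) ℓ
  cases s <;> cases s' <;> simp_all [column, abs_of_nonneg]

lemma column_inj (hR : 0 < R) {ℓ ℓ' : ℕ} {s s' : Bool} :
    column R M ℓ s = column R M ℓ' s' ↔ ℓ = ℓ' ∧ s = s' := by
  refine ⟨fun h => ?_, fun ⟨hℓ, hs⟩ => hℓ ▸ hs ▸ rfl⟩
  have h0 : |column R M ℓ s - column R M ℓ' s'| = 0 := by rw [h, sub_self, abs_zero]
  by_cases hℓ : ℓ = ℓ'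
  · subst hℓ
    refine ⟨rfl, by_contra fun hs => ?_⟩
    exact (width_pos hR ℓ).ne' ((abs_column_sub_column_of_ne hs ℓ).symm.trans h0)
  · have := le_abs_column_sub_column (R := R) (M := M) hℓ s s'
    linarith

lemma dist_facility_client (ℓ : ℕ) (s : Bool) (ℓ' : ℕ) (s' : Bool) (j : ℕ) :
    dist (facility R M ℓ s) (client R M ℓ' s' j) =
      max |column R M ℓ s - column R M ℓ' s'| (height R M ℓ' j) := by
  simp [facility, client, Prod.dist_eq, Real.dist_eq, abs_of_nonneg (height_nonneg ℓ' j)]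

lemma dist_facility_client_self (ℓ : ℕ) (s : Bool) (j : ℕ) :
    dist (facility R M ℓ s) (client R M ℓ s j) = height R M ℓ j := by
  simp [dist_facility_client, height_nonneg]

lemma dist_facility_client_of_ne (hR : 0 < R) {s s' : Bool} (hs : s ≠ s') (ℓ j : ℕ) :
    dist (facility R M ℓ s) (client R M ℓ s' j) = width R M ℓ := by
  rw [dist_facility_client, abs_column_sub_column_of_ne hs, max_eq_left (height_le_width hR ℓ j)]

lemma le_dist_facility_client {ℓ ℓ' : ℕ} (hℓ : ℓ ≠ ℓ') (s s' : Bool) (j : ℕ) :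
    (R : ℝ) + 1 ≤ dist (facility R M ℓ s) (client R M ℓ' s' j) := by
  rw [dist_facility_client]
  exact (le_abs_column_sub_column hℓ s s').trans (le_max_left _ _)

lemma lpX_facility_client (hR : 0 < R) (ℓ : ℕ) (s : Bool) (ℓ' : ℕ) (s' : Bool) (j : ℕ) :
    lpX R (facility R M ℓ s) (client R M ℓ' s' j) =
      if ℓ = ℓ' then if s = s' then 1 - eps R else eps R else 0 := by
  have hcol : (facility R M ℓ s).1 = (client R M ℓ' s' j).1 ↔ ℓ = ℓ' ∧ s = s' := column_inj hR
  unfold lpX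
  by_cases hℓ : ℓ = ℓ'
  · subst hℓ
    have hdist : dist (facility R M ℓ s) (client R M ℓ s' j) ≤ 1 := by
      by_cases hs : s = s'
      · rw [hs, dist_facility_client_self]
        exact (height_le_width hR ℓ j).trans (width_le_one ℓ)
      · rw [dist_facility_client_of_ne hR hs]
        exact width_le_one ℓ
    simp [hdist, hcol]
  · have := le_dist_facility_client (R := R) (M := M) hℓ s s' j
    have hR' : (0 : ℝ) < R := by exact_mod_cast hR
    rw [if_neg (by linarith), if_neg hℓ]

lemma mem_facilities {i : ℝ × ℝ} :
    i ∈ facilities R M ↔ ∃ ℓ < R, ∃ s, facility R M ℓ s = i := by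
  simp [facilities]

lemma mem_sideClients {ℓ : ℕ} {s : Bool} {c : ℝ × ℝ} :
    c ∈ sideClients R M ℓ s ↔ ∃ j < sideSize R M ℓ s, client R M ℓ s j = c := by
  simp [sideClients]

lemma mem_clients {c : ℝ × ℝ} :
    c ∈ clients R M ↔ ∃ ℓ < R, ∃ s, c ∈ sideClients R M ℓ s := by
  simp only [clients, mem_biUnion, mem_product, mem_range, mem_univ, and_true, Prod.exists]
  exact ⟨fun ⟨ℓ, s, hℓ, hc⟩ => ⟨ℓ, hℓ, s, hc⟩, fun ⟨ℓ, hℓ, s, hc⟩ => ⟨ℓ, s, hℓ, hc⟩⟩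

lemma sideClients_subset_clients {ℓ : ℕ} (hℓ : ℓ < R) (s : Bool) :
    sideClients R M ℓ s ⊆ clients R M :=
  fun _ hc => mem_clients.mpr ⟨ℓ, hℓ, s, hc⟩

lemma card_sideClients (hR : 0 < R) (ℓ : ℕ) (s : Bool) :
    (sideClients R M ℓ s).card = sideSize R M ℓ s := by
  rw [sideClients, card_image_of_injective _ fun _ _ h => height_injective hR ℓ
    (congrArg Prod.snd h), card_range]

lemma pairwiseDisjoint_sideClients (hR : 0 < R) :
    ((range R ×ˢ univ : Finset (ℕ × Bool)) : Set (ℕ × Bool)).PairwiseDisjoint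
      fun i => sideClients R M i.1 i.2 := by
  rintro ⟨ℓ, s⟩ - ⟨ℓ', s'⟩ - hne
  refine disjoint_left.mpr fun c hc hc' => hne ?_
  obtain ⟨j, -, rfl⟩ := mem_sideClients.mp hc
  obtain ⟨j', -, h⟩ := mem_sideClients.mp hc'
  obtain ⟨rfl, rfl⟩ := (column_inj hR).mp (congrArg Prod.fst h).symm
  rfl

lemma sum_facilities (hR : 0 < R) (g : ℝ × ℝ → ℝ) :
    ∑ i ∈ facilities R M, g i = ∑ ℓ ∈ range R, ∑ s, g (facility R M ℓ s) := by
  rw [facilities, sum_image fun i _ i' _ h => Prod.ext_iff.mpr (column_inj hR |>.mp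
    (congrArg Prod.fst h)), sum_product]

lemma sum_sideClients (hR : 0 < R) (ℓ : ℕ) (s : Bool) (g : ℝ × ℝ → ℝ) :
    ∑ c ∈ sideClients R M ℓ s, g c = ∑ j ∈ range (sideSize R M ℓ s), g (client R M ℓ s j) :=
  sum_image fun _ _ _ _ h => height_injective hR ℓ (congrArg Prod.snd h)

lemma sum_clients (hR : 0 < R) (g : ℝ × ℝ → ℝ) :
    ∑ c ∈ clients R M, g c = ∑ ℓ ∈ range R, ∑ s, ∑ c ∈ sideClients R M ℓ s, g c := by
  rw [clients, sum_biUnion (pairwiseDisjoint_sideClients hR), sum_product]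

lemma card_facilities (hR : 0 < R) : (facilities R M).card = 2 * R := by
  rw [facilities, card_image_of_injOn fun i _ i' _ h => Prod.ext_iff.mpr (column_inj hR |>.mp
    (congrArg Prod.fst h)), card_product, card_range, card_univ, Fintype.card_bool, mul_comm]

lemma card_clients (hR : 0 < R) (hM : R ≤ M) : (clients R M).card = (M + R) * R := by
  rw [clients, card_biUnion (pairwiseDisjoint_sideClients hR), sum_product, ← sum_sideSize hM]
  simp only [card_sideClients hR]

lemma disjoint_facilities_clients (hR : 0 < R) : Disjoint (facilities R M) (clients R M) := by
  refine disjoint_left.mpr fun c hf hc => ?_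
  obtain ⟨ℓ, -, s, rfl⟩ := mem_facilities.mp hf
  obtain ⟨ℓ', -, s', hc⟩ := mem_clients.mp hc
  obtain ⟨j, -, h⟩ := mem_sideClients.mp hc
  exact (height_pos hR ℓ' j).ne' (congrArg Prod.snd h)

lemma sum_dist_mul_lpX_sideClients_self (hR : 0 < R) (ℓ : ℕ) (s : Bool) :
    ∑ c ∈ sideClients R M ℓ s, dist (facility R M ℓ s) c * lpX R (facility R M ℓ s) c =
      (∑ j ∈ range (sideSize R M ℓ s), height R M ℓ j) * (1 - eps R) := by
  simp [sum_sideClients hR, dist_facility_client_self, lpX_facility_client hR, sum_mul]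

lemma sum_dist_mul_lpX_sideClients_of_ne (hR : 0 < R) {s s' : Bool} (hs : s ≠ s') (ℓ : ℕ) :
    ∑ c ∈ sideClients R M ℓ s', dist (facility R M ℓ s) c * lpX R (facility R M ℓ s) c =
      sideSize R M ℓ s' * width R M ℓ * eps R := by
  simp [sum_sideClients hR, dist_facility_client_of_ne hR hs, lpX_facility_client hR, hs,
    mul_assoc]

lemma sum_dist_mul_lpX_le (hR : 2 ≤ R) {ℓ : ℕ} (hℓ : ℓ < R) (s : Bool) :
    ∑ c ∈ clients R M, dist (facility R M ℓ s) c * lpX R (facility R M ℓ s) c ≤ 1 - eps R := by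
  have hR0 : 0 < R := by omega
  rw [sum_clients hR0, sum_eq_single_of_mem ℓ (mem_range.mpr hℓ)]
  · have hsplit : ∑ s', ∑ c ∈ sideClients R M ℓ s',
          dist (facility R M ℓ s) c * lpX R (facility R M ℓ s) c =
        (∑ j ∈ range (sideSize R M ℓ s), height R M ℓ j) * (1 - eps R) +
          sideSize R M ℓ (!s) * width R M ℓ * eps R := by
      rw [Fintype.sum_bool]
      cases s
      · rw [sum_dist_mul_lpX_sideClients_self hR0,
          sum_dist_mul_lpX_sideClients_of_ne hR0 (by decide : false ≠ true), add_comm]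
        rfl
      · rw [sum_dist_mul_lpX_sideClients_self hR0,
          sum_dist_mul_lpX_sideClients_of_ne hR0 (by decide : true ≠ false)]
        rfl
    have hown := sum_height_le (M := M) hR0 ℓ (sideSize R M ℓ s)
    have hown₀ : 0 ≤ ∑ j ∈ range (sideSize R M ℓ s), height R M ℓ j :=
      sum_nonneg fun j _ => height_nonneg ℓ j
    have hother := sideSize_mul_width_mul_eps_le (M := M) hR ℓ (!s)
    have heps := eps_le hR0
    have heps₀ := eps_nonneg (R := R)
    rw [hsplit]
    nlinarith
  · intro ℓ' _ hne
    refine sum_eq_zero fun s' _ => sum_eq_zero fun c hc => ?_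
    obtain ⟨j, -, rfl⟩ := mem_sideClients.mp hc
    rw [lpX_facility_client hR0, if_neg (Ne.symm hne), mul_zero]

lemma sum_lpX_client (hR : 0 < R) {ℓ : ℕ} (hℓ : ℓ < R) (s : Bool) (j : ℕ) :
    ∑ i ∈ facilities R M, lpX R i (client R M ℓ s j) = 1 := by
  rw [sum_facilities hR, sum_eq_single_of_mem ℓ (mem_range.mpr hℓ)]
  · cases s <;> simp [lpX_facility_client hR]
  · intro ℓ' _ hne
    simp [lpX_facility_client hR, hne]

lemma lpX_mem_Icc (hR : 0 < R) (i c : ℝ × ℝ) : lpX R i c ∈ Set.Icc 0 (1 - eps R) := by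
  have heps := eps_le hR
  have heps₀ := eps_nonneg (R := R)
  unfold lpX
  split_ifs <;> constructor <;> linarith

theorem sclpFeasible_lpX (hR : 2 ≤ R) :
    SCLPFeasible (facilities R M) (clients R M) 1 (2 * R - 1) (lpX R) fun _ => 1 - eps R := by
  have hR0 : 0 < R := by omega
  have heps := eps_le hR0
  have heps₀ := eps_nonneg (R := R)
  refine ⟨fun i _ c _ => ?_, fun _ _ => ⟨by linarith, by linarith⟩, fun i hi => ?_, ?_,
    fun c hc => ?_, fun i _ c _ => (lpX_mem_Icc hR0 i c).2, fun i _ c _ hd => ?_⟩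
  · have := lpX_mem_Icc hR0 i c
    exact ⟨this.1, this.2.trans (by linarith)⟩
  · obtain ⟨ℓ, hℓ, s, rfl⟩ := mem_facilities.mp hi
    rw [one_mul]
    exact sum_dist_mul_lpX_le hR hℓ s
  · rw [sum_const, card_facilities hR0, nsmul_eq_mul, Nat.cast_sub (by omega), eps]
    push_cast
    field_simp
    rfl
  · obtain ⟨ℓ, hℓ, s, hc⟩ := mem_clients.mp hc
    obtain ⟨j, -, rfl⟩ := mem_sideClients.mp hc
    exact sum_lpX_client hR0 hℓ s j
  · rw [lpX, if_neg hd.not_ge]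

theorem le_load (hR : 0 < R) (S : StarCover (facilities R M) (clients R M))
    (hS : S.size < 2 * R) : (R : ℝ) ≤ S.load := by
  obtain ⟨f, hfF, hf⟩ := S.exists_mem_forall_fst_ne (by rwa [card_facilities hR])
  obtain ⟨ℓ, hℓ, s, rfl⟩ := mem_facilities.mp hfF
  refine S.le_load_of_forall_fst_ne (sideClients_subset_clients hℓ s) hf
    (g := facility R M ℓ !s) (fun i hi hif hig c hc => ?_) ?_
  · obtain ⟨ℓ', -, s', rfl⟩ := mem_facilities.mp hi
    obtain ⟨j, -, rfl⟩ := mem_sideClients.mp hc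
    have hℓ' : ℓ' ≠ ℓ := by
      rintro rfl
      cases s <;> cases s' <;> simp_all
    linarith [le_dist_facility_client (R := R) (M := M) hℓ' s' s j]
  · rw [sum_sideClients hR, sum_congr rfl fun j _ =>
      dist_facility_client_of_ne hR (Bool.not_ne_self s) ℓ j, sum_const, card_range,
      nsmul_eq_mul]
    exact le_sideSize_mul_width hR ℓ s

end GapInstance

lemma le_two_mul_sub_one_of_cast_le {R n : ℕ} (hR : 0 < R)
    (h : (n : ℝ) ≤ (1 + 1 / (2 * (R : ℝ))) * ((2 * R - 1 : ℕ) : ℝ)) : n ≤ 2 * R - 1 := by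
  have hR' : (1 : ℝ) ≤ R := by exact_mod_cast hR
  rw [Nat.cast_sub (by omega), Nat.cast_mul, Nat.cast_ofNat, Nat.cast_one] at h
  have hlt : (n : ℝ) < 2 * R := by
    have : (1 + 1 / (2 * (R : ℝ))) * (2 * R - 1) = 2 * R - 1 / (2 * R) := by
      field_simp
      ring
    have : (0 : ℝ) < 1 / (2 * R) := by positivity
    linarith
  have : n < 2 * R := by exact_mod_cast hlt
  omega

/-- The hard instance for the MLkSC LP (Appendix B of the paper): for all
`R ≥ 2`, `M ≥ R` there is an instance with `|F| = 2R`, `|C| = (M+R)R` whose LP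
`SC-LP(1, 2R−1)` is feasible, yet every star cover of size at most `2R−1` has
load at least `R`; consequently, with `ε = 1/(2R)`, every star cover of size at
most `(1+ε)(2R−1)` has load at least `1/(2ε)` times the optimal fractional load. -/
theorem mlksc_lp_gap (R M : ℕ) (hR : 2 ≤ R) (hM : R ≤ M) :
    ∃ (X : Type) (m : MetricSpace X) (F C : Finset X),
      Disjoint F C ∧ F.card = 2 * R ∧ C.card = (M + R) * R ∧
      (∃ (x : X → X → ℝ) (y : X → ℝ),
        @SCLPFeasible X m F C 1 (2 * R - 1) x y) ∧
      (∀ S : @StarCover X m F C, S.size ≤ 2 * R - 1 → (R : ℝ) ≤ S.load) ∧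
      (∀ S : @StarCover X m F C,
        (S.size : ℝ) ≤ (1 + 1 / (2 * (R : ℝ))) * ((2 * R - 1 : ℕ) : ℝ) →
          (1 / (2 * (1 / (2 * (R : ℝ))))) *
            sInf {T : ℝ | ∃ (x : X → X → ℝ) (y : X → ℝ),
              @SCLPFeasible X m F C T (2 * R - 1) x y} ≤ S.load) := by
  have hR0 : 0 < R := by omega
  have hload (S : StarCover (GapInstance.facilities R M) (GapInstance.clients R M))
      (hS : S.size ≤ 2 * R - 1) : (R : ℝ) ≤ S.load :=
    GapInstance.le_load hR0 S (by omega)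
  have hC : (GapInstance.clients R M).Nonempty := by
    rw [← card_pos, GapInstance.card_clients hR0 hM]
    positivity
  have hlp := GapInstance.sclpFeasible_lpX (M := M) hR
  refine ⟨ℝ × ℝ, inferInstance, GapInstance.facilities R M, GapInstance.clients R M,
    GapInstance.disjoint_facilities_clients hR0, GapInstance.card_facilities hR0,
    GapInstance.card_clients hR0 hM, ⟨_, _, hlp⟩, hload, fun S hS => ?_⟩
  rw [show 1 / (2 * (1 / (2 * (R : ℝ)))) = R by field_simp]
  exact (mul_le_of_le_one_right R.cast_nonneg (hlp.sInf_le hC)).trans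
    (hload S (le_two_mul_sub_one_of_cast_le hR0 hS))
end
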